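/- arXiv:2412.02952 — 15 statements merged into one kernel-verified Lean document; each statement's English description precedes it below -/
import Mathlib

section
/- If there exist C ≥ 0 and α > 0 with ∫_s^t a(r) dr ≤ C − α(t−s) for all 0 ≤ s ≤ t, then for every bounded continuous function v : [0,∞) → ℝ, every solution of x' = a(t)x + v(t) on [0,∞) is bounded; explicitly, the solution x(t) = x(t₀)e^{∫_{t₀}^t a} + ∫_{t₀}^t v(s) e^{∫_s^t a} ds satisfies |x(t)| ≤ e^C |x(t₀)| + (e^C/α) ‖v‖_∞ for all t ≥ t₀ ≥ 0. -/
/-- Admissibility (identity projector): under an exponential dichotomy with identity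
projector, every solution of `x' = a(t)x + v(t)` is bounded with an explicit bound. -/
theorem stmt_3 (a v : ℝ → ℝ) (ha : Continuous a) (hv : Continuous v)
    (M : ℝ) (hM : ∀ t, 0 ≤ t → |v t| ≤ M)
    (C α : ℝ) (hC : 0 ≤ C) (hα : 0 < α)
    (hdich : ∀ s t : ℝ, 0 ≤ s → s ≤ t → (∫ r in s..t, a r) ≤ C - α * (t - s))
    (x₀ t₀ : ℝ) (ht₀ : 0 ≤ t₀) (t : ℝ) (ht : t₀ ≤ t) :
    |x₀ * Real.exp (∫ r in t₀..t, a r) +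
      ∫ s in t₀..t, v s * Real.exp (∫ r in s..t, a r)| ≤
      Real.exp C * |x₀| + (Real.exp C / α) * M := by
  have hM0 : 0 ≤ M := le_trans (abs_nonneg _) (hM t₀ ht₀)
  set F : ℝ → ℝ := fun s => ∫ r in s..t, a r with hF
  have hFeq : ∀ s, F s = (∫ r in (0:ℝ)..t, a r) - ∫ r in (0:ℝ)..s, a r := by
    intro s
    have h := intervalIntegral.integral_add_adjacent_intervals (μ := MeasureTheory.volume)
      (ha.intervalIntegrable 0 s) (ha.intervalIntegrable s t)
    simp only [hF]
    linarith
  have hFcont : Continuous F := by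
    have h1 : Continuous fun s : ℝ => ∫ r in (0:ℝ)..s, a r :=
      intervalIntegral.continuous_primitive (fun x y => ha.intervalIntegrable x y) 0
    have : F = fun s => (∫ r in (0:ℝ)..t, a r) - ∫ r in (0:ℝ)..s, a r := funext hFeq
    rw [this]
    exact continuous_const.sub h1
  -- bound on first term
  have hFt₀ : F t₀ ≤ C := by
    have := hdich t₀ t ht₀ ht
    nlinarith [mul_nonneg hα.le (sub_nonneg.2 ht)]
  have h1 : |x₀ * Real.exp (F t₀)| ≤ Real.exp C * |x₀| := by
    rw [abs_mul, abs_of_pos (Real.exp_pos _), mul_comm]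
    exact mul_le_mul_of_nonneg_right (Real.exp_le_exp.2 hFt₀) (abs_nonneg _)
  -- bound on integrand
  have hbound : ∀ s ∈ Set.Icc t₀ t,
      |v s * Real.exp (F s)| ≤ M * Real.exp (C - α * (t - s)) := by
    intro s hs
    rw [abs_mul, abs_of_pos (Real.exp_pos _)]
    have h0s : 0 ≤ s := le_trans ht₀ hs.1
    exact mul_le_mul (hM s h0s) (Real.exp_le_exp.2 (hdich s t h0s hs.2))
      (Real.exp_pos _).le hM0
  have hint1 : IntervalIntegrable (fun s => |v s * Real.exp (F s)|) MeasureTheory.volume t₀ t :=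
    ((hv.mul (Real.continuous_exp.comp hFcont)).abs).intervalIntegrable _ _
  have hint2 : IntervalIntegrable (fun s => M * Real.exp (C - α * (t - s)))
      MeasureTheory.volume t₀ t := by
    exact (continuous_const.mul (Real.continuous_exp.comp
      (continuous_const.sub (continuous_const.mul (continuous_const.sub continuous_id))))).intervalIntegrable _ _
  -- compute the integral of the bound
  have hderiv : ∀ s ∈ Set.uIcc t₀ t, HasDerivAt
      (fun s => (M / α) * Real.exp (C - α * (t - s)))
      (M * Real.exp (C - α * (t - s))) s := by
    intro s _
    have h : HasDerivAt (fun s : ℝ => C - α * (t - s)) α s := by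
      have := ((hasDerivAt_id s).const_sub t).const_mul α
      have h2 := (this.const_sub C)
      simpa using h2
    have := (h.exp).const_mul (M / α)
    convert this using 1
    · rfl
    · rfl
    field_simp
  have hcalc : (∫ s in t₀..t, M * Real.exp (C - α * (t - s)))
      = (M / α) * Real.exp (C - α * (t - t)) - (M / α) * Real.exp (C - α * (t - t₀)) := by
    exact intervalIntegral.integral_eq_sub_of_hasDerivAt hderiv hint2
  have hcalc2 : (∫ s in t₀..t, M * Real.exp (C - α * (t - s))) ≤ (Real.exp C / α) * M := by
    rw [hcalc]
    have e1 : Real.exp (C - α * (t - t)) = Real.exp C := by norm_num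
    have e2 : 0 < Real.exp (C - α * (t - t₀)) := Real.exp_pos _
    rw [e1]
    have hMα : 0 ≤ M / α := div_nonneg hM0 hα.le
    have key : M / α * Real.exp C = Real.exp C / α * M := by ring
    nlinarith [mul_nonneg hMα e2.le]
  have h2 : |∫ s in t₀..t, v s * Real.exp (F s)| ≤ (Real.exp C / α) * M := by
    calc |∫ s in t₀..t, v s * Real.exp (F s)|
        ≤ ∫ s in t₀..t, |v s * Real.exp (F s)| :=
          intervalIntegral.abs_integral_le_integral_abs ht
      _ ≤ ∫ s in t₀..t, M * Real.exp (C - α * (t - s)) := by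
          apply intervalIntegral.integral_mono_on ht hint1 hint2 hbound
      _ ≤ (Real.exp C / α) * M := hcalc2
  calc |x₀ * Real.exp (F t₀) + ∫ s in t₀..t, v s * Real.exp (F s)|
      ≤ |x₀ * Real.exp (F t₀)| + |∫ s in t₀..t, v s * Real.exp (F s)| := abs_add_le _ _
    _ ≤ Real.exp C * |x₀| + (Real.exp C / α) * M := add_le_add h1 h2
end

section
/- If there exist C ≥ 0 and α > 0 with ∫_t^s a(r) dr ≥ α(s−t) − C for all 0 ≤ t ≤ s, then for every bounded continuous function v : [0,∞) → ℝ, the function x(t) = −∫_t^∞ v(s) e^{−∫_t^s a(r) dr} ds is well defined, bounded on [0,∞), and is the unique bounded solution of x' = a(t)x + v(t) on [0,∞). -/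
open MeasureTheory Set Real Filter

/-- Admissibility (null projector): `x(t) = -∫_t^∞ v(s) e^{-∫_t^s a} ds` is well defined,
bounded, and the unique bounded solution of `x' = a(t)x + v(t)` on `[0,∞)`. -/
theorem stmt_4 (a v : ℝ → ℝ) (ha : Continuous a) (hv : Continuous v)
    (M : ℝ) (hM : ∀ t, 0 ≤ t → |v t| ≤ M)
    (C α : ℝ) (hC : 0 ≤ C) (hα : 0 < α)
    (hdich : ∀ t s : ℝ, 0 ≤ t → t ≤ s → (∫ r in t..s, a r) ≥ α * (s - t) - C) :
    (∀ t : ℝ, 0 ≤ t → MeasureTheory.IntegrableOn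
        (fun s => v s * Real.exp (-∫ r in t..s, a r)) (Set.Ici t)) ∧
    (∃ B, ∀ t : ℝ, 0 ≤ t →
        |-(∫ s in Set.Ici t, v s * Real.exp (-∫ r in t..s, a r))| ≤ B) ∧
    (∀ t : ℝ, 0 ≤ t → HasDerivAt
        (fun τ => -(∫ s in Set.Ici τ, v s * Real.exp (-∫ r in τ..s, a r)))
        (a t * (-(∫ s in Set.Ici t, v s * Real.exp (-∫ r in t..s, a r))) + v t) t) ∧
    (∀ y : ℝ → ℝ, (∀ t, 0 ≤ t → HasDerivAt y (a t * y t + v t) t) →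
        (∃ B, ∀ t, 0 ≤ t → |y t| ≤ B) →
        ∀ t, 0 ≤ t → y t = -(∫ s in Set.Ici t, v s * Real.exp (-∫ r in t..s, a r))) := by
  set A : ℝ → ℝ := fun t => ∫ r in (0:ℝ)..t, a r with hAdef
  have hA : ∀ t, HasDerivAt A (a t) t := fun t =>
    intervalIntegral.integral_hasDerivAt_right (ha.intervalIntegrable 0 t)
      (ha.stronglyMeasurableAtFilter _ _) ha.continuousAt
  have hAcont : Continuous A :=
    continuous_iff_continuousAt.mpr fun t => (hA t).continuousAt
  have hsub : ∀ t s : ℝ, (∫ r in t..s, a r) = A s - A t := fun t s =>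
    (intervalIntegral.integral_interval_sub_left (ha.intervalIntegrable 0 s)
      (ha.intervalIntegrable 0 t)).symm
  set g : ℝ → ℝ := fun s => v s * Real.exp (-A s) with hgdef
  have hgcont : Continuous g := hv.mul (Real.continuous_exp.comp hAcont.neg)
  have hA00 : A 0 = 0 := intervalIntegral.integral_same
  have hAlb : ∀ s : ℝ, 0 ≤ s → α * s - C ≤ A s := fun s hs => by
    have h := hdich 0 s le_rfl hs
    rw [hsub 0 s, hA00] at h
    linarith
  have hM0 : 0 ≤ M := le_trans (abs_nonneg _) (hM 0 le_rfl)
  -- integrability of exp(-α s)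
  have hexp_int : ∀ t : ℝ, IntegrableOn (fun s => Real.exp (-α * s)) (Ici t) :=
    fun t => (integrableOn_Ici_iff_integrableOn_Ioi).mpr (exp_neg_integrableOn_Ioi t hα)
  have hexp_val : ∀ t : ℝ, (∫ s in Ici t, Real.exp (-α * s)) = α⁻¹ * Real.exp (-α * t) := by
    intro t
    rw [integral_Ici_eq_integral_Ioi]
    have h := integral_comp_mul_left_Ioi (fun x => Real.exp (-x)) t hα
    rw [integral_exp_neg_Ioi] at h
    simpa [neg_mul, smul_eq_mul] using h
  -- bound for g on [0, ∞)
  have hgbound : ∀ s ∈ Ici (0:ℝ), ‖g s‖ ≤ M * Real.exp C * Real.exp (-α * s) := by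
    intro s hs
    have h1 : Real.exp (-A s) ≤ Real.exp (C - α * s) := by
      apply Real.exp_le_exp.mpr
      have := hAlb s hs
      linarith
    have h2 : ‖g s‖ = |v s| * Real.exp (-A s) := by
      simp only [hgdef]
      rw [Real.norm_eq_abs, abs_mul, abs_of_pos (Real.exp_pos _)]
    rw [h2]
    calc |v s| * Real.exp (-A s) ≤ M * Real.exp (C - α * s) :=
          mul_le_mul (hM s hs) h1 (Real.exp_pos _).le hM0
      _ = M * Real.exp C * Real.exp (-α * s) := by
          rw [show C - α * s = C + -α * s by ring, Real.exp_add]; ring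
  have hgint0 : IntegrableOn g (Ici (0:ℝ)) := by
    refine Integrable.mono' (((hexp_int 0).const_mul (M * Real.exp C))) ?_ ?_
    · exact hgcont.aestronglyMeasurable.restrict
    · exact (ae_restrict_iff' measurableSet_Ici).mpr (ae_of_all _ hgbound)
  have hgint : ∀ τ : ℝ, IntegrableOn g (Ici τ) := by
    intro τ
    have hsub2 : Ici τ ⊆ Icc τ 0 ∪ Ici 0 := by
      intro s hs
      rcases le_total 0 s with h | h
      · exact Or.inr h
      · exact Or.inl ⟨hs, h⟩
    exact ((hgcont.integrableOn_Icc).union hgint0).mono_set hsub2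
  set G : ℝ → ℝ := fun τ => ∫ s in Ici τ, g s with hGdef
  -- key rewriting
  have hfun : ∀ τ : ℝ, (fun s => v s * Real.exp (-∫ r in τ..s, a r)) =
      fun s => Real.exp (A τ) * g s := by
    intro τ; funext s
    rw [hsub τ s]
    rw [show -(A s - A τ) = A τ + -A s by ring, Real.exp_add]
    simp only [hgdef]
    ring
  have hint : ∀ τ : ℝ, IntegrableOn (fun s => v s * Real.exp (-∫ r in τ..s, a r)) (Ici τ) := by
    intro τ; rw [hfun τ]; exact (hgint τ).const_mul _
  have hkey : ∀ τ : ℝ, (∫ s in Ici τ, v s * Real.exp (-∫ r in τ..s, a r)) =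
      Real.exp (A τ) * G τ := by
    intro τ
    rw [hfun τ, MeasureTheory.integral_const_mul]
  -- splitting of G
  have hsplit : ∀ t s : ℝ, t ≤ s → G t = (∫ u in t..s, g u) + G s := by
    intro t s hts
    rw [hGdef]
    simp only [integral_Ici_eq_integral_Ioi]
    rw [intervalIntegral.integral_of_le hts]
    rw [← MeasureTheory.setIntegral_union (Ioc_disjoint_Ioi le_rfl) measurableSet_Ioi
      ((hgint t).mono_set (fun x hx => hx.1.le))
      (((hgint s).mono_set Ioi_subset_Ici_self))]
    rw [Ioc_union_Ioi_eq_Ioi hts]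
  have hGeq : ∀ τ : ℝ, G τ = G 0 - ∫ u in (0:ℝ)..τ, g u := by
    intro τ
    rcases le_total 0 τ with h | h
    · have h1 := hsplit 0 τ h; linarith
    · have h1 := hsplit τ 0 h
      have h2 : (∫ u in (0:ℝ)..τ, g u) = -∫ u in τ..(0:ℝ), g u :=
        intervalIntegral.integral_symm τ 0
      linarith
  have hG : ∀ t : ℝ, HasDerivAt G (-(g t)) t := by
    intro t
    have hftc : HasDerivAt (fun τ => ∫ u in (0:ℝ)..τ, g u) (g t) t :=
      intervalIntegral.integral_hasDerivAt_right (hgcont.intervalIntegrable _ _)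
        (hgcont.stronglyMeasurableAtFilter _ _) hgcont.continuousAt
    have h := (hasDerivAt_const t (G 0)).sub hftc
    have hGfun : G = fun τ => G 0 - ∫ u in (0:ℝ)..τ, g u := funext hGeq
    rw [hGfun]
    rw [zero_sub] at h
    exact h
  have hxfun : (fun τ => -(∫ s in Set.Ici τ, v s * Real.exp (-∫ r in τ..s, a r))) =
      fun τ => -(Real.exp (A τ) * G τ) := funext fun τ => by rw [hkey]
  have hgv : ∀ t : ℝ, Real.exp (A t) * g t = v t := by
    intro t
    simp only [hgdef]
    rw [show Real.exp (A t) * (v t * Real.exp (-A t)) =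
      v t * Real.exp (A t + -A t) from by rw [Real.exp_add]; ring]
    simp
  -- bounds on |∫|
  have hbnd : ∀ t : ℝ, 0 ≤ t →
      |∫ s in Set.Ici t, v s * Real.exp (-∫ r in t..s, a r)| ≤ M * Real.exp C / α := by
    intro t ht
    have hb : ∀ s ∈ Ici t, ‖v s * Real.exp (-∫ r in t..s, a r)‖ ≤
        M * Real.exp C * Real.exp (α * t) * Real.exp (-α * s) := by
      intro s hs
      have hts : t ≤ s := hs
      have h1 : Real.exp (-∫ r in t..s, a r) ≤ Real.exp (C - α * (s - t)) := by
        apply Real.exp_le_exp.mpr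
        have := hdich t s ht hts
        linarith
      have h2 : ‖v s * Real.exp (-∫ r in t..s, a r)‖ = |v s| * Real.exp (-∫ r in t..s, a r) := by
        simp [abs_mul, abs_of_pos (Real.exp_pos _)]
      rw [h2]
      calc |v s| * Real.exp (-∫ r in t..s, a r) ≤ M * Real.exp (C - α * (s - t)) :=
            mul_le_mul (hM s (le_trans ht hts)) h1 (Real.exp_pos _).le hM0
        _ = M * Real.exp C * Real.exp (α * t) * Real.exp (-α * s) := by
            rw [show C - α * (s - t) = C + α * t + -α * s by ring,
              Real.exp_add, Real.exp_add]; ring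
    have hgi : Integrable (fun s => M * Real.exp C * Real.exp (α * t) * Real.exp (-α * s))
        (volume.restrict (Ici t)) := (hexp_int t).const_mul _
    have := MeasureTheory.norm_integral_le_of_norm_le hgi
      ((ae_restrict_iff' measurableSet_Ici).mpr (ae_of_all _ hb))
    rw [Real.norm_eq_abs] at this
    refine this.trans ?_
    rw [MeasureTheory.integral_const_mul, hexp_val t]
    apply le_of_eq
    have he : Real.exp (α * t) * Real.exp (-α * t) = 1 := by
      rw [← Real.exp_add]; simp
    calc M * Real.exp C * Real.exp (α * t) * (α⁻¹ * Real.exp (-α * t))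
        = M * Real.exp C * α⁻¹ * (Real.exp (α * t) * Real.exp (-α * t)) := by ring
      _ = M * Real.exp C / α := by rw [he]; ring
  -- tail bound on G
  have hGbnd : ∀ t : ℝ, 0 ≤ t → |G t| ≤ M * Real.exp C * (α⁻¹ * Real.exp (-α * t)) := by
    intro t ht
    have hb : ∀ s ∈ Ici t, ‖g s‖ ≤ M * Real.exp C * Real.exp (-α * s) := fun s hs =>
      hgbound s (le_trans ht hs)
    have hgi : Integrable (fun s => M * Real.exp C * Real.exp (-α * s))
        (volume.restrict (Ici t)) := (hexp_int t).const_mul _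
    have h := MeasureTheory.norm_integral_le_of_norm_le hgi
      ((ae_restrict_iff' measurableSet_Ici).mpr (ae_of_all _ hb))
    rw [Real.norm_eq_abs] at h
    refine h.trans ?_
    rw [MeasureTheory.integral_const_mul, hexp_val t]
  -- the derivative statement
  have hderiv : ∀ t : ℝ, HasDerivAt
      (fun τ => -(∫ s in Set.Ici τ, v s * Real.exp (-∫ r in τ..s, a r)))
      (a t * (-(∫ s in Set.Ici t, v s * Real.exp (-∫ r in t..s, a r))) + v t) t := by
    intro t
    rw [hxfun, hkey]
    have h1 : HasDerivAt (fun τ => Real.exp (A τ)) (Real.exp (A t) * a t) t := (hA t).exp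
    have h2 := (h1.mul (hG t)).neg
    have h3 : a t * -(Real.exp (A t) * G t) + v t =
        -(Real.exp (A t) * a t * G t + Real.exp (A t) * -(g t)) := by
      rw [← hgv t]; ring
    rw [h3]
    exact h2
  refine ⟨fun t _ => hint t, ⟨M * Real.exp C / α, ?_⟩, fun t ht => hderiv t, ?_⟩
  · intro t ht
    rw [abs_neg]
    exact hbnd t ht
  -- uniqueness
  intro y hy ⟨By, hBy⟩
  set w : ℝ → ℝ := fun τ => y τ * Real.exp (-A τ) + G τ with hwdef
  have hw : ∀ t : ℝ, 0 ≤ t → HasDerivAt w 0 t := by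
    intro t ht
    have h1 : HasDerivAt (fun τ => Real.exp (-A τ)) (Real.exp (-A t) * -(a t)) t :=
      ((hA t).neg).exp
    have h2 := ((hy t ht).mul h1).add (hG t)
    have h3 : (a t * y t + v t) * Real.exp (-A t) + y t * (Real.exp (-A t) * -(a t)) + -(g t)
        = 0 := by
      simp only [hgdef]; ring
    rw [← h3]
    exact h2
  have hwconst : ∀ T : ℝ, 0 ≤ T → w T = w 0 := by
    intro T hT
    have hcont : ContinuousOn w (Icc 0 T) := fun x hx =>
      ((hw x hx.1).differentiableAt.continuousAt).continuousWithinAt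
    have hd : ∀ x ∈ Ico (0:ℝ) T, HasDerivWithinAt w 0 (Ici x) x := fun x hx =>
      (hw x hx.1).hasDerivWithinAt
    exact constant_of_has_deriv_right_zero hcont hd T (right_mem_Icc.mpr hT)
  have hA0 : A 0 = 0 := by simp [hAdef]
  have hw0 : w 0 = 0 := by
    have hlim : Tendsto (fun T : ℝ => (By * Real.exp C + M * Real.exp C * α⁻¹) *
        Real.exp (-α * T)) atTop (nhds 0) := by
      have h1 : Tendsto (fun T : ℝ => α * T) atTop atTop :=
        Tendsto.const_mul_atTop hα tendsto_id
      have h2 : Tendsto (fun T : ℝ => Real.exp (-α * T)) atTop (nhds 0) := by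
        simp only [neg_mul]
        exact Real.tendsto_exp_atBot.comp (tendsto_neg_atBot_iff.mpr h1)
      simpa using h2.const_mul (By * Real.exp C + M * Real.exp C * α⁻¹)
    have hub : ∀ T : ℝ, 0 ≤ T → |w 0| ≤ (By * Real.exp C + M * Real.exp C * α⁻¹) *
        Real.exp (-α * T) := by
      intro T hT
      rw [← hwconst T hT, hwdef]
      have hBy0 : 0 ≤ By := le_trans (abs_nonneg _) (hBy 0 le_rfl)
      have h1 : |y T * Real.exp (-A T)| ≤ By * Real.exp C * Real.exp (-α * T) := by
        rw [abs_mul, abs_of_pos (Real.exp_pos _)]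
        have hAT : Real.exp (-A T) ≤ Real.exp (C - α * T) := by
          apply Real.exp_le_exp.mpr
          have := hAlb T hT
          linarith
        calc |y T| * Real.exp (-A T) ≤ By * Real.exp (C - α * T) :=
              mul_le_mul (hBy T hT) hAT (Real.exp_pos _).le hBy0
          _ = By * Real.exp C * Real.exp (-α * T) := by
              rw [show C - α * T = C + -α * T by ring, Real.exp_add]; ring
      have h2 := hGbnd T hT
      calc |y T * Real.exp (-A T) + G T| ≤ |y T * Real.exp (-A T)| + |G T| := abs_add_le _ _
        _ ≤ By * Real.exp C * Real.exp (-α * T) + M * Real.exp C * (α⁻¹ * Real.exp (-α * T)) :=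
            add_le_add h1 h2
        _ = (By * Real.exp C + M * Real.exp C * α⁻¹) * Real.exp (-α * T) := by ring
    have hle : |w 0| ≤ 0 := by
      refine ge_of_tendsto hlim ?_
      filter_upwards [eventually_ge_atTop (0:ℝ)] with T hT using hub T hT
    exact abs_eq_zero.mp (le_antisymm hle (abs_nonneg _))
  intro t ht
  have hwt : w t = 0 := by rw [hwconst t ht, hw0]
  have : y t * Real.exp (-A t) = -G t := by
    simp only [hwdef] at hwt; linarith
  have hexp1 : Real.exp (-A t) * Real.exp (A t) = 1 := by
    rw [← Real.exp_add]; simp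
  have h4 : y t = -(Real.exp (A t) * G t) := by
    calc y t = y t * Real.exp (-A t) * Real.exp (A t) := by
          rw [mul_assoc, hexp1, mul_one]
      _ = -G t * Real.exp (A t) := by rw [this]
      _ = -(Real.exp (A t) * G t) := by ring
  rw [hkey]; exact h4
end

section
/- Let a : [0,∞) → ℝ be bounded and continuous. If the equation z' = a(t)z + 1 has a solution z bounded on [0,∞), then the linear equation x' = a(t)x has an exponential dichotomy on [0,∞): there exist C ≥ 0 and α > 0 such that |∫_s^t a(r) dr| ≥ α(t−s) − C for all 0 ≤ s ≤ t. -/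
open Set Filter Topology

private lemma mono_aux {V f : ℝ → ℝ} {p q : ℝ} (hpq : p ≤ q)
    (hV : ∀ r ∈ Icc p q, HasDerivAt V (f r) r)
    (hf : ∀ r ∈ Icc p q, 0 ≤ f r) : V p ≤ V q := by
  have hmono : MonotoneOn V (Icc p q) := by
    apply monotoneOn_of_deriv_nonneg (convex_Icc p q)
    · exact fun r hr => (hV r hr).continuousAt.continuousWithinAt
    · intro r hr
      rw [interior_Icc] at hr
      exact (hV r (Ioo_subset_Icc_self hr)).differentiableAt.differentiableWithinAt
    · intro r hr
      rw [interior_Icc] at hr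
      rw [(hV r (Ioo_subset_Icc_self hr)).deriv]
      exact hf r (Ioo_subset_Icc_self hr)
  exact hmono (left_mem_Icc.2 hpq) (right_mem_Icc.2 hpq) hpq

private lemma growth {z f : ℝ → ℝ} {p q c : ℝ} (hpq : p ≤ q)
    (hz : ∀ r ∈ Icc p q, HasDerivAt z (f r) r)
    (hf : ∀ r ∈ Icc p q, c ≤ f r) :
    z p + c * (q - p) ≤ z q := by
  have h := mono_aux (V := fun r => z r - c * r) (f := fun r => f r - c) hpq
    (fun r hr => ((hz r hr).sub (by simpa using (hasDerivAt_id r).const_mul c)))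
    (fun r hr => by have := hf r hr; linarith)
  have h' : z p - c * p ≤ z q - c * q := h
  nlinarith [h']

private lemma barrier {z f : ℝ → ℝ} {t₀ c : ℝ}
    (hz : ∀ r, t₀ ≤ r → HasDerivAt z (f r) r)
    (hpos : ∀ r, t₀ ≤ r → z r = c → 0 < f r)
    (h0 : c ≤ z t₀) : ∀ s, t₀ ≤ s → c ≤ z s := by
  intro s hs
  by_contra hlt
  push_neg at hlt
  set T : Set ℝ := {r | r ∈ Icc t₀ s ∧ c ≤ z r} with hT
  have hne : t₀ ∈ T := ⟨⟨le_refl _, hs⟩, h0⟩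
  have hbdd : BddAbove T := ⟨s, fun r hr => hr.1.2⟩
  have hTne : T.Nonempty := ⟨t₀, hne⟩
  set m := sSup T with hm
  have hm0 : t₀ ≤ m := le_csSup hbdd hne
  have hms : m ≤ s := csSup_le hTne fun r hr => hr.1.2
  have hcont : ContinuousAt z m := (hz m hm0).continuousAt
  have hzm : c ≤ z m := by
    have hmc : m ∈ closure T := csSup_mem_closure hTne hbdd
    obtain ⟨u, hu, hlim⟩ := mem_closure_iff_seq_limit.1 hmc
    exact ge_of_tendsto (hcont.tendsto.comp hlim) (Filter.Eventually.of_forall fun n => (hu n).2)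
  have hms' : m < s :=
    lt_of_le_of_ne hms (fun h => absurd hzm (by rw [h]; exact not_le.2 hlt))
  have hforall : ∀ r, m < r → r ≤ s → z r < c := by
    intro r h1 h2
    by_contra hge
    push_neg at hge
    exact absurd (le_csSup hbdd ⟨⟨hm0.trans h1.le, h2⟩, hge⟩) (not_le.2 h1)
  have hzm' : z m = c := by
    rcases eq_or_lt_of_le hzm with h | h
    · exact h.symm
    · exfalso
      have h1 : ∀ᶠ r in 𝓝[>] m, c < z r :=
        (Filter.Tendsto.eventually hcont (eventually_gt_nhds h)).filter_mono nhdsWithin_le_nhds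
      have h2 : Ioo m s ∈ 𝓝[>] m := Ioo_mem_nhdsGT_of_mem ⟨le_refl m, hms'⟩
      obtain ⟨r, hr1, hr2⟩ := (h1.and (Filter.eventually_of_mem h2 fun x hx => hx)).exists
      exact absurd hr1 (not_lt.2 (hforall r hr2.1 hr2.2.le).le)
  have hfm : 0 < f m := hpos m hm0 hzm'
  have hslope : Filter.Tendsto (slope z m) (𝓝[>] m) (𝓝 (f m)) :=
    ((hasDerivAt_iff_tendsto_slope.1 (hz m hm0)).mono_left
      (nhdsWithin_mono m fun r (hr : r ∈ Ioi m) => ne_of_gt hr))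
  have h1 : ∀ᶠ r in 𝓝[>] m, 0 < slope z m r := hslope.eventually (eventually_gt_nhds hfm)
  have h2 : Ioo m s ∈ 𝓝[>] m := Ioo_mem_nhdsGT_of_mem ⟨le_refl m, hms'⟩
  obtain ⟨r, hr1, hr2⟩ := (h1.and (Filter.eventually_of_mem h2 fun x hx => hx)).exists
  have h4 : 0 < r - m := sub_pos.2 hr2.1
  rw [slope_def_field] at hr1
  have h5 := mul_pos hr1 h4
  rw [div_mul_cancel₀ _ (ne_of_gt h4)] at h5
  have h6 := hforall r hr2.1 hr2.2.le
  rw [← hzm'] at h6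
  linarith

private lemma key_est {g P : ℝ → ℝ} {s t B c : ℝ} (hB : 0 < B) (hst : s ≤ t)
    (hgpos : ∀ r, 0 < g r)
    (hP : ∀ r ∈ Icc s t, HasDerivAt P (g r) r)
    (hlow : c * g s ≤ P s)
    (hupp : ∀ r ∈ Icc s t, P r ≤ B * g r) :
    c * g s * Real.exp ((t - s) / B) ≤ B * g t := by
  have hVmono := mono_aux (V := fun r => P r * Real.exp (-(r / B)))
      (f := fun r => g r * Real.exp (-(r / B)) + P r * (Real.exp (-(r / B)) * (-(1 / B)))) hst
      (fun r hr => (hP r hr).mul (((hasDerivAt_id r).div_const B).neg.exp))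
      (by
        intro r hr
        have h1 := hupp r hr
        have h2 : (0:ℝ) < Real.exp (-(r / B)) := Real.exp_pos _
        have h3 : P r * (1 / B) ≤ g r := by
          rw [mul_one_div]
          exact (div_le_iff₀ hB).2 (by linarith)
        nlinarith [mul_le_mul_of_nonneg_right h3 h2.le])
  have hVmono' : P s * Real.exp (-(s / B)) ≤ P t * Real.exp (-(t / B)) := hVmono
  have h4 := mul_le_mul_of_nonneg_right hVmono' (Real.exp_pos (t / B)).le
  have e2 : P t * Real.exp (-(t / B)) * Real.exp (t / B) = P t := by
    rw [mul_assoc, ← Real.exp_add]; simp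
  have e1 : P s * Real.exp (-(s / B)) * Real.exp (t / B) = P s * Real.exp ((t - s) / B) := by
    rw [mul_assoc, ← Real.exp_add, show -(s / B) + t / B = (t - s) / B by ring]
  rw [e1, e2] at h4
  have h5 := mul_le_mul_of_nonneg_right hlow (Real.exp_pos ((t - s) / B)).le
  have h6 := hupp t ⟨hst, le_refl t⟩
  linarith

private lemma log_step {M B x y d : ℝ} (hM1 : 1 ≤ M) (hB1 : 1 ≤ B)
    (h : 1 / (2 * M) * Real.exp x * Real.exp d ≤ B * Real.exp y) :
    d - Real.log (2 * M * B) ≤ y - x := by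
  have hM0 : (0:ℝ) < M := lt_of_lt_of_le one_pos hM1
  have hB0 : (0:ℝ) < B := lt_of_lt_of_le one_pos hB1
  have h1 : Real.exp (x + d) ≤ Real.exp (Real.log (2 * M * B) + y) := by
    rw [Real.exp_add, Real.exp_add, Real.exp_log (by positivity)]
    calc Real.exp x * Real.exp d
        = (2 * M) * (1 / (2 * M) * Real.exp x * Real.exp d) := by field_simp
      _ ≤ (2 * M) * (B * Real.exp y) := by
          exact mul_le_mul_of_nonneg_left h (by positivity)
      _ = 2 * M * B * Real.exp y := by ring
  have h2 := Real.exp_le_exp.1 h1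
  linarith

private lemma cross_pos {a z : ℝ → ℝ} {M r : ℝ} (hM1 : 1 ≤ M) (haM : ∀ t, |a t| ≤ M)
    (h : |z r| ≤ 1 / (2 * M)) : (1:ℝ) / 2 ≤ a r * z r + 1 := by
  have hM0 : (0:ℝ) < M := lt_of_lt_of_le one_pos hM1
  have h1 : |a r * z r| ≤ 1 / 2 := by
    rw [abs_mul]
    calc |a r| * |z r| ≤ M * (1 / (2 * M)) :=
          mul_le_mul (haM r) h (abs_nonneg _) hM0.le
      _ = 1 / 2 := by field_simp
  have h2 := neg_abs_le (a r * z r)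
  linarith

private lemma est_pos {a z A : ℝ → ℝ} {M B s t : ℝ} (hM1 : 1 ≤ M) (hB1 : 1 ≤ B)
    (hs : 0 ≤ s) (hst : s ≤ t)
    (hA : ∀ r, HasDerivAt A (a r) r)
    (hz : ∀ r, 0 ≤ r → HasDerivAt z (a r * z r + 1) r)
    (hzB : ∀ r, 0 ≤ r → |z r| ≤ B)
    (hlow : ∀ r ∈ Icc s t, 1 / (2 * M) ≤ z r) :
    (t - s) / B - Real.log (2 * M * B) ≤ -(A t - A s) := by
  have hM0 : (0:ℝ) < M := lt_of_lt_of_le one_pos hM1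
  have hB0 : (0:ℝ) < B := lt_of_lt_of_le one_pos hB1
  have hP : ∀ r ∈ Icc s t,
      HasDerivAt (fun u => Real.exp (-(A u)) * z u) (Real.exp (-(A r))) r := by
    intro r hr
    have h0r : 0 ≤ r := hs.trans hr.1
    have h1 : HasDerivAt (fun u => Real.exp (-(A u))) (Real.exp (-(A r)) * (-(a r))) r :=
      ((hA r).neg).exp
    have h2 := h1.mul (hz r h0r)
    exact h2.congr_deriv (by ring)
  have hlowk : 1 / (2 * M) * Real.exp (-(A s)) ≤ Real.exp (-(A s)) * z s := by
    have := mul_le_mul_of_nonneg_left (hlow s ⟨le_refl s, hst⟩) (Real.exp_pos (-(A s))).le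
    linarith
  have huppk : ∀ r ∈ Icc s t, Real.exp (-(A r)) * z r ≤ B * Real.exp (-(A r)) := by
    intro r hr
    have h0r : 0 ≤ r := hs.trans hr.1
    have h1 : z r ≤ B := le_trans (le_abs_self _) (hzB r h0r)
    nlinarith [Real.exp_pos (-(A r))]
  have hkey := key_est (g := fun r => Real.exp (-(A r)))
    (P := fun r => Real.exp (-(A r)) * z r) (c := 1 / (2 * M)) hB0 hst
    (fun r => Real.exp_pos _) hP hlowk huppk
  have := log_step hM1 hB1 hkey
  linarith

private lemma est_neg {a z A : ℝ → ℝ} {M B s t : ℝ} (hM1 : 1 ≤ M) (hB1 : 1 ≤ B)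
    (hs : 0 ≤ s) (hst : s ≤ t)
    (hA : ∀ r, HasDerivAt A (a r) r)
    (hz : ∀ r, 0 ≤ r → HasDerivAt z (a r * z r + 1) r)
    (hzB : ∀ r, 0 ≤ r → |z r| ≤ B)
    (hlow : ∀ r ∈ Icc s t, z r ≤ -(1 / (2 * M))) :
    (t - s) / B - Real.log (2 * M * B) ≤ A t - A s := by
  have hM0 : (0:ℝ) < M := lt_of_lt_of_le one_pos hM1
  have hB0 : (0:ℝ) < B := lt_of_lt_of_le one_pos hB1
  have hP : ∀ r ∈ Icc s t,
      HasDerivAt (fun u => -(Real.exp (-(A (s + t - u))) * z (s + t - u)))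
        (Real.exp (-(A (s + t - r)))) r := by
    intro r hr
    have hmem : s + t - r ∈ Icc s t := ⟨by linarith [hr.2], by linarith [hr.1]⟩
    have h0 : 0 ≤ s + t - r := hs.trans hmem.1
    have h1 : HasDerivAt (fun u => Real.exp (-(A u)))
        (Real.exp (-(A (s + t - r))) * (-(a (s + t - r)))) (s + t - r) := ((hA _).neg).exp
    have h2 := h1.mul (hz _ h0)
    have h3 : HasDerivAt (fun u => Real.exp (-(A u)) * z u)
        (Real.exp (-(A (s + t - r)))) (s + t - r) := by
      exact h2.congr_deriv (by ring)
    have hι : HasDerivAt (fun u : ℝ => s + t - u) (-1) r := by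
      simpa using (hasDerivAt_id r).const_sub (s + t)
    have h4 := HasDerivAt.comp r h3 hι
    have h5 := h4.neg
    exact h5.congr_deriv (by ring)
  have hlowk : 1 / (2 * M) * Real.exp (-(A (s + t - s)))
      ≤ -(Real.exp (-(A (s + t - s))) * z (s + t - s)) := by
    rw [show s + t - s = t by ring]
    have h1 := hlow t ⟨hst, le_refl t⟩
    have h2 : 1 / (2 * M) ≤ -(z t) := by linarith
    have := mul_le_mul_of_nonneg_left h2 (Real.exp_pos (-(A t))).le
    linarith
  have huppk : ∀ r ∈ Icc s t,
      -(Real.exp (-(A (s + t - r))) * z (s + t - r)) ≤ B * Real.exp (-(A (s + t - r))) := by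
    intro r hr
    have hmem : s + t - r ∈ Icc s t := ⟨by linarith [hr.2], by linarith [hr.1]⟩
    have h0 : 0 ≤ s + t - r := hs.trans hmem.1
    have h1 : -(z (s + t - r)) ≤ B := by
      have ha1 := hzB _ h0
      have ha2 := neg_abs_le (z (s + t - r))
      linarith
    have := mul_le_mul_of_nonneg_left h1 (Real.exp_pos (-(A (s + t - r)))).le
    linarith
  have hkey := key_est (g := fun r => Real.exp (-(A (s + t - r))))
    (P := fun r => -(Real.exp (-(A (s + t - r))) * z (s + t - r))) (c := 1 / (2 * M))
    hB0 hst (fun r => Real.exp_pos _) hP hlowk huppk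
  have hkey' : 1 / (2 * M) * Real.exp (-(A (s + t - s))) * Real.exp ((t - s) / B)
      ≤ B * Real.exp (-(A (s + t - t))) := hkey
  rw [show s + t - s = t by ring, show s + t - t = s by ring] at hkey'
  have := log_step hM1 hB1 hkey'
  linarith

private theorem main_aux (a z A : ℝ → ℝ) (M B : ℝ) (hM1 : 1 ≤ M) (hB1 : 1 ≤ B)
    (haM : ∀ t, |a t| ≤ M)
    (hz : ∀ t, 0 ≤ t → HasDerivAt z (a t * z t + 1) t)
    (hzB : ∀ t, 0 ≤ t → |z t| ≤ B)
    (hA : ∀ t, HasDerivAt A (a t) t) :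
    ∃ C ≥ (0:ℝ), ∃ α > (0:ℝ), ∀ s t : ℝ, 0 ≤ s → s ≤ t →
      α * (t - s) - C ≤ |A t - A s| := by
  have hM0 : (0:ℝ) < M := lt_of_lt_of_le one_pos hM1
  have hB0 : (0:ℝ) < B := lt_of_lt_of_le one_pos hB1
  have hMinv : (0:ℝ) < 1 / M := by positivity
  have hlogpos : 0 ≤ Real.log (2 * M * B) := Real.log_nonneg (by nlinarith)
  by_cases hex : ∃ t₁, 0 ≤ t₁ ∧ 0 ≤ z t₁
  · obtain ⟨t₁, ht₁, hzt₁⟩ := hex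
    have hnn : ∀ r, t₁ ≤ r → 0 ≤ z r := by
      apply barrier (f := fun r => a r * z r + 1) (fun r hr => hz r (ht₁.trans hr)) ?_ hzt₁
      intro r hr hzr
      show 0 < a r * z r + 1
      rw [hzr]
      norm_num
    have ht₂ex : ∃ t₂, t₁ ≤ t₂ ∧ t₂ ≤ t₁ + 1 / M ∧ 1 / (2 * M) ≤ z t₂ := by
      by_contra hcon
      push_neg at hcon
      have hgr := growth (c := (1:ℝ)/2) (p := t₁) (q := t₁ + 1 / M) (by linarith)
        (fun r hr => hz r (ht₁.trans hr.1))
        (by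
          intro r hr
          apply cross_pos hM1 haM
          have h1 := hnn r hr.1
          have h2 := hcon r hr.1 hr.2
          rw [abs_of_nonneg h1]
          linarith)
      have h1 := hcon (t₁ + 1 / M) (by linarith) le_rfl
      have h2 : (1:ℝ)/2 * (t₁ + 1 / M - t₁) = 1 / (2 * M) := by field_simp; ring
      linarith
    obtain ⟨t₂, ht₁₂, ht₂ub, hzt₂⟩ := ht₂ex
    have ht₂0 : 0 ≤ t₂ := ht₁.trans ht₁₂
    have hlow : ∀ r, t₂ ≤ r → 1 / (2 * M) ≤ z r := by
      apply barrier (f := fun r => a r * z r + 1) (fun r hr => hz r (ht₂0.trans hr)) ?_ hzt₂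
      intro r hr hzr
      show 0 < a r * z r + 1
      have := cross_pos (a := a) (z := z) (r := r) hM1 haM
        (by rw [hzr, abs_of_nonneg (by positivity)])
      linarith
    refine ⟨Real.log (2 * M * B) + t₂ * (M + 1 / B),
      add_nonneg hlogpos (mul_nonneg ht₂0 (by positivity)), 1 / B, by positivity, ?_⟩
    intro s t hs hst
    have hdivB : (1:ℝ) / B * (t - s) = (t - s) / B := by ring
    by_cases hc : t₂ ≤ s
    · have hest := est_pos hM1 hB1 hs hst hA hz hzB
        (fun r hr => hlow r (hc.trans hr.1))
      have habs := neg_le_abs (A t - A s)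
      have h2 : 0 ≤ t₂ * (M + 1 / B) := mul_nonneg ht₂0 (by positivity)
      linarith
    · push_neg at hc
      by_cases hc2 : t ≤ t₂
      · have h1 : t - s ≤ t₂ := by linarith
        have h2 : 1 / B * (t - s) ≤ 1 / B * t₂ := mul_le_mul_of_nonneg_left h1 (by positivity)
        have h3 := abs_nonneg (A t - A s)
        have h4 : 1 / B * t₂ ≤ t₂ * (M + 1 / B) := by nlinarith
        linarith
      · push_neg at hc2
        have hest := est_pos hM1 hB1 ht₂0 hc2.le hA hz hzB (fun r hr => hlow r hr.1)
        have htri : |A t - A t₂| - |A t₂ - A s| ≤ |A t - A s| := by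
          have h := abs_sub_abs_le_abs_sub (A t - A t₂) (A s - A t₂)
          rw [show A t - A t₂ - (A s - A t₂) = A t - A s by ring,
            abs_sub_comm (A s) (A t₂)] at h
          linarith
        have hlip : |A t₂ - A s| ≤ M * (t₂ - s) := by
          have hg1 := growth (c := -M) (p := s) (q := t₂) hc.le (fun r _ => hA r)
            (fun r _ => by linarith [neg_abs_le (a r), haM r])
          have hg2 := growth (z := fun r => -(A r)) (f := fun r => -(a r)) (c := -M)
            (p := s) (q := t₂) hc.le (fun r _ => (hA r).neg)
            (fun r _ => by show -M ≤ -(a r); linarith [le_abs_self (a r), haM r])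
          have hg2' : -(A s) + -M * (t₂ - s) ≤ -(A t₂) := hg2
          rw [abs_le]
          constructor <;> nlinarith
        have hneg := neg_le_abs (A t - A t₂)
        have e : (t - s) / B = (t - t₂) / B + (t₂ - s) / B := by ring
        have h5 : (0:ℝ) ≤ s / B := by positivity
        have e2 : (t₂ - s) / B ≤ t₂ / B := by
          have : (t₂ - s) / B = t₂ / B - s / B := by ring
          linarith
        have hlip2 : M * (t₂ - s) ≤ M * t₂ := by nlinarith
        have eC : t₂ * (M + 1 / B) = M * t₂ + t₂ / B := by ring
        linarith
  · push_neg at hex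
    have hneg : ∀ r, 0 ≤ r → z r ≤ -(1 / (2 * M)) := by
      intro r hr
      by_contra hcon
      push_neg at hcon
      have hbar : ∀ u, r ≤ u → -(1 / (2 * M)) ≤ z u := by
        apply barrier (f := fun u => a u * z u + 1) (fun u hu => hz u (hr.trans hu)) ?_ hcon.le
        intro u hu hzu
        show 0 < a u * z u + 1
        have := cross_pos (a := a) (z := z) (r := u) hM1 haM
          (by rw [hzu, abs_neg, abs_of_nonneg (by positivity)])
        linarith
      have hgr := growth (c := (1:ℝ)/2) (p := r) (q := r + 1 / M) (by linarith)
        (fun u hu => hz u (hr.trans hu.1))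
        (by
          intro u hu
          have h1 := hbar u hu.1
          have h2 := hex u (hr.trans hu.1)
          apply cross_pos hM1 haM
          have hq : (0:ℝ) ≤ 1 / (2 * M) := by positivity
          rw [abs_le]
          exact ⟨by linarith, by linarith⟩)
      have h1 := hex (r + 1 / M) (by linarith)
      have h2 : (1:ℝ)/2 * (r + 1 / M - r) = 1 / (2 * M) := by field_simp; ring
      linarith
    refine ⟨Real.log (2 * M * B), hlogpos, 1 / B, by positivity, ?_⟩
    intro s t hs hst
    have hest := est_neg hM1 hB1 hs hst hA hz hzB (fun r hr => hneg r (hs.trans hr.1))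
    have habs := le_abs_self (A t - A s)
    have hdivB : (1:ℝ) / B * (t - s) = (t - s) / B := by ring
    linarith

/-- If `z' = a(t)z + 1` has a bounded solution on `[0,∞)` then `x' = a(t)x` has an
exponential dichotomy on `[0,∞)`. -/
theorem stmt_5 (a : ℝ → ℝ) (ha : Continuous a) (hab : ∃ M, ∀ t, |a t| ≤ M)
    (z : ℝ → ℝ) (hz : ∀ t, 0 ≤ t → HasDerivAt z (a t * z t + 1) t)
    (hzb : ∃ B, ∀ t, 0 ≤ t → |z t| ≤ B) :
    ∃ C ≥ (0:ℝ), ∃ α > (0:ℝ), ∀ s t : ℝ, 0 ≤ s → s ≤ t →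
      |∫ r in s..t, a r| ≥ α * (t - s) - C := by
  obtain ⟨M₀, hM₀⟩ := hab
  obtain ⟨B₀, hB₀⟩ := hzb
  have hA : ∀ t : ℝ, HasDerivAt (fun u => ∫ r in (0:ℝ)..u, a r) (a t) t := fun t =>
    intervalIntegral.integral_hasDerivAt_right (ha.intervalIntegrable _ _)
      (ha.stronglyMeasurableAtFilter MeasureTheory.volume _) ha.continuousAt
  obtain ⟨C, hC, α, hα, H⟩ := main_aux a z (fun u => ∫ r in (0:ℝ)..u, a r)
    (max M₀ 1) (max B₀ 1) (le_max_right _ _) (le_max_right _ _)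
    (fun t => (hM₀ t).trans (le_max_left _ _)) hz
    (fun t ht => (hB₀ t ht).trans (le_max_left _ _)) hA
  refine ⟨C, hC, α, hα, fun s t hs hst => ?_⟩
  have hi : (∫ r in s..t, a r) = (∫ r in (0:ℝ)..t, a r) - (∫ r in (0:ℝ)..s, a r) := by
    have h := intervalIntegral.integral_add_adjacent_intervals
      (ha.intervalIntegrable (μ := MeasureTheory.volume) 0 s)
      (ha.intervalIntegrable (μ := MeasureTheory.volume) s t)
    linarith
  rw [ge_iff_le, hi]
  exact H s t hs hst
end

section
/- Let a : [0,∞) → ℝ be bounded and continuous and suppose z is a bounded solution on [0,∞) of z' = a(t)z + 1. Then liminf_{t→∞} |z(t)| > 0. -/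
open Filter Set

/-- A bounded solution of `z' = a(t)z + 1` on `[0,∞)` satisfies `liminf |z| > 0`. -/
theorem stmt_6 (a : ℝ → ℝ) (ha : Continuous a) (hab : ∃ M, ∀ t, |a t| ≤ M)
    (z : ℝ → ℝ) (hz : ∀ t, 0 ≤ t → HasDerivAt z (a t * z t + 1) t)
    (B : ℝ) (hzb : ∀ t, 0 ≤ t → |z t| ≤ B) :
    0 < Filter.liminf (fun t => |z t|) Filter.atTop := by
  obtain ⟨M0, hM0⟩ := hab
  obtain ⟨M, hMpos, hM⟩ : ∃ M : ℝ, 0 < M ∧ ∀ t, |a t| ≤ M :=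
    ⟨|M0| + 1, by positivity, fun t => (hM0 t).trans (by nlinarith [le_abs_self M0])⟩
  -- continuity of z on [0,∞)
  have hzc : ContinuousOn z (Ici (0:ℝ)) := fun t ht =>
    ((hz t ht).continuousAt).continuousWithinAt
  -- reduce to: an eventual positive lower bound on |z|
  have key : ∀ c : ℝ, 0 < c → (∀ᶠ t in atTop, c ≤ |z t|) →
      0 < Filter.liminf (fun t => |z t|) Filter.atTop := by
    intro c hc hev
    have hcob : IsCoboundedUnder (· ≥ ·) atTop (fun t => |z t|) := by
      refine Filter.isCoboundedUnder_ge_of_eventually_le atTop (x := B) ?_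
      filter_upwards [eventually_ge_atTop (0:ℝ)] with t ht
      exact hzb t ht
    exact lt_of_lt_of_le hc (Filter.le_liminf_of_le hcob hev)
  -- the antiderivative of a
  set A : ℝ → ℝ := fun t => ∫ s in (0:ℝ)..t, a s with hAdef
  have hA : ∀ t : ℝ, HasDerivAt A (a t) t := fun t =>
    intervalIntegral.integral_hasDerivAt_right (ha.intervalIntegrable _ _)
      (ha.stronglyMeasurableAtFilter _ _) ha.continuousAt
  -- the auxiliary strictly increasing function y = z * exp(-A)
  set y : ℝ → ℝ := fun t => z t * Real.exp (-(A t)) with hydef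
  have hy : ∀ t : ℝ, 0 ≤ t → HasDerivAt y (Real.exp (-(A t))) t := by
    intro t ht
    have h1 : HasDerivAt (fun s => Real.exp (-(A s))) (Real.exp (-(A t)) * (-(a t))) t :=
      (((hA t).neg).exp)
    have h2 := (hz t ht).mul h1
    refine h2.congr_deriv ?_
    ring
  have hymono : StrictMonoOn y (Ici (0:ℝ)) := by
    apply strictMonoOn_of_hasDerivWithinAt_pos (convex_Ici 0)
    · intro t ht
      exact ((hy t ht).continuousAt).continuousWithinAt
    · intro t ht
      rw [interior_Ici] at ht
      exact ((hy t (le_of_lt ht)).hasDerivWithinAt)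
    · intro t _
      exact Real.exp_pos _
  by_cases hneg : ∀ t : ℝ, 0 ≤ t → z t < 0
  · -- case: z is always negative; then z ≤ -1/(2M) always
    -- auxiliary nondecreasing function h = exp(-Mt) * (z + 1/M)
    set h : ℝ → ℝ := fun t => Real.exp (-(M * t)) * (z t + 1 / M) with hhdef
    have hhmono : MonotoneOn h (Ici (0:ℝ)) := by
      apply monotoneOn_of_hasDerivWithinAt_nonneg (convex_Ici 0)
        (f' := fun t => Real.exp (-(M * t)) * z t * (a t - M))
      · intro t ht
        exact (((((hasDerivAt_id t).const_mul M).neg).exp).mul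
          (((hz t ht).add_const _))).continuousAt.continuousWithinAt
      · intro t ht
        rw [interior_Ici] at ht
        have ht' : (0:ℝ) ≤ t := le_of_lt ht
        have hd : HasDerivAt h
            (Real.exp (-(M * t)) * (-M) * (z t + 1 / M)
              + Real.exp (-(M * t)) * (a t * z t + 1)) t := by
          have he : HasDerivAt (fun s => Real.exp (-(M * s))) (Real.exp (-(M * t)) * (-M)) t := by
            simpa using (((hasDerivAt_id t).const_mul M).neg).exp
          exact he.mul ((hz t ht').add_const _)
        have : HasDerivAt h (Real.exp (-(M * t)) * z t * (a t - M)) t := by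
          convert hd using 1
          field_simp
          ring
        exact this.hasDerivWithinAt
      · intro t ht
        rw [interior_Ici] at ht
        have hz' : z t < 0 := hneg t (le_of_lt ht)
        have haM : a t - M ≤ 0 := by
          have := (abs_le.1 (hM t)).2; linarith
        have h1 : Real.exp (-(M * t)) * z t ≤ 0 :=
          mul_nonpos_of_nonneg_of_nonpos (Real.exp_pos _).le hz'.le
        nlinarith [h1, haM]
    -- claim: z t ≤ -1/(2M) for all t ≥ 0
    have hbound : ∀ t : ℝ, 0 ≤ t → z t ≤ -(1 / (2 * M)) := by
      intro t1 ht1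
      by_contra hcon
      push_neg at hcon
      set δ : ℝ := Real.exp (-(M * t1)) * (z t1 + 1 / M) with hδdef
      have hδpos : 0 < δ := by
        have h1 : 0 < z t1 + 1 / M := by
          have : 1 / (2 * M) < 1 / M := by
            rw [div_lt_div_iff₀ (by positivity) hMpos]; nlinarith
          linarith
        positivity
      -- find t ≥ t1 with δ * exp(M t) large
      have htend : Tendsto (fun t : ℝ => Real.exp (M * t)) atTop atTop :=
        Real.tendsto_exp_atTop.comp (tendsto_id.const_mul_atTop hMpos)
      obtain ⟨t, ht1t, htbig⟩ :=
        ((eventually_ge_atTop t1).and (htend.eventually_ge_atTop (1 / (M * δ)))).exists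
      have hht : h t1 ≤ h t := hhmono ht1 (ht1.trans ht1t) ht1t
      have hzneg : z t < 0 := hneg t (ht1.trans ht1t)
      -- h t = exp(-(Mt)) * (z t + 1/M) ≥ δ, so z t ≥ δ exp(Mt) - 1/M ≥ 0, contradiction
      have hexp : Real.exp (-(M * t)) = (Real.exp (M * t))⁻¹ := by
        rw [Real.exp_neg]
      have hept : 0 < Real.exp (M * t) := Real.exp_pos _
      have hMδ : 0 < M * δ := by positivity
      rw [div_le_iff₀ hMδ] at htbig
      have h0 : δ ≤ (Real.exp (M * t))⁻¹ * (z t + 1 / M) := by rw [← hexp]; exact hht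
      have h1 : δ * Real.exp (M * t) ≤ z t + 1 / M := by
        calc δ * Real.exp (M * t) ≤ (Real.exp (M * t))⁻¹ * (z t + 1 / M) * Real.exp (M * t) :=
              mul_le_mul_of_nonneg_right h0 hept.le
          _ = z t + 1 / M := by field_simp
      have hMinv : M * (1 / M) = 1 := by field_simp
      have h2 := mul_le_mul_of_nonneg_left h1 hMpos.le
      have h3 : M * z t < 0 := mul_neg_of_pos_of_neg hMpos hzneg
      nlinarith [h2, htbig, hMinv, h3]
    apply key (1 / (2 * M)) (by positivity)
    filter_upwards [eventually_ge_atTop (0:ℝ)] with t ht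
    have := hbound t ht
    rw [abs_of_neg (hneg t ht)]
    linarith
  · -- case: z t0 ≥ 0 for some t0 ≥ 0; then z > 0 after t0 and z bounded below eventually
    push_neg at hneg
    obtain ⟨t0, ht0, hzt0⟩ := hneg
    have hzpos : ∀ t : ℝ, t0 ≤ t → 0 ≤ z t := by
      intro t ht
      rcases eq_or_lt_of_le ht with rfl | hlt
      · exact hzt0
      · have hy0 : 0 ≤ y t0 := mul_nonneg hzt0 (Real.exp_pos _).le
        have : y t0 < y t := hymono (mem_Ici.2 ht0) (mem_Ici.2 (ht0.trans ht)) hlt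
        have hyt : 0 < y t := lt_of_le_of_lt hy0 this
        have : 0 < z t * Real.exp (-(A t)) := hyt
        nlinarith [Real.exp_pos (-(A t))]
    -- auxiliary nondecreasing function g = exp(Mt) * (z - 1/M) on [t0, ∞)
    set g : ℝ → ℝ := fun t => Real.exp (M * t) * (z t - 1 / M) with hgdef
    have hgmono : MonotoneOn g (Ici t0) := by
      apply monotoneOn_of_hasDerivWithinAt_nonneg (convex_Ici t0)
        (f' := fun t => Real.exp (M * t) * z t * (M + a t))
      · intro t ht
        have ht' : (0:ℝ) ≤ t := ht0.trans ht
        exact ((((hasDerivAt_id t).const_mul M).exp).mul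
          ((hz t ht').sub_const _)).continuousAt.continuousWithinAt
      · intro t ht
        rw [interior_Ici] at ht
        have ht' : (0:ℝ) ≤ t := ht0.trans ht.le
        have he : HasDerivAt (fun s => Real.exp (M * s)) (Real.exp (M * t) * M) t := by
          simpa using ((hasDerivAt_id t).const_mul M).exp
        have hd := he.mul ((hz t ht').sub_const (1 / M))
        have : HasDerivAt g (Real.exp (M * t) * z t * (M + a t)) t := by
          refine hd.congr_deriv ?_
          field_simp
          ring
        exact this.hasDerivWithinAt
      · intro t ht
        rw [interior_Ici] at ht
        have hz' : 0 ≤ z t := hzpos t ht.le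
        have haM : 0 ≤ M + a t := by
          have := (abs_le.1 (hM t)).1; linarith
        positivity
    -- for t ≥ t0 + 1 : z t ≥ (1 - exp(-M))/M
    have hcpos : 0 < (1 - Real.exp (-M)) / M := by
      apply div_pos _ hMpos
      have : Real.exp (-M) < 1 := by rw [Real.exp_lt_one_iff]; linarith
      linarith
    apply key _ hcpos
    filter_upwards [eventually_ge_atTop (t0 + 1)] with t ht
    have ht' : t0 ≤ t := by linarith
    have hg : g t0 ≤ g t := hgmono (mem_Ici.2 le_rfl) (mem_Ici.2 ht') ht'
    have h1 : Real.exp (M * t0) * (z t0 - 1 / M) ≤ Real.exp (M * t) * (z t - 1 / M) := hg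
    have h2 : -(Real.exp (M * t0) / M) ≤ Real.exp (M * t) * (z t - 1 / M) := by
      have : -(Real.exp (M * t0) / M) ≤ Real.exp (M * t0) * (z t0 - 1 / M) := by
        have := mul_nonneg (Real.exp_pos (M * t0)).le hzt0
        have hept0 : 0 < Real.exp (M * t0) := Real.exp_pos _
        rw [neg_le]
        calc -(Real.exp (M * t0) * (z t0 - 1 / M))
            = Real.exp (M * t0) / M - Real.exp (M * t0) * z t0 := by field_simp; ring
          _ ≤ Real.exp (M * t0) / M := by linarith
      linarith
    have hept : 0 < Real.exp (M * t) := Real.exp_pos _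
    have h4 : Real.exp (M * t0) ≤ Real.exp (-M) * Real.exp (M * t) := by
      rw [← Real.exp_add]
      apply Real.exp_le_exp.2
      nlinarith
    have h5 : (1 - Real.exp (-M)) / M ≤ z t := by
      have h6 := mul_le_mul_of_nonneg_left h2 hMpos.le
      have hE0 : M * (Real.exp (M * t0) / M) = Real.exp (M * t0) := by field_simp
      have hEMinv : Real.exp (M * t) * (M * (1 / M)) = Real.exp (M * t) := by field_simp
      rw [div_le_iff₀ hMpos]
      nlinarith [h6, h4, hE0, hEMinv, hept, Real.exp_pos (M * t0)]
    calc (1 - Real.exp (-M)) / M ≤ z t := h5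
      _ ≤ |z t| := le_abs_self _
end

section
/- Let a : [0,∞) → ℝ be bounded and continuous. Then λ ∈ ℝ satisfies: there exist C ≥ 0, α > 0 with ∫_t^s [a(r)−λ] dr ≥ α(s−t) − C for all 0 ≤ t ≤ s, if and only if λ < β⁻(a), where β⁻(a) = liminf_{L,s→+∞} (1/L)∫_s^{s+L} a(r) dr. -/
/-!
Let `m(L, s)` be the mean of `a` over `[s, s + L]`. As `a` is bounded, so is `m`, and
`λ < liminf m` says that `m ≥ y` on all long late windows for some `y > λ`, i.e.
`∫ₜˢ (a - y) ≥ 0` there. An arbitrary interval `[t ≥ 0, s]` is such a window up to a piece of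
bounded length, on which `a - y` is bounded below, so `∫ₜˢ (a - λ) ≥ (y - λ)(s - t) - C`.
Conversely, dividing `∫ₜˢ (a - λ) ≥ α (s - t) - C` by `L = s - t` gives `m ≥ λ + α / 2`
once `L ≥ 2C / α`.
-/
open Filter MeasureTheory

theorem Filter.lt_liminf_iff_exists_eventually_le {α β : Type*} [ConditionallyCompleteLinearOrder β]
    [DenselyOrdered β] {f : Filter α} {u : α → β} {x : β}
    (hco : f.IsCoboundedUnder (· ≥ ·) u) (hbdd : f.IsBoundedUnder (· ≥ ·) u) :
    x < liminf u f ↔ ∃ y > x, ∀ᶠ a in f, y ≤ u a := by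
  constructor
  · intro hx
    obtain ⟨y, hxy, hy⟩ := exists_between hx
    exact ⟨y, hxy, (eventually_lt_of_lt_liminf hy hbdd).mono fun _ => le_of_lt⟩
  · rintro ⟨y, hxy, hy⟩
    exact hxy.trans_le (le_liminf_of_le hco hy)

theorem MeasureTheory.LocallyIntegrable.intervalIntegrable {E : Type*} [NormedAddCommGroup E]
    {f : ℝ → E} {μ : Measure ℝ} [IsLocallyFiniteMeasure μ] (hf : LocallyIntegrable f μ) (a b : ℝ) :
    IntervalIntegrable f μ a b :=
  (hf.integrableOn_isCompact isCompact_uIcc).intervalIntegrable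

noncomputable def windowMean (a : ℝ → ℝ) (p : ℝ × ℝ) : ℝ :=
  (1 / p.1) * ∫ r in p.2..(p.2 + p.1), a r

lemma abs_windowMean_le {a : ℝ → ℝ} {M : ℝ} (hM : ∀ x, |a x| ≤ M) (p : ℝ × ℝ) :
    |windowMean a p| ≤ M := by
  have hM0 : 0 ≤ M := (abs_nonneg _).trans (hM 0)
  have hint : |∫ r in p.2..(p.2 + p.1), a r| ≤ M * |p.1| := by
    simpa using intervalIntegral.norm_integral_le_of_norm_le_const (a := p.2) (b := p.2 + p.1)
      fun x _ => (Real.norm_eq_abs _).trans_le (hM x)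
  rcases eq_or_ne p.1 0 with hL | hL
  · simp [windowMean, hL, hM0]
  · rw [windowMean, abs_mul, abs_div, abs_one, div_mul_eq_mul_div, one_mul,
      div_le_iff₀ (abs_pos.mpr hL)]
    exact hint

lemma le_windowMean_iff {a : ℝ → ℝ} {y L s : ℝ} (hL : 0 < L) :
    y ≤ windowMean a (L, s) ↔ y * L ≤ ∫ r in s..(s + L), a r := by
  rw [windowMean, one_div, inv_mul_eq_div, le_div_iff₀ hL]

lemma integral_sub_const_eq {a : ℝ → ℝ} {t s : ℝ} (ha : IntervalIntegrable a volume t s) (c : ℝ) :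
    ∫ r in t..s, (a r - c) = (∫ r in t..s, a r) - c * (s - t) := by
  rw [intervalIntegral.integral_sub ha intervalIntegrable_const, intervalIntegral.integral_const,
    smul_eq_mul, mul_comm]

lemma neg_mul_le_integral_of_forall_neg_le {f : ℝ → ℝ} {t s K : ℝ}
    (hf : IntervalIntegrable f volume t s) (hts : t ≤ s) (hK : ∀ x, -K ≤ f x) :
    -(K * (s - t)) ≤ ∫ r in t..s, f r := by
  calc -(K * (s - t)) = ∫ _ in t..s, -K := by simp [mul_comm]
    _ ≤ ∫ r in t..s, f r :=
      intervalIntegral.integral_mono_on hts intervalIntegrable_const hf fun x _ => hK x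

/- Either `[t, s]` has length `≤ 2N`, or it splits at `max t N` into a piece of length `≤ N`
and a long late window. -/
lemma neg_le_integral_of_nonneg_on_long_late {f : ℝ → ℝ} {K N : ℝ} (hf : LocallyIntegrable f)
    (hK0 : 0 ≤ K) (hK : ∀ x, -K ≤ f x) (hN : 0 ≤ N)
    (hlate : ∀ t s, N ≤ t → t + N ≤ s → 0 ≤ ∫ r in t..s, f r)
    {t s : ℝ} (ht : 0 ≤ t) (hts : t ≤ s) :
    -(K * (2 * N)) ≤ ∫ r in t..s, f r := by
  set t' := max t N
  have ht't : t ≤ t' := le_max_left _ _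
  have ht'N : t' ≤ t + N := max_le (by linarith) (by linarith)
  by_cases hshort : s ≤ t' + N
  · calc -(K * (2 * N)) ≤ -(K * (s - t)) := by gcongr; linarith
      _ ≤ _ := neg_mul_le_integral_of_forall_neg_le (hf.intervalIntegrable _ _) hts hK
  · have hhead := neg_mul_le_integral_of_forall_neg_le (hf.intervalIntegrable t t') ht't hK
    have htail := hlate t' s (le_max_right _ _) (by linarith)
    have hK' : K * (t' - t) ≤ K * (2 * N) := by gcongr; linarith
    rw [← intervalIntegral.integral_add_adjacent_intervals (hf.intervalIntegrable t t')
      (hf.intervalIntegrable t' s)]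
    linarith

lemma exists_lt_le_windowMean_of_integral_ge {a : ℝ → ℝ} (ha : LocallyIntegrable a)
    {lam C α : ℝ} (hα : 0 < α)
    (h : ∀ t s : ℝ, 0 ≤ t → t ≤ s → (∫ r in t..s, a r - lam) ≥ α * (s - t) - C) :
    ∃ y > lam, ∃ N, ∀ L s, N ≤ L → N ≤ s → y ≤ windowMean a (L, s) := by
  refine ⟨lam + α / 2, by linarith, max 1 (2 * C / α), fun L s hL hs => ?_⟩
  have hL1 : 1 ≤ L := (le_max_left _ _).trans hL
  have hCL : 2 * C ≤ α * L := by
    rw [← div_le_iff₀' hα]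
    exact (le_max_right _ _).trans hL
  have hwin := h s (s + L) (by linarith [le_max_left 1 (2 * C / α)]) (by linarith)
  rw [integral_sub_const_eq (ha.intervalIntegrable _ _), add_sub_cancel_left] at hwin
  rw [le_windowMean_iff (by linarith)]
  linarith

lemma exists_integral_ge_of_le_windowMean {a : ℝ → ℝ} (ha : LocallyIntegrable a) {K : ℝ}
    (hK : ∀ x, -K ≤ a x) {lam y N : ℝ} (hy : lam < y)
    (hmean : ∀ L s, N ≤ L → N ≤ s → y ≤ windowMean a (L, s)) :
    ∃ C ≥ (0:ℝ), ∃ α > (0:ℝ), ∀ t s : ℝ, 0 ≤ t → t ≤ s →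
      (∫ r in t..s, a r - lam) ≥ α * (s - t) - C := by
  set N' := max N 1
  set K' := |K| + |y|
  have hK'0 : 0 ≤ K' := by positivity
  have hlate : ∀ t s, N' ≤ t → t + N' ≤ s → 0 ≤ ∫ r in t..s, (a r - y) := by
    intro t s ht hs
    have hmean' := hmean (s - t) t (by linarith [le_max_left N 1]) (by linarith [le_max_left N 1])
    rw [le_windowMean_iff (by linarith [le_max_right N 1]), add_sub_cancel] at hmean'
    rw [integral_sub_const_eq (ha.intervalIntegrable _ _)]
    linarith
  have hlower : ∀ x, -K' ≤ a x - y := fun x => by linarith [hK x, le_abs_self y, le_abs_self K]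
  refine ⟨K' * (2 * N'), by positivity, y - lam, by linarith, fun t s ht hts => ?_⟩
  have hbound := neg_le_integral_of_nonneg_on_long_late (f := fun r => a r - y)
    (ha.sub (locallyIntegrable_const y)) hK'0 hlower (by positivity) hlate ht hts
  rw [integral_sub_const_eq (ha.intervalIntegrable _ _)] at hbound ⊢
  linarith

/-- Null-projector dichotomy of the shifted equation `x' = [a(t) - λ]x` on `[0,∞)` is
equivalent to `λ < β⁻(a)`, the lower Bohl exponent. -/
theorem stmt_7 (a : ℝ → ℝ) (ha : Continuous a) (hab : ∃ M, ∀ t, |a t| ≤ M) (lam : ℝ) :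
    (∃ C ≥ (0:ℝ), ∃ α > (0:ℝ), ∀ t s : ℝ, 0 ≤ t → t ≤ s →
      (∫ r in t..s, a r - lam) ≥ α * (s - t) - C) ↔
    lam < Filter.liminf (fun p : ℝ × ℝ => (1 / p.1) * ∫ r in p.2..(p.2 + p.1), a r)
      (Filter.atTop ×ˢ Filter.atTop) := by
  obtain ⟨M, hM⟩ := hab
  have hmean := abs_windowMean_le hM
  change _ ↔ lam < liminf (windowMean a) _
  rw [lt_liminf_iff_exists_eventually_le
      (isBoundedUnder_of ⟨M, fun p => (le_abs_self _).trans (hmean p)⟩).isCoboundedUnder_ge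
      (isBoundedUnder_of ⟨-M, fun p => (neg_le_of_abs_le (hmean p))⟩),
    prod_atTop_atTop_eq]
  simp only [eventually_atTop_prod_self]
  constructor
  · rintro ⟨C, -, α, hα, h⟩
    exact exists_lt_le_windowMean_of_integral_ge ha.locallyIntegrable hα h
  · rintro ⟨y, hy, N, hN⟩
    exact exists_integral_ge_of_le_windowMean ha.locallyIntegrable
      (fun x => neg_le_of_abs_le (hM x)) hy hN
end

section
/- Let a : [0,∞) → ℝ be bounded and continuous. Then λ ∈ ℝ satisfies: there exist C ≥ 0, α > 0 with ∫_s^t [a(r)−λ] dr ≤ C − α(t−s) for all 0 ≤ s ≤ t, if and only if λ > β⁺(a), where β⁺(a) = limsup_{L,s→+∞} (1/L)∫_s^{s+L} a(r) dr. -/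
/-!
Both conditions say that averages of `a` over long windows far out stay below `λ`.
If `∫ₛᵗ a ≤ C + (λ - α)(t - s)`, the window averages are at most `λ - α + C / L`, so the
upper Bohl exponent is at most `λ - α`. Conversely, if it is below some `γ < λ`, then
`∫ₛ^{s+L} a ≤ γ L` for all `s ≥ s₀`, `L ≥ L₀`. An interval `[s, t]` with `s ≥ 0` is either
shorter than `s₀ + L₀` or splits into a piece of length at most `s₀` and such a window, and
boundedness of `a` bounds the excess over `γ (t - s)` by a constant.
-/

open Filter MeasureTheory

/-- Indexed by `p = (L, s)`: the average of `a` over `[s, s + L]`, whose `limsup` as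
`L, s → ∞` is the upper Bohl exponent. -/
noncomputable def bohlAverage (a : ℝ → ℝ) (p : ℝ × ℝ) : ℝ :=
  (1 / p.1) * ∫ r in p.2..(p.2 + p.1), a r

lemma intervalIntegral.integral_sub_const {a : ℝ → ℝ} (s t c : ℝ)
    (ha : IntervalIntegrable a volume s t) :
    ∫ r in s..t, a r - c = (∫ r in s..t, a r) - c * (t - s) := by
  rw [intervalIntegral.integral_sub ha intervalIntegrable_const,
    intervalIntegral.integral_const, smul_eq_mul, mul_comm]

section Bounded

variable {a : ℝ → ℝ} {M : ℝ}

lemma abs_integral_le_mul_of_abs_le (hM : ∀ t, |a t| ≤ M) {s t : ℝ} (hst : s ≤ t) :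
    |∫ r in s..t, a r| ≤ M * (t - s) := by
  simpa [abs_of_nonneg (sub_nonneg.2 hst)] using
    intervalIntegral.norm_integral_le_of_norm_le_const (a := s) (b := t) (f := a)
      fun x _ => (Real.norm_eq_abs _).trans_le (hM x)

lemma integral_le_mul_of_abs_le (hM : ∀ t, |a t| ≤ M) {s t : ℝ} (hst : s ≤ t) :
    ∫ r in s..t, a r ≤ M * (t - s) :=
  (abs_le.1 (abs_integral_le_mul_of_abs_le hM hst)).2

lemma abs_bohlAverage_le (hM : ∀ t, |a t| ≤ M) {L : ℝ} (hL : 0 < L) (s : ℝ) :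
    |bohlAverage a (L, s)| ≤ M := by
  have h := abs_integral_le_mul_of_abs_le hM (le_add_of_nonneg_right hL.le : s ≤ s + L)
  rw [add_sub_cancel_left] at h
  rw [bohlAverage, abs_mul, abs_of_pos (one_div_pos.2 hL), one_div, inv_mul_le_iff₀ hL]
  linarith

lemma eventually_abs_bohlAverage_le (hM : ∀ t, |a t| ≤ M) :
    ∀ᶠ p in atTop ×ˢ atTop, |bohlAverage a p| ≤ M := by
  filter_upwards [(tendsto_fst (f := atTop) (g := atTop)).eventually_gt_atTop 0] with p hp
  exact abs_bohlAverage_le hM hp p.2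

lemma isBoundedUnder_le_bohlAverage (hM : ∀ t, |a t| ≤ M) :
    IsBoundedUnder (· ≤ ·) (atTop ×ˢ atTop) (bohlAverage a) :=
  isBoundedUnder_of_eventually_le <|
    (eventually_abs_bohlAverage_le hM).mono fun _ hp => (abs_le.1 hp).2

lemma isCoboundedUnder_le_bohlAverage (hM : ∀ t, |a t| ≤ M) :
    IsCoboundedUnder (· ≤ ·) (atTop ×ˢ atTop) (bohlAverage a) :=
  isCoboundedUnder_le_of_eventually_le _ <|
    (eventually_abs_bohlAverage_le hM).mono fun _ hp => (abs_le.1 hp).1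

lemma limsup_bohlAverage_le (hM : ∀ t, |a t| ≤ M) {C γ : ℝ}
    (h : ∀ s t, 0 ≤ s → s ≤ t → ∫ r in s..t, a r ≤ C + γ * (t - s)) :
    limsup (bohlAverage a) (atTop ×ˢ atTop) ≤ γ := by
  refine le_of_forall_pos_le_add fun ε hε => ?_
  refine limsup_le_of_le (isCoboundedUnder_le_bohlAverage hM) ?_
  rw [prod_atTop_atTop_eq, eventually_atTop]
  refine ⟨(max 1 (C / ε), 0), fun ⟨L, s⟩ ⟨hL, hs⟩ => ?_⟩
  have hL0 : 0 < L := lt_of_lt_of_le one_pos (le_of_max_le_left hL)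
  have hCε : C ≤ ε * L := by
    rw [mul_comm, ← div_le_iff₀ hε]
    exact le_of_max_le_right hL
  have hint := h s (s + L) hs (le_add_of_nonneg_right hL0.le)
  rw [add_sub_cancel_left] at hint
  rw [bohlAverage, one_div, inv_mul_le_iff₀ hL0]
  linarith

lemma exists_integral_le_of_limsup_bohlAverage_lt (hM : ∀ t, |a t| ≤ M) {γ : ℝ}
    (h : limsup (bohlAverage a) (atTop ×ˢ atTop) < γ) :
    ∃ s₀ ≥ (0 : ℝ), ∃ L₀ ≥ (0 : ℝ), ∀ s L, s₀ ≤ s → L₀ ≤ L → ∫ r in s..(s + L), a r ≤ γ * L := by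
  have hev := eventually_lt_of_limsup_lt h (isBoundedUnder_le_bohlAverage hM)
  rw [prod_atTop_atTop_eq, eventually_atTop] at hev
  obtain ⟨⟨L₁, s₁⟩, hlt⟩ := hev
  refine ⟨max s₁ 0, le_max_right _ _, max L₁ 1, zero_le_one.trans (le_max_right _ _),
    fun s L hs hL => ?_⟩
  have hL0 : 0 < L := zero_lt_one.trans_le ((le_max_right _ _).trans hL)
  have hwin := hlt (L, s) ⟨(le_max_left _ _).trans hL, (le_max_left _ _).trans hs⟩
  rw [bohlAverage, one_div, inv_mul_lt_iff₀ hL0] at hwin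
  linarith

lemma exists_integral_le_const_add_mul (ha : Continuous a) (hM : ∀ t, |a t| ≤ M)
    {γ s₀ L₀ : ℝ} (hs₀ : 0 ≤ s₀) (hL₀ : 0 ≤ L₀)
    (hlong : ∀ s L, s₀ ≤ s → L₀ ≤ L → ∫ r in s..(s + L), a r ≤ γ * L) :
    ∃ C ≥ (0 : ℝ), ∀ s t, 0 ≤ s → s ≤ t → ∫ r in s..t, a r ≤ C + γ * (t - s) := by
  have hM0 : 0 ≤ M := (abs_nonneg _).trans (hM 0)
  have hK : 0 ≤ M + |γ| := add_nonneg hM0 (abs_nonneg γ)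
  refine ⟨(M + |γ|) * (s₀ + L₀), by positivity, fun s t hs hst => ?_⟩
  have hγ := neg_abs_le γ
  set s' := max s s₀
  have hss' : s ≤ s' := le_max_left _ _
  have hs's : s' - s ≤ s₀ := by
    have : s' ≤ s₀ + s := max_le (by linarith) (by linarith)
    linarith
  by_cases hcase : s' + L₀ ≤ t
  · have hhead := integral_le_mul_of_abs_le hM hss'
    have htail := hlong s' (t - s') (le_max_right _ _) (by linarith)
    rw [add_sub_cancel] at htail
    rw [← intervalIntegral.integral_add_adjacent_intervals (ha.intervalIntegrable s s')
      (ha.intervalIntegrable s' t)]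
    nlinarith [mul_le_mul_of_nonneg_right hγ (sub_nonneg.2 hss'),
      mul_le_mul_of_nonneg_left hs's hK, mul_nonneg hK hL₀]
  · have hshort : t - s ≤ s₀ + L₀ := by linarith
    have hint := integral_le_mul_of_abs_le hM hst
    nlinarith [mul_le_mul_of_nonneg_left hshort hK, mul_le_mul_of_nonneg_right hγ (sub_nonneg.2 hst)]

end Bounded

/-- Identity-projector dichotomy of the shifted equation `x' = [a(t) - λ]x` on `[0,∞)` is
equivalent to `λ > β⁺(a)`, the upper Bohl exponent. -/
theorem stmt_8 (a : ℝ → ℝ) (ha : Continuous a) (hab : ∃ M, ∀ t, |a t| ≤ M) (lam : ℝ) :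
    (∃ C ≥ (0:ℝ), ∃ α > (0:ℝ), ∀ s t : ℝ, 0 ≤ s → s ≤ t →
      (∫ r in s..t, a r - lam) ≤ C - α * (t - s)) ↔
    Filter.limsup (fun p : ℝ × ℝ => (1 / p.1) * ∫ r in p.2..(p.2 + p.1), a r)
      (Filter.atTop ×ˢ Filter.atTop) < lam := by
  obtain ⟨M, hM⟩ := hab
  have hshift (s t : ℝ) := intervalIntegral.integral_sub_const s t lam (ha.intervalIntegrable s t)
  change _ ↔ limsup (bohlAverage a) _ < lam
  constructor
  · rintro ⟨C, -, α, hα, h⟩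
    have hβ : limsup (bohlAverage a) (atTop ×ˢ atTop) ≤ lam - α :=
      limsup_bohlAverage_le hM (C := C) fun s t hs hst => by linarith [h s t hs hst, hshift s t]
    linarith
  · intro hβ
    set β := limsup (bohlAverage a) (atTop ×ˢ atTop)
    obtain ⟨s₀, hs₀, L₀, hL₀, hlong⟩ :=
      exists_integral_le_of_limsup_bohlAverage_lt hM (γ := (β + lam) / 2) (by linarith)
    obtain ⟨C, hC, hbound⟩ := exists_integral_le_const_add_mul ha hM hs₀ hL₀ hlong
    refine ⟨C, hC, (lam - β) / 2, by linarith, fun s t hs hst => ?_⟩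
    linarith [hbound s t hs hst, hshift s t]
end

section
/- Let a : ℝ → ℝ be a continuous almost periodic function whose mean M[a] = lim_{L→∞} (1/L)∫_c^{c+L} a(s) ds (uniformly in c) satisfies M[a] < 0. Then there exist K ≥ 1 and α > 0 such that e^{∫_s^t a(r) dr} ≤ K e^{−α(t−s)} for all real s ≤ t. -/
/-!
Splitting `[s, t + L₀]` at `t` writes `∫_s^t a` as the difference of two integrals over windows
of length at least `L₀`, the window length beyond which every average of `a` is within `ε` of `μ`. Hence `∫_s^t a ≤ (μ + ε)(t - s) + 2εL₀` for all `s ≤ t`, with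
no restriction on `t - s`; taking `ε = α = -μ/2` and `K = exp (2αL₀)` gives the estimate.
-/

/-- Bohr almost periodicity. -/
def AlmostPeriodic (a : ℝ → ℝ) : Prop :=
  ∀ ε > 0, ∃ ℓ > 0, ∀ x : ℝ, ∃ τ ∈ Set.Icc x (x + ℓ), ∀ t, |a (t + τ) - a t| < ε

/-- `μ` is the mean of `a`, uniformly in the left endpoint. -/
def HasUniformMean (a : ℝ → ℝ) (μ : ℝ) : Prop :=
  ∀ ε > 0, ∃ L₀ > 0, ∀ L ≥ L₀, ∀ c : ℝ,
    |(1 / L) * (∫ s in c..(c + L), a s) - μ| < ε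

open MeasureTheory

namespace HasUniformMean

variable {a : ℝ → ℝ} {μ : ℝ}

theorem exists_window_bounds (hμ : HasUniformMean a μ) {ε : ℝ} (hε : 0 < ε) :
    ∃ L₀ > 0, ∀ L ≥ L₀, ∀ c : ℝ,
      (μ - ε) * L < ∫ s in c..(c + L), a s ∧ ∫ s in c..(c + L), a s < (μ + ε) * L := by
  obtain ⟨L₀, hL₀, hmean⟩ := hμ ε hε
  refine ⟨L₀, hL₀, fun L hL c => ?_⟩
  have hLpos : 0 < L := hL₀.trans_le hL
  have hscaled : |(∫ s in c..(c + L), a s) - μ * L| < ε * L := by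
    calc |(∫ s in c..(c + L), a s) - μ * L|
        = |((1 / L) * (∫ s in c..(c + L), a s) - μ) * L| := by congr 1; field_simp
      _ = |(1 / L) * (∫ s in c..(c + L), a s) - μ| * L := by rw [abs_mul, abs_of_pos hLpos]
      _ < ε * L := by gcongr; exact hmean L hL c
  obtain ⟨hlow, hup⟩ := abs_lt.mp hscaled
  constructor <;> linarith

theorem exists_integral_le (hμ : HasUniformMean a μ)
    (hint : ∀ s t : ℝ, IntervalIntegrable a volume s t) {ε : ℝ} (hε : 0 < ε) :
    ∃ B ≥ (0 : ℝ), ∀ s t : ℝ, s ≤ t → ∫ r in s..t, a r ≤ (μ + ε) * (t - s) + B := by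
  obtain ⟨L₀, hL₀, hwindow⟩ := hμ.exists_window_bounds hε
  refine ⟨2 * ε * L₀, by positivity, fun s t hst => ?_⟩
  have hlong := (hwindow (t - s + L₀) (by linarith) s).2
  have hshort := (hwindow L₀ le_rfl t).1
  rw [show s + (t - s + L₀) = t + L₀ by ring] at hlong
  have hsplit : ∫ r in s..t, a r = (∫ r in s..(t + L₀), a r) - ∫ r in t..(t + L₀), a r := by
    rw [← intervalIntegral.integral_add_adjacent_intervals (hint s t) (hint t (t + L₀)),
      add_sub_cancel_right]
  rw [hsplit]
  linarith

end HasUniformMean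

theorem stmt_9_general (a : ℝ → ℝ) (ha : Continuous a)
    (μ : ℝ) (hμ : HasUniformMean a μ) (hneg : μ < 0) :
    ∃ K ≥ (1:ℝ), ∃ α > (0:ℝ), ∀ s t : ℝ, s ≤ t →
      Real.exp (∫ r in s..t, a r) ≤ K * Real.exp (-α * (t - s)) := by
  have hα : 0 < -μ / 2 := by linarith
  obtain ⟨B, hB, hbound⟩ := hμ.exists_integral_le ha.intervalIntegrable hα
  refine ⟨Real.exp B, Real.one_le_exp hB, -μ / 2, hα, fun s t hst => ?_⟩
  rw [← Real.exp_add, Real.exp_le_exp]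
  linarith [hbound s t hst]

/-- Almost periodic coefficient with negative mean yields an exponential dichotomy
estimate (identity projector) on the whole line. -/
theorem stmt_9 (a : ℝ → ℝ) (ha : Continuous a) (hap : AlmostPeriodic a)
    (μ : ℝ) (hμ : HasUniformMean a μ) (hneg : μ < 0) :
    ∃ K ≥ (1:ℝ), ∃ α > (0:ℝ), ∀ s t : ℝ, s ≤ t →
      Real.exp (∫ r in s..t, a r) ≤ K * Real.exp (-α * (t - s)) :=
  stmt_9_general a ha μ hμ hneg
end

section
/- Let a : ℝ → ℝ be continuous, almost periodic, with mean M[a] < 0, and let v : ℝ → ℝ be bounded and continuous. Then y*(t) := ∫_{−∞}^t e^{∫_s^t a(r) dr} v(s) ds is well-defined, bounded on ℝ, and is a solution of y' = a(t)y + v(t). Moreover there exist K ≥ 1 and α > 0 such that every solution y of this equation satisfies |y(t) − y*(t)| ≤ K e^{−α(t−t₀)} |y(t₀) − y*(t₀)| for all t ≥ t₀. -/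
open Real MeasureTheory Set Filter intervalIntegral


lemma exp_mul_intOn {b : ℝ} (hb : 0 < b) (t : ℝ) :
    IntegrableOn (fun s => Real.exp (b * s)) (Set.Iic t) := by
  have hderiv : ∀ x, HasDerivAt (fun x => Real.exp (b * x) / b) (Real.exp (b * x)) x := by
    intro x
    have h1 : HasDerivAt (fun x : ℝ => b * x) b x := by
      simpa using (hasDerivAt_id x).const_mul b
    have := (h1.exp).div_const b
    simpa [mul_div_assoc, div_self hb.ne'] using this
  refine integrableOn_Iic_of_intervalIntegral_norm_bounded (Real.exp (b * t) / b) t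
    (fun y => ((Real.continuous_exp.comp (continuous_const.mul continuous_id)).integrableOn_Ioc)) tendsto_id
    (Eventually.of_forall fun y => ?_)
  have hcont : Continuous fun x => Real.exp (b * x) :=
    Real.continuous_exp.comp (continuous_const.mul continuous_id)
  rw [show (fun x => ‖Real.exp (b * x)‖) = fun x => Real.exp (b * x) by
    funext x; exact Real.norm_of_nonneg (Real.exp_pos _).le]
  rw [intervalIntegral.integral_eq_sub_of_hasDerivAt (fun x _ => hderiv x)
    (hcont.intervalIntegrable _ _)]
  have := (Real.exp_pos (b * y)).le
  have h2 := (Real.exp_pos (b * (id y : ℝ))).le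
  rw [div_sub_div_same, div_le_div_iff_of_pos_right hb]
  simp only [id] at h2 ⊢
  linarith

lemma exp_mul_int_Iic {b : ℝ} (hb : 0 < b) (t : ℝ) :
    ∫ s in Set.Iic t, Real.exp (b * s) = Real.exp (b * t) / b := by
  have hderiv : ∀ x, HasDerivAt (fun x => Real.exp (b * x) / b) (Real.exp (b * x)) x := by
    intro x
    have h1 : HasDerivAt (fun x : ℝ => b * x) b x := by
      simpa using (hasDerivAt_id x).const_mul b
    have := (h1.exp).div_const b
    simpa [mul_div_assoc, div_self hb.ne'] using this
  have htend : Tendsto (fun x => Real.exp (b * x) / b) atBot (nhds 0) := by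
    have : Tendsto (fun x : ℝ => b * x) atBot atBot :=
      tendsto_id.const_mul_atBot hb
    simpa using ((Real.tendsto_exp_atBot.comp this).div_const b)
  have := integral_Iic_of_hasDerivAt_of_tendsto
    ((hderiv t).continuousAt.continuousWithinAt) (fun x _ => hderiv x)
    (exp_mul_intOn hb t) htend
  simpa using this

lemma ap_bound {a : ℝ → ℝ} (ha : Continuous a) (hap : AlmostPeriodic a) :
    ∃ C ≥ 0, ∀ t, |a t| ≤ C := by
  obtain ⟨ℓ, hℓ, hτ⟩ := hap 1 one_pos
  obtain ⟨C₀, hC₀⟩ := (isCompact_Icc (a := (0:ℝ)) (b := ℓ)).exists_bound_of_continuousOn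
    ha.continuousOn
  have h0 : (0:ℝ) ∈ Set.Icc (0:ℝ) ℓ := ⟨le_refl _, hℓ.le⟩
  have hC₀0 : 0 ≤ C₀ := le_trans (norm_nonneg _) (hC₀ 0 h0)
  refine ⟨C₀ + 1, by linarith, fun u => ?_⟩
  obtain ⟨τ, hmem, hest⟩ := hτ (-u)
  have h1 : u + τ ∈ Set.Icc (0:ℝ) ℓ := ⟨by linarith [hmem.1], by linarith [hmem.2]⟩
  have h2 := hest u
  have h3 := hC₀ (u + τ) h1
  rw [Real.norm_eq_abs] at h3
  calc |a u| = |a (u + τ) - (a (u + τ) - a u)| := by ring_nf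
    _ ≤ |a (u + τ)| + |a (u + τ) - a u| := abs_sub _ _
    _ ≤ C₀ + 1 := add_le_add h3 h2.le

lemma dichotomy {a : ℝ → ℝ} (ha : Continuous a) {μ C : ℝ} (hμ : HasUniformMean a μ)
    (hneg : μ < 0) (hC0 : 0 ≤ C) (hC : ∀ t, |a t| ≤ C) :
    ∃ K ≥ (1:ℝ), ∃ α > (0:ℝ), ∀ s t : ℝ, s ≤ t →
      Real.exp (∫ r in s..t, a r) ≤ K * Real.exp (-α * (t - s)) := by
  set α := -μ / 2 with hα
  have hαpos : 0 < α := by simp [hα]; linarith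
  obtain ⟨L₀, hL₀, hmean⟩ := hμ α hαpos
  refine ⟨Real.exp ((C + α) * L₀), ?_, α, hαpos, fun s t hst => ?_⟩
  · rw [show (1:ℝ) = Real.exp 0 by simp]
    exact Real.exp_le_exp.2 (by positivity)
  rcases le_or_gt L₀ (t - s) with h | h
  · have hm := hmean (t - s) h s
    rw [show s + (t - s) = t by ring] at hm
    have hLpos : 0 < t - s := lt_of_lt_of_le hL₀ h
    have h1 : (1 / (t - s)) * (∫ r in s..t, a r) < μ + α := by
      have := abs_lt.1 hm
      linarith [this.2]
    have h2 : μ + α = -α := by rw [hα]; ring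
    have h3 : (∫ r in s..t, a r) < -α * (t - s) := by
      rw [one_div, inv_mul_eq_div, div_lt_iff₀ hLpos, h2] at h1
      linarith
    calc Real.exp (∫ r in s..t, a r) ≤ Real.exp (-α * (t - s)) := Real.exp_le_exp.2 h3.le
      _ ≤ Real.exp ((C + α) * L₀) * Real.exp (-α * (t - s)) := by
          nlinarith [Real.exp_pos (-α * (t - s)), Real.one_le_exp (show (0:ℝ) ≤ (C + α) * L₀ by positivity)]
  · have hIb : |∫ r in s..t, a r| ≤ C * |t - s| := by
      have := intervalIntegral.norm_integral_le_of_norm_le_const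
        (f := a) (a := s) (b := t) (C := C) (fun x _ => by rw [Real.norm_eq_abs]; exact hC x)
      rwa [Real.norm_eq_abs] at this
    have h4 : (∫ r in s..t, a r) ≤ C * L₀ := by
      rw [abs_of_nonneg (sub_nonneg.2 hst)] at hIb
      nlinarith [(abs_le.1 hIb).2]
    rw [← Real.exp_add]
    apply Real.exp_le_exp.2
    nlinarith

/-- If `M[a] < 0` and `v` is bounded continuous, then
`y*(t) = ∫_{-∞}^t e^{∫_s^t a} v(s) ds` is well defined, bounded, solves
`y' = a(t)y + v(t)`, and attracts every solution exponentially. -/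
theorem stmt_10 (a v : ℝ → ℝ) (ha : Continuous a) (hap : AlmostPeriodic a)
    (μ : ℝ) (hμ : HasUniformMean a μ) (hneg : μ < 0)
    (hv : Continuous v) (Mv : ℝ) (hMv : ∀ t, |v t| ≤ Mv) :
    (∀ t : ℝ, MeasureTheory.IntegrableOn
        (fun s => Real.exp (∫ r in s..t, a r) * v s) (Set.Iic t)) ∧
    (∃ B, ∀ t : ℝ, |∫ s in Set.Iic t, Real.exp (∫ r in s..t, a r) * v s| ≤ B) ∧
    (∀ t : ℝ, HasDerivAt
        (fun τ => ∫ s in Set.Iic τ, Real.exp (∫ r in s..τ, a r) * v s)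
        (a t * (∫ s in Set.Iic t, Real.exp (∫ r in s..t, a r) * v s) + v t) t) ∧
    ∃ K ≥ (1:ℝ), ∃ α > (0:ℝ), ∀ y : ℝ → ℝ,
      (∀ t, HasDerivAt y (a t * y t + v t) t) →
      ∀ t₀ t : ℝ, t₀ ≤ t →
        |y t - ∫ s in Set.Iic t, Real.exp (∫ r in s..t, a r) * v s| ≤
          K * Real.exp (-α * (t - t₀)) *
            |y t₀ - ∫ s in Set.Iic t₀, Real.exp (∫ r in s..t₀, a r) * v s| := by
  obtain ⟨C, hC0, hC⟩ := ap_bound ha hap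
  obtain ⟨K, hK1, α, hαpos, hdich⟩ := dichotomy ha hμ hneg hC0 hC
  have hKpos : (0:ℝ) < K := lt_of_lt_of_le one_pos hK1
  have hMv0 : (0:ℝ) ≤ Mv := le_trans (abs_nonneg _) (hMv 0)
  set F : ℝ → ℝ := fun s => ∫ r in (0:ℝ)..s, a r with hFdef
  have hFderiv : ∀ s, HasDerivAt F (a s) s := fun s =>
    intervalIntegral.integral_hasDerivAt_right (ha.intervalIntegrable _ _)
      (ha.stronglyMeasurableAtFilter _ _) ha.continuousAt
  have hFdiff : Differentiable ℝ F := fun s => (hFderiv s).differentiableAt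
  have hFcont : Continuous F := hFdiff.continuous
  have hsub : ∀ s t : ℝ, (∫ r in s..t, a r) = F t - F s := fun s t =>
    (intervalIntegral.integral_interval_sub_left (ha.intervalIntegrable _ _)
      (ha.intervalIntegrable _ _)).symm
  have hcont : ∀ t : ℝ, Continuous (fun s => Real.exp (∫ r in s..t, a r) * v s) := by
    intro t
    have heq : (fun s => Real.exp (∫ r in s..t, a r) * v s)
        = fun s => Real.exp (F t - F s) * v s := by
      funext s; rw [hsub]
    rw [heq]
    exact ((continuous_const.sub hFcont).rexp.mul hv)
  have hdom : ∀ t : ℝ, MeasureTheory.IntegrableOn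
      (fun s => (K * Mv * Real.exp (-α * t)) * Real.exp (α * s)) (Set.Iic t) :=
    fun t => (exp_mul_intOn hαpos t).const_mul _
  have hbound : ∀ t s : ℝ, s ≤ t →
      ‖Real.exp (∫ r in s..t, a r) * v s‖
        ≤ (K * Mv * Real.exp (-α * t)) * Real.exp (α * s) := by
    intro t s hst
    rw [Real.norm_eq_abs, abs_mul, abs_of_pos (Real.exp_pos _)]
    calc Real.exp (∫ r in s..t, a r) * |v s|
        ≤ (K * Real.exp (-α * (t - s))) * Mv :=
          mul_le_mul (hdich s t hst) (hMv s) (abs_nonneg _) (by positivity)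
      _ = (K * Mv * Real.exp (-α * t)) * Real.exp (α * s) := by
          rw [show -α * (t - s) = -α * t + α * s by ring, Real.exp_add]; ring
  have part1 : ∀ t : ℝ, MeasureTheory.IntegrableOn
      (fun s => Real.exp (∫ r in s..t, a r) * v s) (Set.Iic t) := by
    intro t
    refine (hdom t).mono' ((hcont t).aestronglyMeasurable.restrict) ?_
    exact (MeasureTheory.ae_restrict_iff' measurableSet_Iic).2
      (Filter.Eventually.of_forall fun s hs => hbound t s hs)
  have hone : ∀ x : ℝ, Real.exp (-x) * Real.exp x = 1 := by
    intro x; rw [← Real.exp_add]; simp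
  have part2 : ∀ t : ℝ, |∫ s in Set.Iic t, Real.exp (∫ r in s..t, a r) * v s|
      ≤ K * Mv / α := by
    intro t
    have h := MeasureTheory.norm_integral_le_of_norm_le (hdom t)
      ((MeasureTheory.ae_restrict_iff' measurableSet_Iic).2
        (Filter.Eventually.of_forall fun s hs => hbound t s hs))
    rw [Real.norm_eq_abs] at h
    refine h.trans (le_of_eq ?_)
    rw [MeasureTheory.integral_const_mul, exp_mul_int_Iic hαpos t]
    calc K * Mv * Real.exp (-α * t) * (Real.exp (α * t) / α)
        = K * Mv * (Real.exp (-(α * t)) * Real.exp (α * t)) / α := by ring_nf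
      _ = K * Mv / α := by rw [hone, mul_one]
  set g : ℝ → ℝ := fun s => Real.exp (-F s) * v s with hgdef
  have hgcont : Continuous g := (hFcont.neg.rexp.mul hv)
  set G : ℝ → ℝ := fun τ => ∫ s in Set.Iic τ, g s with hGdef
  have hystar : ∀ τ : ℝ, (∫ s in Set.Iic τ, Real.exp (∫ r in s..τ, a r) * v s)
      = Real.exp (F τ) * G τ := by
    intro τ
    have heq : ∀ s : ℝ, Real.exp (∫ r in s..τ, a r) * v s
        = Real.exp (F τ) * (Real.exp (-F s) * v s) := by
      intro s
      rw [hsub, sub_eq_add_neg, Real.exp_add]; ring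
    simp only [heq]
    rw [MeasureTheory.integral_const_mul]
  have hGint : ∀ τ : ℝ, MeasureTheory.IntegrableOn g (Set.Iic τ) := by
    intro τ
    have heq : g = fun s => Real.exp (-F τ) * (Real.exp (∫ r in s..τ, a r) * v s) := by
      funext s
      rw [hsub, ← mul_assoc, ← Real.exp_add,
        show -F τ + (F τ - F s) = -F s by ring]
    rw [heq]
    exact (part1 τ).const_mul _
  have hGderiv : ∀ t : ℝ, HasDerivAt G (g t) t := by
    intro t
    have key : G = fun τ => G 0 + ∫ s in (0:ℝ)..τ, g s := by
      funext τ
      rw [← intervalIntegral.integral_Iic_sub_Iic (hGint 0) (hGint τ)]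
      ring
    rw [key]
    exact ((hasDerivAt_const t (G 0)).add
      (intervalIntegral.integral_hasDerivAt_right (hgcont.intervalIntegrable 0 t)
        (hgcont.stronglyMeasurableAtFilter _ _) hgcont.continuousAt)).congr_deriv (zero_add _)
  have hstar : ∀ t : ℝ, HasDerivAt (fun τ => Real.exp (F τ) * G τ)
      (a t * (Real.exp (F t) * G t) + v t) t := by
    intro t
    have h1 := ((hFderiv t).exp).fun_mul (hGderiv t)
    refine h1.congr_deriv ?_
    have h2 := hone (F t)
    simp only [hgdef]
    linear_combination (v t) * h2
  have part3 : ∀ t : ℝ, HasDerivAt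
      (fun τ => ∫ s in Set.Iic τ, Real.exp (∫ r in s..τ, a r) * v s)
      (a t * (∫ s in Set.Iic t, Real.exp (∫ r in s..t, a r) * v s) + v t) t := by
    intro t
    rw [funext hystar, hystar t]
    exact hstar t
  refine ⟨part1, ⟨K * Mv / α, part2⟩, part3, K, hK1, α, hαpos, fun y hy t₀ t hst => ?_⟩
  rw [hystar t, hystar t₀]
  set z : ℝ → ℝ := fun u => y u - Real.exp (F u) * G u with hzdef
  have hzd : ∀ u, HasDerivAt z (a u * z u) u := by
    intro u
    have h := (hy u).fun_sub (hstar u)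
    refine h.congr_deriv ?_
    simp only [hzdef]; ring
  set w : ℝ → ℝ := fun u => z u * Real.exp (-F u) with hwdef
  have hwd : ∀ u, HasDerivAt w 0 u := by
    intro u
    have h := (hzd u).fun_mul ((hFderiv u).neg.exp)
    refine h.congr_deriv ?_
    ring
  have hconst := is_const_of_deriv_eq_zero
    (fun u => (hwd u).differentiableAt) (fun u => (hwd u).deriv) t t₀
  have hzeq : z t = z t₀ * Real.exp (F t - F t₀) := by
    simp only [hwdef] at hconst
    calc z t = z t * (Real.exp (-F t) * Real.exp (F t)) := by rw [hone]; ring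
      _ = (z t₀ * Real.exp (-F t₀)) * Real.exp (F t) := by rw [← hconst]; ring
      _ = z t₀ * Real.exp (F t - F t₀) := by
          rw [sub_eq_add_neg, Real.exp_add]; ring
  have hexp : Real.exp (F t - F t₀) ≤ K * Real.exp (-α * (t - t₀)) := by
    rw [← hsub]; exact hdich t₀ t hst
  calc |z t| = |z t₀| * Real.exp (F t - F t₀) := by
        rw [hzeq, abs_mul, abs_of_pos (Real.exp_pos _)]
    _ ≤ |z t₀| * (K * Real.exp (-α * (t - t₀))) :=
        mul_le_mul_of_nonneg_left hexp (abs_nonneg _)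
    _ = K * Real.exp (-α * (t - t₀)) * |z t₀| := by ring
end

section
/- Let a : ℝ → ℝ be almost periodic with M[a] < 0, let ψ : [0,∞) → ℝ be continuous with ψ(t) → 0 as t → ∞, and let b : [0,∞) → (0,∞) be bounded and continuous. Then there exists θ > 0 such that every solution u of u' = [a(t)+ψ(t)]u + b(t) on [0,∞) satisfies limsup_{t→∞} |u(t)| ≤ θ. Moreover θ can be taken of the form K(‖b‖_∞ + ε)/α for the dichotomy constants K, α of the perturbed linear equation. -/
lemma ap_bounded (a : ℝ → ℝ) (ha : Continuous a) (hap : AlmostPeriodic a) :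
    ∃ C : ℝ, ∀ t, |a t| ≤ C := by
  obtain ⟨ℓ, hℓ, h⟩ := hap 1 one_pos
  obtain ⟨M, hM⟩ := (isCompact_Icc (a := (0:ℝ)) (b := ℓ)).exists_bound_of_continuousOn
    ha.continuousOn
  refine ⟨M + 1, fun t => ?_⟩
  obtain ⟨τ, hτ, hτ2⟩ := h (-t)
  have h1 := hτ2 t
  have h2 : t + τ ∈ Set.Icc (0:ℝ) ℓ := by
    constructor <;> [linarith [hτ.1]; linarith [hτ.2]]
  have := hM (t + τ) h2
  simp only [Real.norm_eq_abs] at this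
  have : |a t| ≤ |a (t + τ)| + 1 := by
    have := abs_sub_abs_le_abs_sub (a t) (a (t + τ))
    have h3 : |a t - a (t+τ)| < 1 := by rw [abs_sub_comm]; exact h1
    linarith
  linarith [hM (t + τ) h2]

lemma dicho (a ψ : ℝ → ℝ) (ha : Continuous a) (hap : AlmostPeriodic a)
    (μ : ℝ) (hμ : HasUniformMean a μ) (hneg : μ < 0)
    (hψc : Continuous ψ) (hψ : Filter.Tendsto ψ Filter.atTop (nhds 0)) :
    ∃ K ≥ (1:ℝ), ∀ s t : ℝ, 0 ≤ s → s ≤ t →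
      Real.exp (∫ r in s..t, a r + ψ r) ≤ K * Real.exp (-(-μ/2) * (t - s)) := by
  set α : ℝ := -μ/2 with hα
  have hαpos : 0 < α := by simp [hα]; linarith
  set ε : ℝ := -μ/4 with hε
  have hεpos : 0 < ε := by simp [hε]; linarith
  obtain ⟨L₀, hL₀, hmean⟩ := hμ ε hεpos
  -- tail bound on ψ
  obtain ⟨N, hN⟩ := (Metric.tendsto_atTop.mp hψ ε hεpos)
  set T : ℝ := max N 0 with hT
  have hT0 : 0 ≤ T := le_max_right _ _
  have hψtail : ∀ r, T ≤ r → |ψ r| ≤ ε := by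
    intro r hr
    have := hN r (le_trans (le_max_left _ _) hr)
    rw [Real.dist_eq, sub_zero] at this
    exact this.le
  -- global bound on a + ψ on [0, ∞)
  obtain ⟨Ca, hCa⟩ := ap_bounded a ha hap
  obtain ⟨Cψ, hCψ⟩ := (isCompact_Icc (a := (0:ℝ)) (b := T)).exists_bound_of_continuousOn
    hψc.continuousOn
  set C : ℝ := Ca + max Cψ ε with hC
  have hCb : ∀ r, 0 ≤ r → |a r + ψ r| ≤ C := by
    intro r hr
    have h1 : |ψ r| ≤ max Cψ ε := by
      rcases le_total r T with h | h
      · exact le_trans (by simpa [Real.norm_eq_abs] using hCψ r ⟨hr, h⟩) (le_max_left _ _)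
      · exact le_trans (hψtail r h) (le_max_right _ _)
    calc |a r + ψ r| ≤ |a r| + |ψ r| := abs_add_le _ _
      _ ≤ C := by have := hCa r; rw [hC]; linarith
  have hC0 : 0 ≤ C := le_trans (abs_nonneg _) (hCb 0 le_rfl)
  set D : ℝ := (C + α) * (T + L₀) with hD
  have hD0 : 0 ≤ D := mul_nonneg (by linarith) (by linarith)
  refine ⟨Real.exp D, Real.one_le_exp hD0, fun s t hs hst => ?_⟩
  rw [← Real.exp_add]
  apply Real.exp_le_exp.mpr
  -- suffices : ∫ + α (t - s) ≤ D
  rw [show D + -α * (t - s) = D - α * (t - s) by ring, le_sub_iff_add_le]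
  set p : ℝ → ℝ := fun r => a r + ψ r with hp
  have hpc : Continuous p := ha.add hψc
  set m : ℝ := max s T with hm
  have hsm : s ≤ m := le_max_left _ _
  have hmT : T ≤ m := le_max_right _ _
  have hmsT : m - s ≤ T := by
    rcases le_total s T with h | h
    · simp [hm, max_eq_right h]; linarith
    · simp [hm, max_eq_left h]; linarith
  have key : ∀ x y : ℝ, 0 ≤ x → x ≤ y → (∫ r in x..y, p r) ≤ C * (y - x) := by
    intro x y hx hxy
    have := intervalIntegral.norm_integral_le_of_norm_le_const
      (C := C) (f := p) (a := x) (b := y) (fun r hr => by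
        rw [Set.uIoc_of_le hxy] at hr
        exact hCb r (le_trans hx hr.1.le))
    rw [Real.norm_eq_abs] at this
    calc (∫ r in x..y, p r) ≤ |∫ r in x..y, p r| := le_abs_self _
      _ ≤ C * |y - x| := this
      _ = C * (y - x) := by rw [abs_of_nonneg (by linarith)]
  rcases le_total t (m + L₀) with hcase | hcase
  · -- short interval
    have hts : t - s ≤ T + L₀ := by linarith
    have := key s t hs hst
    nlinarith [mul_le_mul_of_nonneg_left hts hC0, hαpos.le]
  · -- split at m
    have hmt : m ≤ t := by linarith
    have hsplit : (∫ r in s..t, p r) = (∫ r in s..m, p r) + (∫ r in m..t, p r) := by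
      rw [intervalIntegral.integral_add_adjacent_intervals
        (hpc.intervalIntegrable _ _) (hpc.intervalIntegrable _ _)]
    set L : ℝ := t - m with hL
    have hLpos : 0 < L := by simp [hL]; linarith
    have hLL₀ : L₀ ≤ L := by linarith
    -- mean estimate for a on [m, t]
    have hmean2 : (∫ r in m..t, a r) ≤ (μ + ε) * L := by
      have := hmean L hLL₀ m
      rw [show m + L = t by simp [hL]] at this
      have h2 : (1 / L) * (∫ r in m..t, a r) < μ + ε := by
        have := abs_lt.mp this; linarith [this.2]
      have := (mul_lt_mul_iff_right₀ hLpos).mpr h2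
      rw [← mul_assoc, mul_one_div_cancel hLpos.ne', one_mul] at this
      linarith [this]
    -- ψ estimate on [m, t]
    have hψint : (∫ r in m..t, ψ r) ≤ ε * L := by
      have := intervalIntegral.norm_integral_le_of_norm_le_const
        (C := ε) (f := ψ) (a := m) (b := t) (fun r hr => by
          rw [Set.uIoc_of_le hmt] at hr
          exact hψtail r (le_trans hmT hr.1.le))
      rw [Real.norm_eq_abs] at this
      calc (∫ r in m..t, ψ r) ≤ |∫ r in m..t, ψ r| := le_abs_self _
        _ ≤ ε * |t - m| := this
        _ = ε * L := by rw [abs_of_nonneg (by linarith)]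
    have hmid : (∫ r in m..t, p r) ≤ -α * L := by
      have hadd : (∫ r in m..t, p r) = (∫ r in m..t, a r) + (∫ r in m..t, ψ r) :=
        intervalIntegral.integral_add (ha.intervalIntegrable _ _) (hψc.intervalIntegrable _ _)
      have : μ + 2 * ε = -α := by rw [hε, hα]; ring
      rw [hadd]; nlinarith
    have hfirst := key s m hs hsm
    rw [hsplit]
    nlinarith [mul_le_mul_of_nonneg_left hmsT hC0, mul_le_mul_of_nonneg_left hmsT hαpos.le,
      hαpos.le, hL₀.le, hT0]

lemma exp_int (α t : ℝ) (hα : 0 < α) (ht : 0 ≤ t) :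
    (∫ s in (0:ℝ)..t, Real.exp (-α * (t - s))) ≤ 1 / α := by
  have hF : ∀ s : ℝ, HasDerivAt (fun s => Real.exp (-α * (t - s)) / α)
      (Real.exp (-α * (t - s))) s := by
    intro s
    have hg : HasDerivAt (fun s : ℝ => -α * (t - s)) α s := by
      simpa using ((hasDerivAt_id s).const_sub t).const_mul (-α)
    have h2 := (hg.exp).div_const α
    rw [mul_div_cancel_right₀ _ hα.ne'] at h2
    exact h2
  have hcont : Continuous (fun s => Real.exp (-α * (t - s))) := by continuity
  rw [intervalIntegral.integral_eq_sub_of_hasDerivAt (fun s _ => hF s)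
    (hcont.intervalIntegrable _ _)]
  have h1 : Real.exp (-α * (t - t)) = 1 := by norm_num
  rw [h1]
  have h2 : 0 < Real.exp (-α * (t - 0)) := Real.exp_pos _
  rw [div_sub_div_same, div_le_div_iff₀ hα hα]
  nlinarith

lemma sol_est (p b : ℝ → ℝ) (hpc : Continuous p) (hbc : Continuous b)
    (K α : ℝ) (hK : 1 ≤ K) (hα : 0 < α)
    (hdich : ∀ s t : ℝ, 0 ≤ s → s ≤ t →
      Real.exp (∫ r in s..t, p r) ≤ K * Real.exp (-α * (t - s)))
    (B : ℝ) (hb0 : ∀ s, 0 ≤ s → 0 ≤ b s) (hB : ∀ s, 0 ≤ s → b s ≤ B)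
    (u : ℝ → ℝ) (hu : ∀ t, 0 ≤ t → HasDerivAt u (p t * u t + b t) t)
    (t : ℝ) (ht : 0 ≤ t) :
    |u t| ≤ K * Real.exp (-α * t) * |u 0| + B * K / α := by
  have hB0 : 0 ≤ B := le_trans (hb0 0 le_rfl) (hB 0 le_rfl)
  set P : ℝ → ℝ := fun x => ∫ r in (0:ℝ)..x, p r with hPdef
  have hPd : ∀ x : ℝ, HasDerivAt P (p x) x := fun x =>
    intervalIntegral.integral_hasDerivAt_right (hpc.intervalIntegrable _ _)
      (hpc.stronglyMeasurableAtFilter _ _) hpc.continuousAt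
  have hPc : Continuous P := by
    rw [continuous_iff_continuousAt]; exact fun x => (hPd x).continuousAt
  have hvd : ∀ x, HasDerivAt (fun y => u y * Real.exp (-P y))
      (b x * Real.exp (-P x)) x → True := fun _ _ => trivial
  have hvderiv : ∀ x, 0 ≤ x → HasDerivAt (fun y => u y * Real.exp (-P y))
      (b x * Real.exp (-P x)) x := by
    intro x hx
    have h2 : HasDerivAt (fun y => Real.exp (-P y)) (Real.exp (-P x) * (-p x)) x :=
      ((hPd x).neg).exp
    have h3 : HasDerivAt (fun y => u y * Real.exp (-P y))
        ((p x * u x + b x) * Real.exp (-P x) + u x * (Real.exp (-P x) * (-p x))) x :=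
      (hu x hx).mul h2
    convert h3 using 1
    ring
  have hP0 : P 0 = 0 := intervalIntegral.integral_same
  have hftc : u t * Real.exp (-P t) - u 0 =
      ∫ s in (0:ℝ)..t, b s * Real.exp (-P s) := by
    have := intervalIntegral.integral_eq_sub_of_hasDerivAt
      (f := fun y => u y * Real.exp (-P y))
      (f' := fun s => b s * Real.exp (-P s))
      (fun s hs => hvderiv s (by rw [Set.uIcc_of_le ht] at hs; exact hs.1))
      ((hbc.mul (hPc.neg.rexp)).intervalIntegrable _ _)
    rw [this]
    simp [hP0]
  have hexpne : Real.exp (-P t) ≠ 0 := (Real.exp_pos _).ne'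
  have hut : u t = Real.exp (P t) * u 0 +
      Real.exp (P t) * ∫ s in (0:ℝ)..t, b s * Real.exp (-P s) := by
    have h4 : Real.exp (P t) * Real.exp (-P t) = 1 := by
      rw [← Real.exp_add]; simp
    have h6 : u t * Real.exp (-P t) = u 0 + ∫ s in (0:ℝ)..t, b s * Real.exp (-P s) := by
      linarith [hftc]
    calc u t = Real.exp (P t) * (u t * Real.exp (-P t)) := by
          rw [mul_comm (u t), ← mul_assoc, h4, one_mul]
      _ = Real.exp (P t) * (u 0 + ∫ s in (0:ℝ)..t, b s * Real.exp (-P s)) := by rw [h6]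
      _ = _ := by ring
  have hPt : Real.exp (P t) ≤ K * Real.exp (-α * t) := by
    simpa using hdich 0 t le_rfl ht
  have hIrw : Real.exp (P t) * (∫ s in (0:ℝ)..t, b s * Real.exp (-P s))
      = ∫ s in (0:ℝ)..t, b s * Real.exp (P t - P s) := by
    rw [← intervalIntegral.integral_const_mul]
    congr 1
    funext s
    rw [sub_eq_add_neg, Real.exp_add]
    ring
  have hIbound : (∫ s in (0:ℝ)..t, b s * Real.exp (P t - P s)) ≤ B * K / α := by
    have hmono : (∫ s in (0:ℝ)..t, b s * Real.exp (P t - P s)) ≤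
        ∫ s in (0:ℝ)..t, B * K * Real.exp (-α * (t - s)) := by
      apply intervalIntegral.integral_mono_on ht
        ((hbc.mul ((continuous_const.sub hPc).rexp)).intervalIntegrable _ _)
        ((by continuity : Continuous (fun s => B * K * Real.exp (-α * (t - s)))).intervalIntegrable _ _)
      intro s hs
      have hPts : P t - P s = ∫ r in s..t, p r :=
        intervalIntegral.integral_interval_sub_left (hpc.intervalIntegrable _ _)
          (hpc.intervalIntegrable _ _)
      show b s * Real.exp (P t - P s) ≤ _
      rw [hPts, mul_assoc]
      exact mul_le_mul (hB s hs.1) (hdich s t hs.1 hs.2) (Real.exp_pos _).le hB0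
    have hconst : (∫ s in (0:ℝ)..t, B * K * Real.exp (-α * (t - s)))
        = B * K * ∫ s in (0:ℝ)..t, Real.exp (-α * (t - s)) :=
      intervalIntegral.integral_const_mul _ _
    have hBK : 0 ≤ B * K := mul_nonneg hB0 (by linarith)
    have := mul_le_mul_of_nonneg_left (exp_int α t hα ht) hBK
    calc (∫ s in (0:ℝ)..t, b s * Real.exp (P t - P s)) ≤ _ := hmono
      _ = B * K * ∫ s in (0:ℝ)..t, Real.exp (-α * (t - s)) := hconst
      _ ≤ B * K * (1 / α) := this
      _ = B * K / α := by ring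
  have hInn : 0 ≤ ∫ s in (0:ℝ)..t, b s * Real.exp (-P s) :=
    intervalIntegral.integral_nonneg ht
      (fun s hs => mul_nonneg (hb0 s hs.1) (Real.exp_pos _).le)
  have hsecond : Real.exp (P t) * (∫ s in (0:ℝ)..t, b s * Real.exp (-P s)) ≤ B * K / α := by
    rw [hIrw]; exact hIbound
  have hsecond0 : 0 ≤ Real.exp (P t) * (∫ s in (0:ℝ)..t, b s * Real.exp (-P s)) :=
    mul_nonneg (Real.exp_pos _).le hInn
  rw [hut]
  calc |Real.exp (P t) * u 0 + Real.exp (P t) * ∫ s in (0:ℝ)..t, b s * Real.exp (-P s)|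
      ≤ |Real.exp (P t) * u 0| + |Real.exp (P t) * ∫ s in (0:ℝ)..t, b s * Real.exp (-P s)| :=
        abs_add_le _ _
    _ = Real.exp (P t) * |u 0| + Real.exp (P t) * ∫ s in (0:ℝ)..t, b s * Real.exp (-P s) := by
        rw [abs_mul, abs_of_nonneg (Real.exp_pos _).le, abs_of_nonneg hsecond0]
    _ ≤ K * Real.exp (-α * t) * |u 0| + B * K / α := by
        have := mul_le_mul_of_nonneg_right hPt (abs_nonneg (u 0))
        linarith


/-- Ultimate boundedness of solutions of `u' = [a(t)+ψ(t)]u + b(t)` when `M[a] < 0`,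
`ψ → 0`, and `b` is positive bounded; the bound has the form `K(‖b‖∞+ε)/α`. -/
theorem stmt_11 (a ψ b : ℝ → ℝ) (ha : Continuous a) (hap : AlmostPeriodic a)
    (μ : ℝ) (hμ : HasUniformMean a μ) (hneg : μ < 0)
    (hψc : Continuous ψ) (hψ : Filter.Tendsto ψ Filter.atTop (nhds 0))
    (hbc : Continuous b) (hbpos : ∀ t, 0 ≤ t → 0 < b t)
    (B : ℝ) (hB : ∀ t, 0 ≤ t → b t ≤ B) :
    ∃ θ > (0:ℝ),
      (∀ u : ℝ → ℝ, (∀ t, 0 ≤ t → HasDerivAt u ((a t + ψ t) * u t + b t) t) →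
        Filter.limsup (fun t => |u t|) Filter.atTop ≤ θ) ∧
      ∃ K ≥ (1:ℝ), ∃ α > (0:ℝ), ∃ ε > (0:ℝ),
        (∀ s t : ℝ, 0 ≤ s → s ≤ t →
          Real.exp (∫ r in s..t, a r + ψ r) ≤ K * Real.exp (-α * (t - s))) ∧
        θ = K * (B + ε) / α := by
  obtain ⟨K, hK1, hdich⟩ := dicho a ψ ha hap μ hμ hneg hψc hψ
  set α : ℝ := -μ/2 with hα
  have hαpos : 0 < α := by simp [hα]; linarith
  have hKpos : 0 < K := lt_of_lt_of_le one_pos hK1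
  have hB0 : 0 ≤ B := le_trans (hbpos 0 le_rfl).le (hB 0 le_rfl)
  refine ⟨K * (B + 1) / α, by positivity, ?_, K, hK1, α, hαpos, 1, one_pos, hdich, rfl⟩
  intro u hu
  have hest : ∀ t, 0 ≤ t → |u t| ≤ K * Real.exp (-α * t) * |u 0| + B * K / α :=
    sol_est (fun r => a r + ψ r) b (ha.add hψc) hbc K α hK1 hαpos hdich B
      (fun s hs => (hbpos s hs).le) hB u hu
  have htend : Filter.Tendsto (fun t => K * Real.exp (-α * t) * |u 0|)
      Filter.atTop (nhds 0) := by
    have h1 : Filter.Tendsto (fun t : ℝ => α * t) Filter.atTop Filter.atTop :=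
      Filter.Tendsto.const_mul_atTop hαpos Filter.tendsto_id
    have h2 : Filter.Tendsto (fun t : ℝ => -α * t) Filter.atTop Filter.atBot := by
      simpa [Function.comp_def, neg_mul] using (Filter.tendsto_neg_atTop_atBot.comp h1)
    have h3 := Real.tendsto_exp_atBot.comp h2
    have := (h3.const_mul K).mul_const |u 0|
    simpa using this
  have hKα : 0 < K / α := by positivity
  have hev : ∀ᶠ t in Filter.atTop, |u t| ≤ K * (B + 1) / α := by
    filter_upwards [htend.eventually (gt_mem_nhds hKα), Filter.eventually_ge_atTop (0:ℝ)]
      with t h1 h2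
    have := hest t h2
    have heq : K * (B + 1) / α = B * K / α + K / α := by ring
    rw [heq]
    linarith
  exact Filter.limsup_le_of_le
    (Filter.isCoboundedUnder_le_of_eventually_le Filter.atTop
      (Filter.Eventually.of_forall fun t => abs_nonneg (u t))) hev
end

section
/- Let a : ℝ → ℝ be almost periodic with M[a] > 0, let φ : [0,∞) → ℝ be continuous with φ(t) → 0, and let c : [0,∞) → (0,∞) be bounded and continuous. Then there exist K ≥ 1 and α₀ > 0 such that every solution v of v' = [a(t)+φ(t)]v + c(t) with v(t₀) ≥ 1 satisfies v(t) ≥ K^{−1}e^{α₀(t−t₀)} for all t ≥ t₀ ≥ 0. -/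
/-- If `M[a] > 0`, `φ → 0` and `c > 0` is bounded, then solutions of
`v' = [a(t)+φ(t)]v + c(t)` with `v(t₀) ≥ 1` grow exponentially. -/
theorem stmt_14 (a φ c : ℝ → ℝ) (ha : Continuous a) (hap : AlmostPeriodic a)
    (μ : ℝ) (hμ : HasUniformMean a μ) (hpos : 0 < μ)
    (hφc : Continuous φ) (hφ : Filter.Tendsto φ Filter.atTop (nhds 0))
    (hcc : Continuous c) (hcpos : ∀ t, 0 ≤ t → 0 < c t)
    (B : ℝ) (hB : ∀ t, 0 ≤ t → c t ≤ B) :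
    ∃ K ≥ (1:ℝ), ∃ α₀ > (0:ℝ), ∀ v : ℝ → ℝ,
      (∀ t, 0 ≤ t → HasDerivAt v ((a t + φ t) * v t + c t) t) →
      ∀ t₀ : ℝ, 0 ≤ t₀ → 1 ≤ v t₀ →
        ∀ t, t₀ ≤ t → K⁻¹ * Real.exp (α₀ * (t - t₀)) ≤ v t := by
  -- Step 1: `a` is bounded
  obtain ⟨ℓ, hℓ, hτ⟩ := hap 1 one_pos
  obtain ⟨Ca, hCa⟩ := (isCompact_Icc (a := (0:ℝ)) (b := ℓ)).exists_bound_of_continuousOn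
    ha.continuousOn
  set M : ℝ := max Ca 0 + 1 with hMdef
  have hM0 : 0 ≤ M := by positivity
  have haM : ∀ t, |a t| ≤ M := by
    intro t
    obtain ⟨τ, hτ1, hτ2⟩ := hτ (t - ℓ)
    have h1 := hτ2 (t - τ)
    have hmem : t - τ ∈ Set.Icc (0:ℝ) ℓ := by
      constructor
      · have := hτ1.2; linarith
      · have := hτ1.1; linarith
    have h2 := hCa _ hmem
    rw [Real.norm_eq_abs] at h2
    have h3 : t - τ + τ = t := by ring
    rw [h3] at h1
    have h4 : |a t| - |a (t - τ)| ≤ |a t - a (t - τ)| := abs_sub_abs_le_abs_sub _ _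
    have h5 : Ca ≤ max Ca 0 := le_max_left _ _
    rw [hMdef]
    linarith
  -- Step 2: mean estimate
  obtain ⟨L₀, hL₀pos, hL₀⟩ := hμ (μ/2) (by positivity)
  -- Step 3: `φ` eventually small and bounded on initial segment
  obtain ⟨T0, hT0⟩ := (Metric.tendsto_atTop.mp hφ) (μ/4) (by positivity)
  set T : ℝ := max T0 0 with hTdef
  have hTnn : 0 ≤ T := le_max_right _ _
  have hT : ∀ s, T ≤ s → |φ s| ≤ μ/4 := by
    intro s hs
    have := hT0 s (le_trans (le_max_left _ _) hs)
    rw [Real.dist_eq, sub_zero] at this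
    linarith
  obtain ⟨Cφ, hCφ⟩ := (isCompact_Icc (a := (0:ℝ)) (b := T)).exists_bound_of_continuousOn
    hφc.continuousOn
  set Mφ : ℝ := max Cφ 0 with hMφdef
  have hMφ0 : 0 ≤ Mφ := le_max_right _ _
  have hφM : ∀ s, s ∈ Set.Icc (0:ℝ) T → |φ s| ≤ Mφ := by
    intro s hs
    have := hCφ s hs
    rw [Real.norm_eq_abs] at this
    exact le_trans this (le_max_left _ _)
  -- Constants
  set C : ℝ := (M + μ/2) * L₀ + Mφ * T with hCdef
  have hC0 : 0 ≤ C := by positivity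
  refine ⟨Real.exp C, Real.one_le_exp hC0, μ/4, by positivity, ?_⟩
  -- Step 4: lower bound on `∫ a`
  have hIa : ∀ t₀ t : ℝ, t₀ ≤ t →
      μ/2 * (t - t₀) - (M + μ/2) * L₀ ≤ ∫ s in t₀..t, a s := by
    intro t₀ t hle
    rcases le_or_gt L₀ (t - t₀) with h | h
    · have hLpos : 0 < t - t₀ := lt_of_lt_of_le hL₀pos h
      have h1 := hL₀ (t - t₀) h t₀
      rw [show t₀ + (t - t₀) = t by ring] at h1
      have h2 := (abs_lt.mp h1).1
      have h3 : μ/2 < (1 / (t - t₀)) * ∫ s in t₀..t, a s := by linarith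
      rw [one_div, inv_mul_eq_div, lt_div_iff₀ hLpos] at h3
      nlinarith [mul_nonneg (by linarith : (0:ℝ) ≤ M + μ/2) hL₀pos.le]
    · have hmono : ∫ s in t₀..t, (-M : ℝ) ≤ ∫ s in t₀..t, a s := by
        apply intervalIntegral.integral_mono_on hle (intervalIntegrable_const)
          (ha.intervalIntegrable _ _)
        intro x _
        have := haM x
        exact neg_le_of_abs_le this |>.trans_eq rfl |> fun h => by
          have := (abs_le.mp (haM x)).1; linarith
      rw [intervalIntegral.integral_const, smul_eq_mul] at hmono
      have hprod := mul_nonneg (by linarith : (0:ℝ) ≤ μ/2 + M)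
        (by linarith : (0:ℝ) ≤ L₀ - (t - t₀))
      nlinarith
  -- Step 5: lower bound on `∫ φ`
  have hIφ : ∀ t₀ t : ℝ, 0 ≤ t₀ → t₀ ≤ t →
      -(μ/4) * (t - t₀) - Mφ * T ≤ ∫ s in t₀..t, φ s := by
    intro t₀ t ht₀ hle
    rcases le_or_gt t T with hcase | hcase
    · -- whole interval inside [0, T]
      have hmono : ∫ s in t₀..t, (-Mφ : ℝ) ≤ ∫ s in t₀..t, φ s := by
        apply intervalIntegral.integral_mono_on hle (intervalIntegrable_const)
          (hφc.intervalIntegrable _ _)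
        intro x hx
        have hxm : x ∈ Set.Icc (0:ℝ) T := ⟨le_trans ht₀ hx.1, le_trans hx.2 hcase⟩
        have := (abs_le.mp (hφM x hxm)).1
        linarith
      rw [intervalIntegral.integral_const, smul_eq_mul] at hmono
      have h1 : t - t₀ ≤ T := by linarith
      have h2 := mul_le_mul_of_nonneg_left h1 hMφ0
      have h3 : 0 ≤ μ/4 * (t - t₀) := mul_nonneg (by linarith) (by linarith)
      nlinarith
    · rcases le_or_gt T t₀ with hc2 | hc2
      · -- whole interval to the right of T
        have hmono : ∫ s in t₀..t, (-(μ/4) : ℝ) ≤ ∫ s in t₀..t, φ s := by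
          apply intervalIntegral.integral_mono_on hle (intervalIntegrable_const)
            (hφc.intervalIntegrable _ _)
          intro x hx
          have := (abs_le.mp (hT x (le_trans hc2 hx.1))).1
          linarith
        rw [intervalIntegral.integral_const, smul_eq_mul] at hmono
        have : 0 ≤ Mφ * T := mul_nonneg hMφ0 hTnn
        nlinarith
      · -- split at T
        have hsplit : (∫ s in t₀..T, φ s) + (∫ s in T..t, φ s) = ∫ s in t₀..t, φ s :=
          intervalIntegral.integral_add_adjacent_intervals
            (hφc.intervalIntegrable _ _) (hφc.intervalIntegrable _ _)
        have h1 : ∫ s in t₀..T, (-Mφ : ℝ) ≤ ∫ s in t₀..T, φ s := by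
          apply intervalIntegral.integral_mono_on hc2.le (intervalIntegrable_const)
            (hφc.intervalIntegrable _ _)
          intro x hx
          have hxm : x ∈ Set.Icc (0:ℝ) T := ⟨le_trans ht₀ hx.1, hx.2⟩
          have := (abs_le.mp (hφM x hxm)).1
          linarith
        have h2 : ∫ s in T..t, (-(μ/4) : ℝ) ≤ ∫ s in T..t, φ s := by
          apply intervalIntegral.integral_mono_on hcase.le (intervalIntegrable_const)
            (hφc.intervalIntegrable _ _)
          intro x hx
          have := (abs_le.mp (hT x hx.1)).1
          linarith
        rw [intervalIntegral.integral_const, smul_eq_mul] at h1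
        rw [intervalIntegral.integral_const, smul_eq_mul] at h2
        have h3 : Mφ * (T - t₀) ≤ Mφ * T := by nlinarith
        have h4 : μ/4 * (t - T) ≤ μ/4 * (t - t₀) := by nlinarith
        linarith
  -- Step 6: combined integral bound
  have hG : ∀ t₀ t : ℝ, 0 ≤ t₀ → t₀ ≤ t →
      μ/4 * (t - t₀) - C ≤ ∫ s in t₀..t, (a s + φ s) := by
    intro t₀ t ht₀ hle
    rw [intervalIntegral.integral_add (ha.intervalIntegrable _ _)
      (hφc.intervalIntegrable _ _)]
    have h1 := hIa t₀ t hle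
    have h2 := hIφ t₀ t ht₀ hle
    rw [hCdef]
    linarith
  -- Step 7: the ODE comparison argument
  intro v hv t₀ ht₀ hv0 t ht
  set g : ℝ → ℝ := fun s => ∫ u in t₀..s, (a u + φ u) with hgdef
  have hg' : ∀ s : ℝ, HasDerivAt g (a s + φ s) s := by
    intro s
    exact intervalIntegral.integral_hasDerivAt_right
      ((ha.add hφc).intervalIntegrable _ _)
      ((ha.add hφc).stronglyMeasurable.stronglyMeasurableAtFilter)
      ((ha.add hφc).continuousAt)
  set w : ℝ → ℝ := fun s => v s * Real.exp (-(g s)) with hwdef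
  have hw' : ∀ s : ℝ, t₀ ≤ s → HasDerivAt w (c s * Real.exp (-(g s))) s := by
    intro s hs
    have hs0 : (0:ℝ) ≤ s := le_trans ht₀ hs
    have hexp : HasDerivAt (fun u => Real.exp (-(g u)))
        (Real.exp (-(g s)) * (-(a s + φ s))) s := ((hg' s).neg).exp
    have := (hv s hs0).fun_mul hexp
    rw [hwdef]
    refine this.congr_deriv ?_
    ring
  have hmono : MonotoneOn w (Set.Ici t₀) := by
    apply monotoneOn_of_deriv_nonneg (convex_Ici t₀)
    · intro x hx
      exact (hw' x hx).continuousAt.continuousWithinAt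
    · intro x hx
      rw [interior_Ici] at hx
      exact ((hw' x (le_of_lt hx)).differentiableAt).differentiableWithinAt
    · intro x hx
      rw [interior_Ici] at hx
      rw [(hw' x (le_of_lt hx)).deriv]
      have hc := hcpos x (le_trans ht₀ (le_of_lt hx))
      positivity
  have hwt : w t₀ ≤ w t := hmono (Set.self_mem_Ici) (Set.mem_Ici.mpr ht) ht
  have hgt₀ : g t₀ = 0 := intervalIntegral.integral_same
  have hwt₀ : w t₀ = v t₀ := by
    rw [hwdef]; simp [hgt₀]
  have h1le : (1:ℝ) ≤ v t * Real.exp (-(g t)) := by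
    have h0 : (1:ℝ) ≤ w t₀ := by rw [hwt₀]; exact hv0
    exact le_trans h0 hwt
  have hexppos : (0:ℝ) < Real.exp (g t) := Real.exp_pos _
  have hvge : Real.exp (g t) ≤ v t := by
    have := mul_le_mul_of_nonneg_right h1le hexppos.le
    rw [one_mul, mul_assoc, ← Real.exp_add] at this
    simpa using this
  have hgb := hG t₀ t ht₀ ht
  calc (Real.exp C)⁻¹ * Real.exp (μ/4 * (t - t₀))
      = Real.exp (μ/4 * (t - t₀) - C) := by
        rw [← Real.exp_neg, ← Real.exp_add]; ring_nf
    _ ≤ Real.exp (g t) := Real.exp_le_exp.mpr hgb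
    _ ≤ v t := hvge
end

section
/- Let a : ℝ → ℝ be almost periodic with M[a] = 0 and ψ : [0,∞) → ℝ continuous with ψ(t) → 0. Then the upper and lower Bohl exponents of a + ψ are both zero; consequently the equation x' = [a(t)+ψ(t)]x does not have an exponential dichotomy on [0,∞). -/
lemma key_tendsto (a ψ : ℝ → ℝ) (ha : Continuous a) (hμ : HasUniformMean a 0)
    (hψc : Continuous ψ) (hψ : Filter.Tendsto ψ Filter.atTop (nhds 0)) :
    Filter.Tendsto (fun p : ℝ × ℝ => (1 / p.1) * ∫ r in p.2..(p.2 + p.1), a r + ψ r)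
      (Filter.atTop ×ˢ Filter.atTop) (nhds 0) := by
  rw [Metric.tendsto_nhds]
  intro ε hε
  obtain ⟨L₀, hL₀, hμ'⟩ := hμ (ε/2) (by linarith)
  have hψ' : ∀ᶠ t in Filter.atTop, |ψ t| < ε/4 := by
    have := Metric.tendsto_nhds.1 hψ (ε/4) (by linarith)
    simpa [Real.dist_eq] using this
  obtain ⟨c₀, hc₀⟩ := Filter.eventually_atTop.1 hψ'
  have hev : ∀ᶠ p : ℝ × ℝ in Filter.atTop ×ˢ Filter.atTop, L₀ ≤ p.1 ∧ c₀ ≤ p.2 :=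
    (Filter.eventually_ge_atTop L₀).prod_mk (Filter.eventually_ge_atTop c₀)
  filter_upwards [hev] with p hp
  obtain ⟨hL, hc⟩ := hp
  set L := p.1 with hLdef
  set c := p.2 with hcdef
  have hLpos : 0 < L := lt_of_lt_of_le hL₀ hL
  have hInt : (∫ r in c..(c+L), a r + ψ r)
      = (∫ r in c..(c+L), a r) + ∫ r in c..(c+L), ψ r :=
    intervalIntegral.integral_add (ha.intervalIntegrable _ _) (hψc.intervalIntegrable _ _)
  have hψint : |∫ r in c..(c+L), ψ r| ≤ (ε/4) * L := by
    have h := intervalIntegral.norm_integral_le_of_norm_le_const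
      (C := ε/4) (f := ψ) (a := c) (b := c+L) ?_
    · rw [add_sub_cancel_left, abs_of_pos hLpos] at h
      exact h
    · intro x hx
      rw [Set.uIoc_of_le (by linarith)] at hx
      exact (hc₀ x (le_trans hc hx.1.le)).le
  have ha' : |1/L * ∫ r in c..(c+L), a r| < ε/2 := by
    have := hμ' L hL c
    simpa using this
  rw [Real.dist_eq, sub_zero]
  calc |1/L * ∫ r in c..(c+L), a r + ψ r|
      = |1/L * (∫ r in c..(c+L), a r) + 1/L * ∫ r in c..(c+L), ψ r| := by
        rw [hInt]; ring_nf
    _ ≤ |1/L * ∫ r in c..(c+L), a r| + |1/L * ∫ r in c..(c+L), ψ r| := abs_add_le _ _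
    _ < ε/2 + ε/4 := by
        apply add_lt_add_of_lt_of_le ha'
        rw [abs_mul, abs_of_pos (by positivity : (0:ℝ) < 1/L)]
        calc 1/L * |∫ r in c..(c+L), ψ r| ≤ 1/L * ((ε/4)*L) :=
              mul_le_mul_of_nonneg_left hψint (by positivity)
          _ = ε/4 := by field_simp
    _ < ε := by linarith

/-- If `M[a] = 0` and `ψ → 0`, the Bohl exponents of `a + ψ` are both zero and
`x' = [a(t)+ψ(t)]x` has no exponential dichotomy on `[0,∞)`. -/
theorem stmt_15 (a ψ : ℝ → ℝ) (ha : Continuous a) (hap : AlmostPeriodic a)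
    (hμ : HasUniformMean a 0)
    (hψc : Continuous ψ) (hψ : Filter.Tendsto ψ Filter.atTop (nhds 0)) :
    Filter.liminf (fun p : ℝ × ℝ => (1 / p.1) * ∫ r in p.2..(p.2 + p.1), a r + ψ r)
      (Filter.atTop ×ˢ Filter.atTop) = 0 ∧
    Filter.limsup (fun p : ℝ × ℝ => (1 / p.1) * ∫ r in p.2..(p.2 + p.1), a r + ψ r)
      (Filter.atTop ×ˢ Filter.atTop) = 0 ∧
    ¬ ∃ C ≥ (0:ℝ), ∃ α > (0:ℝ), ∀ s t : ℝ, 0 ≤ s → s ≤ t →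
      |∫ r in s..t, a r + ψ r| ≥ α * (t - s) - C := by
  have key := key_tendsto a ψ ha hμ hψc hψ
  refine ⟨key.liminf_eq, key.limsup_eq, ?_⟩
  rintro ⟨C, hC, α, hα, hdich⟩
  have h2 := Metric.tendsto_nhds.1 key (α/2) (by linarith)
  have h3 : ∀ᶠ p : ℝ × ℝ in Filter.atTop ×ˢ Filter.atTop,
      (max 1 (2*C/α)) ≤ p.1 ∧ (0:ℝ) ≤ p.2 :=
    (Filter.eventually_ge_atTop _).prod_mk (Filter.eventually_ge_atTop _)
  obtain ⟨p, hp1, hp2, hp3⟩ := (h2.and h3).exists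
  set L := p.1
  set s := p.2
  have hLpos : (0:ℝ) < L := lt_of_lt_of_le one_pos (le_trans (le_max_left _ _) hp2)
  have hL2 : 2*C/α ≤ L := le_trans (le_max_right _ _) hp2
  have hαL : 2*C ≤ α * L := by
    rw [div_le_iff₀ hα] at hL2; linarith [hL2]
  have hd := hdich s (s + L) hp3 (by linarith)
  have hI : |∫ r in s..(s+L), a r + ψ r| < α/2 * L := by
    rw [Real.dist_eq, sub_zero, abs_mul, abs_of_pos (by positivity : (0:ℝ) < 1/p.1)] at hp1
    have := (div_lt_iff₀ hLpos).1 (by simpa [one_div, div_eq_inv_mul] using hp1)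
    linarith [this]
  have : α * (s + L - s) - C = α * L - C := by ring
  rw [this] at hd
  linarith
end

section
/- Let a : ℝ → ℝ be almost periodic with M[a] = 0, let ψ : [0,∞) → ℝ be continuous with ψ(t) → 0, and let b : ℝ → (0,∞) be bounded continuous with liminf_{t→∞} b(t) > 0. Then every solution u of u' = [a(t)+ψ(t)]u + b(t) with u(0) > 0 satisfies limsup_{t→∞} u(t) = +∞. -/
/-- Positivity of solutions of `u' = p u + b` with `b > 0` and `u 0 > 0`. -/
lemma stmt16_upos (a ψ b u : ℝ → ℝ) (ha : Continuous a) (hψc : Continuous ψ)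
    (hbpos : ∀ t, 0 < b t)
    (hu : ∀ t, 0 ≤ t → HasDerivAt u ((a t + ψ t) * u t + b t) t)
    (hu0 : 0 < u 0) : ∀ t, 0 ≤ t → 0 < u t := by
  set p : ℝ → ℝ := fun t => a t + ψ t with hp
  have hpc : Continuous p := ha.add hψc
  set P : ℝ → ℝ := fun t => ∫ x in (0:ℝ)..t, p x with hPdef
  have hP : ∀ t : ℝ, HasDerivAt P (p t) t := fun t =>
    intervalIntegral.integral_hasDerivAt_right (hpc.intervalIntegrable _ _)
      (hpc.stronglyMeasurable.stronglyMeasurableAtFilter) hpc.continuousAt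
  set v : ℝ → ℝ := fun t => u t * Real.exp (-P t) with hvdef
  have hv : ∀ t : ℝ, 0 ≤ t → HasDerivAt v (b t * Real.exp (-P t)) t := by
    intro t ht
    have h1 : HasDerivAt (fun s => Real.exp (-P s)) (Real.exp (-P t) * (-(p t))) t :=
      ((hP t).neg).exp
    have : HasDerivAt v (((a t + ψ t) * u t + b t) * Real.exp (-P t) + u t * (Real.exp (-P t) * -p t)) t :=
      (hu t ht).mul h1
    convert this using 1
    simp only [hp]
    ring
  have hmono : StrictMonoOn v (Set.Ici (0:ℝ)) := by
    apply strictMonoOn_of_deriv_pos (convex_Ici 0)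
    · intro x hx
      exact ((hv x hx).continuousAt).continuousWithinAt
    · intro x hx
      rw [interior_Ici] at hx
      rw [(hv x (le_of_lt hx)).deriv]
      exact mul_pos (hbpos x) (Real.exp_pos _)
  intro t ht
  rcases eq_or_lt_of_le ht with h | h
  · rwa [← h]
  · have h0 : v 0 < v t := hmono Set.self_mem_Ici (le_of_lt h) h
    have hv0 : v 0 = u 0 := by
      simp [hvdef, hPdef, intervalIntegral.integral_same]
    rw [hv0] at h0
    have h0' : u 0 < u t * Real.exp (-P t) := h0
    nlinarith [Real.exp_pos (-P t), hu0]

/-- If `M[a] = 0`, `ψ → 0`, and `b` is positive, bounded, with liminf at infinity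
positive, then every positive solution of `u' = [a+ψ]u + b` is upper unbounded. -/
theorem stmt_16 (a ψ b : ℝ → ℝ) (ha : Continuous a) (hap : AlmostPeriodic a)
    (hμ : HasUniformMean a 0)
    (hψc : Continuous ψ) (hψ : Filter.Tendsto ψ Filter.atTop (nhds 0))
    (hbc : Continuous b) (hbpos : ∀ t, 0 < b t) (B : ℝ) (hB : ∀ t, b t ≤ B)
    (hbinf : 0 < Filter.liminf b Filter.atTop)
    (u : ℝ → ℝ) (hu : ∀ t, 0 ≤ t → HasDerivAt u ((a t + ψ t) * u t + b t) t)
    (hu0 : 0 < u 0) :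
    ∀ M : ℝ, ∃ᶠ t in Filter.atTop, M < u t := by
  have upos : ∀ t, 0 ≤ t → 0 < u t := stmt16_upos a ψ b u ha hψc hbpos hu hu0
  intro M
  by_contra hcon
  rw [Filter.not_frequently] at hcon
  simp only [not_lt] at hcon
  rw [Filter.eventually_atTop] at hcon
  obtain ⟨T₀, hT₀⟩ := hcon
  -- β : lower bound for b at infinity
  set β := Filter.liminf b Filter.atTop with hβdef
  have hβ2 : ∀ᶠ t in Filter.atTop, β / 2 < b t :=
    Filter.eventually_lt_of_lt_liminf (by rw [← hβdef]; linarith)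
      (Filter.isBoundedUnder_of ⟨0, fun t => (hbpos t).le⟩)
  rw [Filter.eventually_atTop] at hβ2
  obtain ⟨Tb, hTb⟩ := hβ2
  -- M is positive
  have hMpos : 0 < M := by
    have h1 := upos (max T₀ 0) (le_max_right _ _)
    have h2 := hT₀ (max T₀ 0) (le_max_left _ _)
    linarith
  set ε := β / (8 * M) with hεdef
  have hεpos : 0 < ε := by positivity
  obtain ⟨L₀, hL₀pos, hL₀⟩ := hμ ε hεpos
  -- ψ small beyond Tψ
  have hψs : ∀ᶠ t in Filter.atTop, |ψ t| < ε := by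
    have := Metric.tendsto_atTop.mp hψ ε hεpos
    obtain ⟨N, hN⟩ := this
    rw [Filter.eventually_atTop]
    exact ⟨N, fun n hn => by simpa [Real.dist_eq] using hN n hn⟩
  rw [Filter.eventually_atTop] at hψs
  obtain ⟨Tψ, hTψ⟩ := hψs
  set T := max (max T₀ Tψ) (max Tb 0) with hTdef
  have hT0 : (0:ℝ) ≤ T := le_trans (le_max_right Tb 0) (le_max_right _ _)
  have huT : 0 < u T := upos T hT0
  set D := Real.log M - Real.log (u T) with hDdef
  set L := max L₀ ((4 * M / β) * D + 1) with hLdef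
  have hLL₀ : L₀ ≤ L := le_max_left _ _
  have hLpos : 0 < L := lt_of_lt_of_le hL₀pos hLL₀
  -- The pointwise derivative of log u
  set g : ℝ → ℝ := fun x => ((a x + ψ x) * u x + b x) / u x with hgdef
  have hIcc : Set.Icc T (T + L) ⊆ Set.Ici (0:ℝ) := fun x hx => le_trans hT0 hx.1
  have hucont : ContinuousOn u (Set.Ici (0:ℝ)) := fun x hx =>
    ((hu x hx).continuousAt).continuousWithinAt
  have hgc : ContinuousOn g (Set.Icc T (T + L)) := by
    apply ContinuousOn.div
    · exact (((ha.continuousOn.add hψc.continuousOn).mul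
        (hucont.mono hIcc)).add hbc.continuousOn)
    · exact hucont.mono hIcc
    · intro x hx; exact ne_of_gt (upos x (hIcc hx))
  have hTL : T ≤ T + L := by linarith
  have huIcc : Set.uIcc T (T + L) = Set.Icc T (T + L) := Set.uIcc_of_le hTL
  have hgint : IntervalIntegrable g MeasureTheory.volume T (T + L) := by
    apply ContinuousOn.intervalIntegrable
    rwa [huIcc]
  -- FTC for log u
  have hftc : ∫ x in T..(T + L), g x = Real.log (u (T + L)) - Real.log (u T) := by
    exact intervalIntegral.integral_eq_sub_of_hasDerivAt
      (f := fun y => Real.log (u y))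
      (fun x hx => by
        rw [huIcc] at hx
        exact (hu x (hIcc hx)).log (ne_of_gt (upos x (hIcc hx)))) hgint
  -- lower bound the integrand
  set C := β / (2 * M) - ε with hCdef
  have hlow : ∀ x ∈ Set.Icc T (T + L), a x + C ≤ g x := by
    intro x hx
    have hx0 : (0:ℝ) ≤ x := hIcc hx
    have hxT₀ : T₀ ≤ x := le_trans (le_trans (le_max_left _ _) (le_max_left _ _)) hx.1
    have hxTψ : Tψ ≤ x := le_trans (le_trans (le_max_right _ _) (le_max_left _ _)) hx.1
    have hxTb : Tb ≤ x := le_trans (le_trans (le_max_left _ _) (le_max_right _ _)) hx.1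
    have hux : 0 < u x := upos x hx0
    have huxM : u x ≤ M := hT₀ x hxT₀
    have hbx : β / 2 < b x := hTb x hxTb
    have hψx : -ε < ψ x := by
      have := hTψ x hxTψ
      have := abs_lt.mp this
      linarith [this.1]
    have hdiv : β / 2 / M ≤ b x / u x := div_le_div₀ (hbpos x).le hbx.le hux huxM
    have hgx : g x = a x + ψ x + b x / u x := by
      rw [hgdef]
      field_simp
    rw [hgx, hCdef]
    have : β / (2 * M) = β / 2 / M := by ring
    rw [this]
    linarith
  -- integral lower bound
  have hintlow : ∫ x in T..(T + L), (a x + C) ≤ ∫ x in T..(T + L), g x := by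
    apply intervalIntegral.integral_mono_on hTL _ hgint hlow
    exact ((ha.continuousOn.add continuousOn_const).intervalIntegrable)
  have hsplit : ∫ x in T..(T + L), (a x + C) = (∫ x in T..(T + L), a x) + L * C := by
    rw [intervalIntegral.integral_add (ha.intervalIntegrable _ _)
      (intervalIntegrable_const), intervalIntegral.integral_const]
    simp
  -- mean zero bound
  have hmean : -ε * L < ∫ x in T..(T + L), a x := by
    have := hL₀ L hLL₀ T
    rw [sub_zero] at this
    have h1 : -ε < 1 / L * ∫ s in T..(T + L), a s := by
      have := abs_lt.mp this
      linarith [this.1]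
    rw [one_div, inv_mul_eq_div] at h1
    exact (lt_div_iff₀ hLpos).mp h1
  -- upper bound via boundedness
  have hub : Real.log (u (T + L)) ≤ Real.log M := by
    apply Real.log_le_log (upos _ (by linarith))
    apply hT₀
    have : T₀ ≤ T := le_trans (le_max_left _ _) (le_max_left _ _)
    linarith
  -- final contradiction
  have hkey : D < β / (4 * M) * L := by
    have h1 : (4 * M / β) * D + 1 ≤ L := le_max_right _ _
    have hβpos : 0 < β := hbinf
    have h2 : β / (4 * M) * ((4 * M / β) * D + 1) = D + β / (4 * M) := by
      field_simp
    have h3 : β / (4 * M) * ((4 * M / β) * D + 1) ≤ β / (4 * M) * L :=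
      mul_le_mul_of_nonneg_left h1 (by positivity)
    have h4 : (0:ℝ) < β / (4 * M) := by positivity
    linarith
  have hC4 : L * C = ε * L + β / (4 * M) * L := by
    rw [hCdef, hεdef]
    ring
  -- combine everything
  have : Real.log (u (T + L)) - Real.log (u T) > D := by
    rw [← hftc] at *
    calc ∫ x in T..(T + L), g x ≥ (∫ x in T..(T + L), a x) + L * C := by
          rw [← hsplit]; exact hintlow
      _ > -ε * L + (ε * L + β / (4 * M) * L) := by rw [← hC4]; linarith
      _ = β / (4 * M) * L := by ring
      _ > D := hkey
  rw [hDdef] at this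
  linarith
end

section
/- Let a, b : ℝ → ℝ be continuous T-periodic functions with mean of a equal to zero and b(t) ≥ b₀ > 0, and let ψ : [0,∞) → ℝ be continuous with ψ(t) → 0. Then every solution u of u' = [a(t)+ψ(t)]u + b(t) with u(0) ≥ 0 satisfies u(t) → +∞ as t → ∞. -/
/-- Periodic case: if `a` is `T`-periodic with zero mean, `b` is `T`-periodic with
`b ≥ b₀ > 0`, and `ψ → 0`, then every solution of `u' = [a+ψ]u + b` with `u(0) ≥ 0`
tends to `+∞`. -/
theorem stmt_17 (a b ψ : ℝ → ℝ) (T : ℝ) (hT : 0 < T)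
    (ha : Continuous a) (haper : Function.Periodic a T)
    (hmean : (∫ s in (0:ℝ)..T, a s) = 0)
    (hb : Continuous b) (hbper : Function.Periodic b T)
    (b₀ : ℝ) (hb₀ : 0 < b₀) (hbge : ∀ t, b₀ ≤ b t)
    (hψc : Continuous ψ) (hψ : Filter.Tendsto ψ Filter.atTop (nhds 0))
    (u : ℝ → ℝ) (hu : ∀ t, 0 ≤ t → HasDerivAt u ((a t + ψ t) * u t + b t) t)
    (hu0 : 0 ≤ u 0) :
    Filter.Tendsto u Filter.atTop Filter.atTop := by
  set c : ℝ → ℝ := fun t => a t + ψ t with hc_def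
  have hc : Continuous c := ha.add hψc
  set A : ℝ → ℝ := fun t => ∫ s in (0:ℝ)..t, c s with hA_def
  have hA : ∀ t, HasDerivAt A (c t) t := fun t =>
    intervalIntegral.integral_hasDerivAt_right (hc.intervalIntegrable _ _)
      (hc.stronglyMeasurableAtFilter _ _) hc.continuousAt
  have hAcont : Continuous A := continuous_iff_continuousAt.2 fun t => (hA t).continuousAt
  -- M : the total variation bound
  set M : ℝ := ∫ s in (0:ℝ)..T, |a s| with hM_def
  have habs_per : Function.Periodic (fun x => |a x|) T := fun x => by simp [haper x]
  have habs_cont : Continuous fun x => |a x| := ha.abs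
  have hint_a : ∀ t₁ t₂ : ℝ, IntervalIntegrable a MeasureTheory.volume t₁ t₂ :=
    fun t₁ t₂ => ha.intervalIntegrable t₁ t₂
  -- Key periodic lemma : ∫_s^t a ≥ -M for s ≤ t
  have keyA : ∀ s t : ℝ, s ≤ t → -M ≤ ∫ ξ in s..t, a ξ := by
    intro s t hst
    set n : ℤ := ⌈(t - s) / T⌉ with hn_def
    have h1 : t ≤ s + n * T := by
      have := Int.le_ceil ((t - s) / T)
      rw [div_le_iff₀ hT] at this
      linarith
    have h2 : s + n * T ≤ t + T := by
      have := Int.ceil_lt_add_one ((t - s) / T)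
      have h' : ((n : ℝ)) < (t - s) / T + 1 := by exact_mod_cast this
      have := (lt_div_iff₀ hT).mp (by linarith : ((n : ℝ)) - 1 < (t - s) / T)
      nlinarith
    have hsplit : (∫ ξ in s..(s + n * T), a ξ) =
        (∫ ξ in s..t, a ξ) + ∫ ξ in t..(s + n * T), a ξ :=
      (intervalIntegral.integral_add_adjacent_intervals (hint_a s t) (hint_a t _)).symm
    have hzero : (∫ ξ in s..(s + n * T), a ξ) = 0 := by
      have := haper.intervalIntegral_add_zsmul_eq n s hint_a
      have h0 : (∫ x in s..(s + T), a x) = 0 := by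
        rw [haper.intervalIntegral_add_eq s 0]; simpa using hmean
      simp only [zsmul_eq_mul] at this
      rw [h0] at this
      simpa using this
    have hle : (∫ ξ in t..(s + n * T), a ξ) ≤ M := by
      have step1 : (∫ ξ in t..(s + n * T), a ξ) ≤ ∫ ξ in t..(s + n * T), |a ξ| := by
        apply intervalIntegral.integral_mono_on h1 (hint_a _ _)
          (habs_cont.intervalIntegrable _ _)
        intro x _; exact le_abs_self _
      have step2 : (∫ ξ in t..(s + n * T), |a ξ|) ≤ ∫ ξ in t..(t + T), |a ξ| := by
        have hadd : (∫ ξ in t..(t + T), |a ξ|) =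
            (∫ ξ in t..(s + n * T), |a ξ|) + ∫ ξ in (s + n * T)..(t + T), |a ξ| :=
          (intervalIntegral.integral_add_adjacent_intervals
            (habs_cont.intervalIntegrable _ _) (habs_cont.intervalIntegrable _ _)).symm
        have hpos : 0 ≤ ∫ ξ in (s + n * T)..(t + T), |a ξ| :=
          intervalIntegral.integral_nonneg h2 (fun x _ => abs_nonneg _)
        linarith
      have step3 : (∫ ξ in t..(t + T), |a ξ|) = M := by
        rw [habs_per.intervalIntegral_add_eq t 0]; simp [hM_def]
      linarith
    have : (∫ ξ in s..t, a ξ) = -(∫ ξ in t..(s + n * T), a ξ) := by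
      rw [hsplit] at hzero; linarith
    rw [this]; linarith
  -- the function w = exp(-A) * u
  set w : ℝ → ℝ := fun t => Real.exp (-A t) * u t with hw_def
  have hw : ∀ t, 0 ≤ t → HasDerivAt w (Real.exp (-A t) * b t) t := by
    intro t ht
    have h1 : HasDerivAt (fun t => Real.exp (-A t)) (Real.exp (-A t) * (-(c t))) t :=
      (hA t).neg.exp
    have := h1.mul (hu t ht)
    convert this using 1
    case e'_9 => simp only [hc_def]; ring
    all_goals rfl
  have hwint : ∀ s t : ℝ, 0 ≤ s → s ≤ t →
      w t - w s = ∫ ξ in s..t, Real.exp (-A ξ) * b ξ := by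
    intro s t hs hst
    rw [intervalIntegral.integral_eq_sub_of_hasDerivAt]
    · intro x hx
      rw [Set.uIcc_of_le hst] at hx
      exact hw x (le_trans hs hx.1)
    · exact (((hAcont.neg).rexp).mul hb).intervalIntegrable _ _
  have hw0 : w 0 = u 0 := by simp [hw_def, hA_def]
  have hwnonneg : ∀ s : ℝ, 0 ≤ s → 0 ≤ w s := by
    intro s hs
    have h := hwint 0 s le_rfl hs
    have hpos : 0 ≤ ∫ ξ in (0:ℝ)..s, Real.exp (-A ξ) * b ξ :=
      intervalIntegral.integral_nonneg hs
        (fun x _ => mul_nonneg (Real.exp_nonneg _) (le_trans hb₀.le (hbge x)))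
    rw [hw0] at h; linarith
  -- key lower bound for u
  have key : ∀ s t : ℝ, 0 ≤ s → s ≤ t →
      (∫ ξ in s..t, Real.exp (A t - A ξ) * b ξ) ≤ u t := by
    intro s t hs hst
    have hut : u t = Real.exp (A t) * w t := by
      simp only [hw_def]
      rw [← mul_assoc, ← Real.exp_add]
      simp
    have h := hwint s t hs hst
    have hws := hwnonneg s hs
    have hpull : (∫ ξ in s..t, Real.exp (A t - A ξ) * b ξ) =
        Real.exp (A t) * ∫ ξ in s..t, Real.exp (-A ξ) * b ξ := by
      rw [← intervalIntegral.integral_const_mul]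
      congr 1; ext ξ; rw [Real.exp_sub]
      rw [Real.exp_neg]
      field_simp
    rw [hpull, hut]
    have : w t = w s + ∫ ξ in s..t, Real.exp (-A ξ) * b ξ := by linarith
    rw [this, mul_add]
    nlinarith [Real.exp_pos (A t), mul_nonneg (Real.exp_pos (A t)).le hws]
  -- main argument
  rw [Filter.tendsto_atTop]
  intro K
  set C : ℝ := Real.exp (-(M + 1)) * b₀ with hC_def
  have hC : 0 < C := mul_pos (Real.exp_pos _) hb₀
  set L : ℝ := max 1 ((K + 1) / C) with hL_def
  have hL1 : (1:ℝ) ≤ L := le_max_left _ _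
  have hL0 : 0 < L := lt_of_lt_of_le one_pos hL1
  have hLC : K + 1 ≤ L * C := by
    have : (K + 1) / C ≤ L := le_max_right _ _
    calc K + 1 = ((K + 1) / C) * C := by field_simp
    _ ≤ L * C := by nlinarith
  set ε : ℝ := 1 / L with hε_def
  have hε : 0 < ε := by positivity
  obtain ⟨N, hN⟩ := (Metric.tendsto_atTop.mp hψ ε hε)
  set τ : ℝ := max N 0 with hτ_def
  have hψ_small : ∀ x : ℝ, τ ≤ x → -ε ≤ ψ x := by
    intro x hx
    have := hN x (le_trans (le_max_left N 0) hx)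
    rw [Real.dist_eq, sub_zero] at this
    have := abs_lt.mp this
    linarith [this.1]
  filter_upwards [Filter.eventually_ge_atTop (τ + L)] with t ht
  set s : ℝ := t - L with hs_def
  have hsτ : τ ≤ s := by simp [hs_def]; linarith
  have hs0 : 0 ≤ s := le_trans (le_max_right N 0) hsτ
  have hst : s ≤ t := by simp [hs_def]; linarith
  -- pointwise bound on [s, t]
  have hpt : ∀ ξ ∈ Set.Icc s t, C ≤ Real.exp (A t - A ξ) * b ξ := by
    intro ξ hξ
    have hAdiff : A t - A ξ = ∫ x in ξ..t, c x := by
      simp only [hA_def]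
      exact (intervalIntegral.integral_interval_sub_left
        (μ := MeasureTheory.volume) (hc.intervalIntegrable 0 t)
        (hc.intervalIntegrable 0 ξ))
    have hsplitc : (∫ x in ξ..t, c x) = (∫ x in ξ..t, a x) + ∫ x in ξ..t, ψ x := by
      simp only [hc_def]
      rw [intervalIntegral.integral_add (hint_a _ _) (hψc.intervalIntegrable _ _)]
    have hψint : -((t - ξ) * ε) ≤ ∫ x in ξ..t, ψ x := by
      have h := intervalIntegral.integral_mono_on (f := fun _ => -ε) (g := ψ)
          (μ := MeasureTheory.volume) hξ.2
          intervalIntegrable_const (hψc.intervalIntegrable ξ t)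
          (fun x hx => hψ_small x (le_trans hsτ (le_trans hξ.1 hx.1)))
      rw [intervalIntegral.integral_const, smul_eq_mul, mul_neg] at h
      exact h
    have haint : -M ≤ ∫ x in ξ..t, a x := keyA ξ t hξ.2
    have htξ : t - ξ ≤ L := by
      have := hξ.1; simp only [hs_def] at this; linarith
    have hεbound : (t - ξ) * ε ≤ 1 := by
      have h1 : (t - ξ) * ε ≤ L * ε := mul_le_mul_of_nonneg_right htξ hε.le
      have h2 : L * ε = 1 := by
        rw [hε_def]; field_simp
      linarith
    have hAge : -(M + 1) ≤ A t - A ξ := by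
      rw [hAdiff, hsplitc]; linarith
    have hexp : Real.exp (-(M + 1)) ≤ Real.exp (A t - A ξ) := Real.exp_le_exp.mpr hAge
    calc C = Real.exp (-(M + 1)) * b₀ := rfl
    _ ≤ Real.exp (A t - A ξ) * b ξ :=
        mul_le_mul hexp (hbge ξ) hb₀.le (Real.exp_pos _).le
  have hmono : (∫ ξ in s..t, (C : ℝ)) ≤ ∫ ξ in s..t, Real.exp (A t - A ξ) * b ξ := by
    apply intervalIntegral.integral_mono_on hst intervalIntegrable_const
    · exact (((continuous_const.sub hAcont).rexp).mul hb).intervalIntegrable _ _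
    · exact hpt
  have hconst : (∫ ξ in s..t, (C : ℝ)) = (t - s) * C := by
    rw [intervalIntegral.integral_const, smul_eq_mul]
  have hts : t - s = L := by simp [hs_def]
  have := key s t hs0 hst
  have : L * C ≤ u t := by
    rw [← hts, ← hconst]; linarith
  linarith
end

section
/- Consider the n-dimensional hierarchical competition system p_i' = c_i(t)p_i(h − Σ_{j≤i} p_j) − m_i(t)p_i − Σ_{j<i} c_j(t)p_i p_j (i = 1,…,n), where c_i, m_i : ℝ → (0,∞) are bounded continuous and h ∈ (0,1). If a solution p satisfies p_i(t₀) > 0 for all i and Σ_{i=1}^n p_i(t₀) < h, then for all t ≥ t₀ one has p_i(t) > 0 for all i and Σ_{i=1}^n p_i(t) < h. -/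
/-- Invariance of the region `{p_i > 0, Σ p_i < h}` for the hierarchical
metapopulation competition system. -/
theorem stmt_18 (n : ℕ) (c m : Fin n → ℝ → ℝ) (h : ℝ)
    (hc : ∀ i, Continuous (c i)) (hm : ∀ i, Continuous (m i))
    (hcpos : ∀ i t, 0 < c i t) (hmpos : ∀ i t, 0 < m i t)
    (hcb : ∀ i, ∃ M, ∀ t, c i t ≤ M) (hmb : ∀ i, ∃ M, ∀ t, m i t ≤ M)
    (hh : h ∈ Set.Ioo (0:ℝ) 1)
    (p : ℝ → Fin n → ℝ)
    (hp : ∀ i t, HasDerivAt (fun τ => p τ i)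
      (c i t * p t i * (h - ∑ j ∈ Finset.Iic i, p t j) - m i t * p t i -
        ∑ j ∈ Finset.Iio i, c j t * p t i * p t j) t)
    (t₀ : ℝ) (hpos : ∀ i, 0 < p t₀ i) (hsum : ∑ i, p t₀ i < h) :
    ∀ t, t₀ ≤ t → (∀ i, 0 < p t i) ∧ ∑ i, p t i < h := by
  classical
  -- continuity of the components
  have hcont_p : ∀ i, Continuous (fun t => p t i) := by
    intro i
    have : Differentiable ℝ (fun t => p t i) := fun t => (hp i t).differentiableAt
    exact this.continuous
  -- Positivity of every component, for every time (not only `t ≥ t₀`).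
  have key_pos : ∀ t i, 0 < p t i := by
    intro t i
    set a : ℝ → ℝ := fun s =>
      c i s * (h - ∑ j ∈ Finset.Iic i, p s j) - m i s -
        ∑ j ∈ Finset.Iio i, c j s * p s j with ha
    have hacont : Continuous a := by
      apply Continuous.sub
      · exact ((hc i).mul (continuous_const.sub
          (continuous_finset_sum _ fun j _ => hcont_p j))).sub (hm i)
      · exact continuous_finset_sum _ fun j _ => (hc j).mul (hcont_p j)
    set A : ℝ → ℝ := fun s => ∫ x in t₀..s, a x with hA
    have hAderiv : ∀ s, HasDerivAt A (a s) s := by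
      intro s
      exact (intervalIntegral.integral_hasStrictDerivAt_right
        (hacont.intervalIntegrable _ _)
        (hacont.stronglyMeasurableAtFilter _ _)
        hacont.continuousAt).hasDerivAt
    set g : ℝ → ℝ := fun s => p s i * Real.exp (-(A s)) with hg
    have hgderiv : ∀ s, HasDerivAt g 0 s := by
      intro s
      have h1 : HasDerivAt (fun τ => p τ i) (p s i * a s) s := by
        convert hp i s using 1
        rw [ha]
        simp only []
        rw [mul_sub, mul_sub, Finset.mul_sum]
        congr 1
        · ring
        · exact Finset.sum_congr rfl fun j _ => by ring
      have h2 : HasDerivAt (fun s => Real.exp (-(A s)))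
          (Real.exp (-(A s)) * -(a s)) s := ((hAderiv s).neg).exp
      have : HasDerivAt g (p s i * a s * Real.exp (-(A s)) + p s i * (Real.exp (-(A s)) * -(a s))) s := h1.fun_mul h2
      convert this using 1
      ring
    have hgdiff : Differentiable ℝ g := fun s => (hgderiv s).differentiableAt
    have hgconst : g t = g t₀ :=
      is_const_of_deriv_eq_zero hgdiff (fun s => (hgderiv s).deriv) t t₀
    have hgt₀ : g t₀ = p t₀ i := by
      simp [hg, hA, intervalIntegral.integral_same]
    have hgt : p t i * Real.exp (-(A t)) = p t₀ i := by
      rw [← hgt₀, ← hgconst]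
    nlinarith [Real.exp_pos (-(A t)), hpos i, hgt]
  -- the sum
  set u : ℝ → ℝ := fun s => ∑ i, p s i with hu
  have hucont : Continuous u := continuous_finset_sum _ fun i _ => hcont_p i
  set F : Fin n → ℝ → ℝ := fun i t =>
    c i t * p t i * (h - ∑ j ∈ Finset.Iic i, p t j) - m i t * p t i -
      ∑ j ∈ Finset.Iio i, c j t * p t i * p t j with hF
  have huderiv : ∀ s, HasDerivAt u (∑ i, F i s) s := by
    intro s
    exact HasDerivAt.fun_sum fun i _ => hp i s
  -- derivative of the sum at a point where it equals h
  have key : ∀ s, u s = h → (∑ i, F i s) = -(∑ i, m i s * p s i) := by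
    intro s hs
    have hsplit : ∀ i : Fin n,
        h - ∑ j ∈ Finset.Iic i, p s j = ∑ j ∈ Finset.Ioi i, p s j := by
      intro i
      have hunion : Finset.Iic i ∪ Finset.Ioi i = (Finset.univ : Finset (Fin n)) := by
        ext j; simp [Finset.mem_Iic, Finset.mem_Ioi, le_or_gt]
      have hdisj : Disjoint (Finset.Iic i) (Finset.Ioi i) := by
        rw [Finset.disjoint_left]
        intro j hj hj2
        exact absurd (Finset.mem_Ioi.1 hj2) (not_lt.2 (Finset.mem_Iic.1 hj))
      have : ∑ j ∈ Finset.Iic i, p s j + ∑ j ∈ Finset.Ioi i, p s j = ∑ j, p s j := by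
        rw [← Finset.sum_union hdisj, hunion]
      have hsv : (∑ j, p s j) = h := hs
      linarith
    have hswap : (∑ i, ∑ j ∈ Finset.Ioi i, c i s * p s i * p s j)
        = ∑ i, ∑ j ∈ Finset.Iio i, c j s * p s i * p s j := by
      rw [Finset.sum_comm' (s' := fun j : Fin n => Finset.Iio j)
        (t' := (Finset.univ : Finset (Fin n)))
        (fun x y => by simp [Finset.mem_Ioi, Finset.mem_Iio])]
      exact Finset.sum_congr rfl fun i _ => Finset.sum_congr rfl fun j _ => by ring
    calc (∑ i, F i s)
        = (∑ i, (c i s * p s i * ∑ j ∈ Finset.Ioi i, p s j))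
          - (∑ i, m i s * p s i)
          - ∑ i, ∑ j ∈ Finset.Iio i, c j s * p s i * p s j := by
          rw [← Finset.sum_sub_distrib, ← Finset.sum_sub_distrib]
          exact Finset.sum_congr rfl fun i _ => by simp only [hF]; rw [hsplit i]
      _ = (∑ i, ∑ j ∈ Finset.Ioi i, c i s * p s i * p s j)
          - (∑ i, m i s * p s i)
          - ∑ i, ∑ j ∈ Finset.Iio i, c j s * p s i * p s j := by
          congr 1; congr 1
          exact Finset.sum_congr rfl fun i _ => Finset.mul_sum _ _ _
      _ = -(∑ i, m i s * p s i) := by rw [hswap]; ring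
  -- main invariance argument
  intro t ht
  refine ⟨fun i => key_pos t i, ?_⟩
  rcases Nat.eq_zero_or_pos n with hn | hn
  · subst hn; simpa using hh.1
  by_contra hge
  push_neg at hge
  -- `hge : h ≤ u t`
  set S : Set ℝ := Set.Icc t₀ t ∩ u ⁻¹' {h} with hS
  have hSne : S.Nonempty := by
    have : h ∈ Set.Icc (u t₀) (u t) := ⟨le_of_lt hsum, hge⟩
    obtain ⟨s₁, hs₁mem, hs₁⟩ := intermediate_value_Icc ht hucont.continuousOn this
    exact ⟨s₁, hs₁mem, hs₁⟩
  have hSclosed : IsClosed S :=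
    isClosed_Icc.inter (isClosed_eq hucont continuous_const)
  have hSbdd : BddBelow S := ⟨t₀, fun s hs => hs.1.1⟩
  set t₁ : ℝ := sInf S with ht₁
  have ht₁mem : t₁ ∈ S := hSclosed.csInf_mem hSne hSbdd
  have ht₁eq : u t₁ = h := ht₁mem.2
  have ht₀t₁ : t₀ < t₁ := by
    rcases lt_or_eq_of_le ht₁mem.1.1 with h' | h'
    · exact h'
    · exfalso; rw [← h'] at ht₁eq; exact absurd ht₁eq (ne_of_lt hsum)
  have hlt : ∀ s ∈ Set.Ico t₀ t₁, u s < h := by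
    intro s hs
    by_contra hges
    push_neg at hges
    have : h ∈ Set.Icc (u t₀) (u s) := ⟨le_of_lt hsum, hges⟩
    obtain ⟨s', hs'mem, hs'⟩ :=
      intermediate_value_Icc hs.1 hucont.continuousOn this
    have hs't : s' ∈ S := by
      refine ⟨⟨hs'mem.1, ?_⟩, hs'⟩
      exact le_trans hs'mem.2 (le_trans (le_of_lt hs.2) ht₁mem.1.2)
    have : t₁ ≤ s' := csInf_le hSbdd hs't
    have : s' < t₁ := lt_of_le_of_lt hs'mem.2 hs.2
    linarith
  -- derivative of u at t₁ is negative
  have hDneg : (∑ i, F i t₁) < 0 := by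
    rw [key t₁ ht₁eq]
    have : 0 < ∑ i, m i t₁ * p t₁ i := by
      apply Finset.sum_pos
      · exact fun i _ => mul_pos (hmpos i t₁) (key_pos t₁ i)
      · have : Nonempty (Fin n) := ⟨⟨0, hn⟩⟩
        exact Finset.univ_nonempty
    linarith
  -- but it must be nonnegative since u < h to the left of t₁
  have hDnonneg : (0:ℝ) ≤ ∑ i, F i t₁ := by
    have hslope := (hasDerivAt_iff_tendsto_slope.1 (huderiv t₁))
    have hsub : (nhdsWithin t₁ (Set.Iio t₁)) ≤ (nhdsWithin t₁ {t₁}ᶜ) :=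
      nhdsWithin_mono _ (fun x hx => ne_of_lt hx)
    have htend := hslope.mono_left hsub
    have hev : ∀ᶠ s in nhdsWithin t₁ (Set.Iio t₁), 0 ≤ slope u t₁ s := by
      filter_upwards [Ioo_mem_nhdsLT_of_mem ⟨ht₀t₁, le_refl t₁⟩] with s hs
      have h1 : u s < h := hlt s ⟨le_of_lt hs.1, hs.2⟩
      have h2 : s - t₁ < 0 := by linarith [hs.2]
      rw [slope_def_field]
      exact le_of_lt (div_pos_of_neg_of_neg (by rw [ht₁eq]; linarith) h2)
    exact ge_of_tendsto htend hev
  linarith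
end

section
/- Let c, m : ℝ → (0,∞) be continuous almost periodic with inf c > 0 and h ∈ (0,1), and suppose M[m]/M[c] < h. Define a(t) := −(c(t)h − m(t)), so M[a] < 0, and set p*(t) := (∫_{−∞}^t c(s) e^{∫_s^t a(r) dr} ds)^{−1}. Then p* is a well-defined positive bounded solution of p' = c(t)p(h − p) − m(t)p satisfying 0 < p*(t) < h for all t, and every solution p with p(t₀) ∈ (0,h) satisfies |p(t) − p*(t)| ≤ (K/(p(t₀)p*(t₀))) e^{−α(t−t₀)} |p(t₀) − p*(t₀)| for all t ≥ t₀, where K ≥ 1 and α > 0 are the dichotomy constants of x' = a(t)x. -/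
set_option maxHeartbeats 1000000

open MeasureTheory Set Filter

private lemma exp_mul_integrableOn_Iic (α t : ℝ) (hα : 0 < α) :
    IntegrableOn (fun s => Real.exp (α * s)) (Set.Iic t) := by
  have hints : ∀ y z : ℝ, (∫ x in y..z, Real.exp (α * x))
      = (Real.exp (α*z) - Real.exp (α*y))/α := by
    intro y z
    have hd : ∀ x : ℝ, HasDerivAt (fun u => Real.exp (α * u)/α) (Real.exp (α * x)) x := by
      intro x
      have h1 : HasDerivAt (fun u : ℝ => α * u) α x := by
        simpa using (hasDerivAt_id x).const_mul α
      have := (h1.exp).div_const α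
      simpa [mul_comm, mul_div_assoc, mul_div_cancel_left₀ _ hα.ne'] using this
    rw [intervalIntegral.integral_eq_sub_of_hasDerivAt (fun x _ => hd x)
      ((Real.continuous_exp.comp (continuous_const.mul continuous_id)).intervalIntegrable _ _)]
    ring
  apply integrableOn_Iic_of_intervalIntegral_norm_bounded (Real.exp (α*t)/α) t
    (fun i => (Real.continuous_exp.comp (continuous_const.mul continuous_id)).integrableOn_Ioc)
    tendsto_id
  filter_upwards with y
  show (∫ x in y..t, ‖Real.exp (α * x)‖) ≤ _
  have : (∫ x in y..t, ‖Real.exp (α * x)‖) = ∫ x in y..t, Real.exp (α * x) := by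
    congr 1; ext x; exact abs_of_nonneg (Real.exp_pos _).le
  rw [this, hints]
  have := (Real.exp_pos (α*y)).le
  gcongr
  linarith

/-- Almost periodic Levins model with habitat destruction: when `M[m]/M[c] < h`,
`p*(t) = (∫_{-∞}^t c(s) e^{∫_s^t a} ds)⁻¹` with `a = -(ch - m)` is a well-defined
positive solution with values in `(0,h)` which attracts exponentially every solution
starting in `(0,h)`. -/
theorem stmt_19 (c m : ℝ → ℝ) (hc : Continuous c) (hm : Continuous m)
    (hmpos : ∀ t, 0 < m t) (c₀ : ℝ) (hc₀ : 0 < c₀) (hcinf : ∀ t, c₀ ≤ c t)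
    (hcb : ∃ M, ∀ t, c t ≤ M) (hmb : ∃ M, ∀ t, m t ≤ M)
    (h : ℝ) (hh : h ∈ Set.Ioo (0:ℝ) 1)
    (hapc : AlmostPeriodic c) (hapm : AlmostPeriodic m)
    (μc μm : ℝ) (hμc : HasUniformMean c μc) (hμm : HasUniformMean m μm)
    (hthr : μm / μc < h) :
    (∀ t : ℝ, MeasureTheory.IntegrableOn
        (fun s => c s * Real.exp (∫ r in s..t, -(c r * h - m r))) (Set.Iic t)) ∧
    (∀ t : ℝ,
        0 < (∫ s in Set.Iic t, c s * Real.exp (∫ r in s..t, -(c r * h - m r)))⁻¹ ∧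
        (∫ s in Set.Iic t, c s * Real.exp (∫ r in s..t, -(c r * h - m r)))⁻¹ < h) ∧
    (∀ t : ℝ, HasDerivAt
        (fun τ => (∫ s in Set.Iic τ, c s * Real.exp (∫ r in s..τ, -(c r * h - m r)))⁻¹)
        (c t * (∫ s in Set.Iic t, c s * Real.exp (∫ r in s..t, -(c r * h - m r)))⁻¹ *
            (h - (∫ s in Set.Iic t, c s * Real.exp (∫ r in s..t, -(c r * h - m r)))⁻¹) -
          m t * (∫ s in Set.Iic t, c s * Real.exp (∫ r in s..t, -(c r * h - m r)))⁻¹) t) ∧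
    ∃ K ≥ (1:ℝ), ∃ α > (0:ℝ),
      (∀ s t : ℝ, s ≤ t → Real.exp (∫ r in s..t, -(c r * h - m r)) ≤
        K * Real.exp (-α * (t - s))) ∧
      ∀ p : ℝ → ℝ, (∀ t, HasDerivAt p (c t * p t * (h - p t) - m t * p t) t) →
        ∀ t₀ : ℝ, p t₀ ∈ Set.Ioo 0 h → ∀ t, t₀ ≤ t →
          |p t - (∫ s in Set.Iic t, c s * Real.exp (∫ r in s..t, -(c r * h - m r)))⁻¹| ≤
            (K / (p t₀ *
              (∫ s in Set.Iic t₀, c s * Real.exp (∫ r in s..t₀, -(c r * h - m r)))⁻¹)) *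
            Real.exp (-α * (t - t₀)) *
            |p t₀ -
              (∫ s in Set.Iic t₀, c s * Real.exp (∫ r in s..t₀, -(c r * h - m r)))⁻¹| := by
  obtain ⟨Mc, hMc⟩ := hcb
  obtain ⟨Mm, hMm⟩ := hmb
  obtain ⟨hh0, hh1⟩ := hh
  set a : ℝ → ℝ := fun r => -(c r * h - m r) with ha_def
  have hacont : Continuous a := ((hc.mul continuous_const).sub hm).neg
  have hMc0 : 0 < Mc := lt_of_lt_of_le hc₀ ((hcinf 0).trans (hMc 0))
  have hMm0 : 0 < Mm := (hmpos 0).trans_le (hMm 0)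
  set Ca : ℝ := Mm + Mc * h with hCa_def
  have hCa0 : 0 < Ca := by positivity
  have hCa : ∀ r, |a r| ≤ Ca := by
    intro r
    rw [abs_le]
    constructor <;> simp only [ha_def, hCa_def] <;>
      nlinarith [hmpos r, hcinf r, hMm r, hMc r]
  -- mean of c is positive
  have hμcpos : c₀ ≤ μc := by
    by_contra hlt
    push_neg at hlt
    obtain ⟨L₀, hL₀, hL⟩ := hμc (c₀ - μc) (by linarith)
    have h1 := hL L₀ le_rfl 0
    have h2 : c₀ * L₀ ≤ ∫ s in (0:ℝ)..(0 + L₀), c s := by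
      have := intervalIntegral.integral_mono_on (μ := volume) (by linarith : (0:ℝ) ≤ 0 + L₀)
        (intervalIntegrable_const) (hc.intervalIntegrable _ _) (fun x _ => hcinf x)
      simpa [mul_comm] using this
    have h3 : c₀ ≤ (1/L₀) * ∫ s in (0:ℝ)..(0 + L₀), c s := by
      have h4 := mul_le_mul_of_nonneg_left h2 (one_div_pos.mpr hL₀).le
      calc c₀ = (1/L₀) * (c₀ * L₀) := by field_simp
      _ ≤ _ := h4
    have := abs_lt.mp h1
    linarith [this.1, this.2]
  have hδ : 0 < h * μc - μm := by
    have := (div_lt_iff₀ (lt_of_lt_of_le hc₀ hμcpos)).mp hthr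
    linarith
  set δ : ℝ := h * μc - μm with hδ_def
  set α : ℝ := δ / 2 with hα_def
  have hα : 0 < α := by positivity
  obtain ⟨Lc, hLc0, hLc⟩ := hμc (δ/4) (by positivity)
  obtain ⟨Lm, hLm0, hLm⟩ := hμm (δ/4) (by positivity)
  set L₀ : ℝ := max Lc Lm with hL₀_def
  have hL₀ : 0 < L₀ := lt_of_lt_of_le hLc0 (le_max_left _ _)
  have hIa : ∀ s t : ℝ, (∫ r in s..t, a r)
      = (∫ r in s..t, m r) - (∫ r in s..t, c r) * h := by
    intro s t
    have h1 : (∫ r in s..t, a r) = ∫ r in s..t, (m r - c r * h) := by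
      apply intervalIntegral.integral_congr
      intro x _
      simp only [ha_def]; ring
    rw [h1, intervalIntegral.integral_sub (g := fun r => c r * h) (hm.intervalIntegrable _ _)
      ((hc.mul continuous_const).intervalIntegrable _ _),
      intervalIntegral.integral_mul_const]
  have hmean : ∀ s t : ℝ, s ≤ t → L₀ ≤ t - s → (∫ r in s..t, a r) ≤ -α * (t - s) := by
    intro s t hst hL
    have hLpos : 0 < t - s := lt_of_lt_of_le hL₀ hL
    have hc1 := hLc (t - s) (le_trans (le_max_left _ _) hL) s
    have hm1 := hLm (t - s) (le_trans (le_max_right _ _) hL) s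
    have hts : s + (t - s) = t := by ring
    rw [hts] at hc1 hm1
    have hcabs := abs_lt.mp hc1
    have hmabs := abs_lt.mp hm1
    have hIc : (∫ r in s..t, c r) = (t - s) * ((1/(t-s)) * ∫ r in s..t, c r) := by
      field_simp
    have hIm : (∫ r in s..t, m r) = (t - s) * ((1/(t-s)) * ∫ r in s..t, m r) := by
      field_simp
    rw [hIa, hIc, hIm]
    have h1 : μc - δ/4 ≤ (1/(t-s)) * (∫ r in s..t, c r) := by linarith [hcabs.1]
    have h2 : (1/(t-s)) * (∫ r in s..t, m r) ≤ μm + δ/4 := by linarith [hmabs.2]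
    have e1 : (t-s) * ((1/(t-s)) * ∫ r in s..t, m r) ≤ (t-s) * (μm + δ/4) :=
      mul_le_mul_of_nonneg_left h2 hLpos.le
    have e2 : (t-s) * (μc - δ/4) * h ≤ (t-s) * ((1/(t-s)) * ∫ r in s..t, c r) * h :=
      mul_le_mul_of_nonneg_right (mul_le_mul_of_nonneg_left h1 hLpos.le) hh0.le
    have key2 : (t-s)*(μm + δ/4) - (t-s)*(μc - δ/4)*h ≤ -α*(t-s) := by
      have hid : (t-s)*(μm + δ/4) - (t-s)*(μc - δ/4)*h + α*(t-s) = (t-s) * (δ*(h-1)/4) := by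
        rw [hα_def, hδ_def]; ring
      have hneg : (t-s) * (δ*(h-1)/4) ≤ 0 :=
        mul_nonpos_of_nonneg_of_nonpos hLpos.le (by nlinarith [hδ, hh1])
      linarith
    linarith
  have hshort : ∀ s t : ℝ, s ≤ t → (∫ r in s..t, a r) ≤ Ca * (t - s) := by
    intro s t hst
    have h1 := intervalIntegral.norm_integral_le_of_norm_le_const
      (C := Ca) (f := a) (a := s) (b := t) (fun x _ => by simpa using hCa x)
    rw [Real.norm_eq_abs] at h1
    have h2 : |t - s| = t - s := abs_of_nonneg (by linarith)
    rw [h2] at h1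
    exact le_trans (le_abs_self _) h1
  have hdich : ∀ s t : ℝ, s ≤ t →
      (∫ r in s..t, a r) ≤ (Ca + α) * L₀ - α * (t - s) := by
    intro s t hst
    rcases le_or_gt L₀ (t - s) with hL | hL
    · have := hmean s t hst hL
      nlinarith [mul_nonneg (by positivity : (0:ℝ) ≤ Ca + α) hL₀.le]
    · have := hshort s t hst
      nlinarith [hα, hCa0]
  set K : ℝ := Real.exp ((Ca + α) * L₀) with hK_def
  have hK1 : 1 ≤ K := Real.one_le_exp (by positivity)
  have hexp : ∀ s t : ℝ, s ≤ t →
      Real.exp (∫ r in s..t, a r) ≤ K * Real.exp (-α * (t - s)) := by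
    intro s t hst
    rw [hK_def, ← Real.exp_add]
    exact Real.exp_le_exp.mpr (by linarith [hdich s t hst])
  -- the primitive of a
  set A : ℝ → ℝ := fun x => ∫ r in (0:ℝ)..x, a r with hA_def
  have hA : ∀ x, HasDerivAt A (a x) x := fun x =>
    intervalIntegral.integral_hasDerivAt_right (hacont.intervalIntegrable _ _)
      (hacont.stronglyMeasurableAtFilter _ _) hacont.continuousAt
  have hAcont : Continuous A := by
    rw [continuous_iff_continuousAt]; exact fun x => (hA x).continuousAt
  have hEeq : ∀ s t : ℝ, (∫ r in s..t, a r) = A t - A s := fun s t =>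
    (intervalIntegral.integral_interval_sub_left (hacont.intervalIntegrable _ _)
      (hacont.intervalIntegrable _ _)).symm
  -- generic integrability
  have hIntGen : ∀ (φ : ℝ → ℝ), Continuous φ → ∀ Cφ : ℝ, (∀ s, |φ s| ≤ Cφ) →
      ∀ t : ℝ, IntegrableOn (fun s => φ s * Real.exp (∫ r in s..t, a r)) (Iic t) := by
    intro φ hφ Cφ hCφ t
    have hCφ0 : 0 ≤ Cφ := le_trans (abs_nonneg _) (hCφ 0)
    have hcont : Continuous (fun s => φ s * Real.exp (∫ r in s..t, a r)) := by
      have heq : (fun s => φ s * Real.exp (∫ r in s..t, a r))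
          = fun s => φ s * Real.exp (A t - A s) := by
        funext s; rw [hEeq]
      rw [heq]
      exact hφ.mul (Real.continuous_exp.comp (continuous_const.sub hAcont))
    apply Integrable.mono'
      ((exp_mul_integrableOn_Iic α t hα).const_mul (Cφ * K * Real.exp (-α * t)))
      hcont.aestronglyMeasurable
    rw [ae_restrict_iff' measurableSet_Iic]
    filter_upwards with s hs
    have hs' : s ≤ t := hs
    have h1 : ‖φ s * Real.exp (∫ r in s..t, a r)‖
        = |φ s| * Real.exp (∫ r in s..t, a r) := by
      rw [norm_mul, Real.norm_eq_abs, Real.norm_eq_abs,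
        abs_of_nonneg (Real.exp_pos _).le]
    rw [h1]
    have h2 := hexp s t hs'
    have h3 : |φ s| * Real.exp (∫ r in s..t, a r) ≤ Cφ * (K * Real.exp (-α * (t - s))) := by
      apply mul_le_mul (hCφ s) h2 (Real.exp_pos _).le hCφ0
    calc |φ s| * Real.exp (∫ r in s..t, a r) ≤ Cφ * (K * Real.exp (-α * (t - s))) := h3
    _ = Cφ * K * Real.exp (-α * t) * Real.exp (α * s) := by
        rw [show -α * (t - s) = -α * t + α * s by ring, Real.exp_add]; ring
  have hcabs : ∀ s, |c s| ≤ Mc := fun s =>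
    abs_le.mpr ⟨by linarith [hcinf s, hc₀], hMc s⟩
  have hIntc : ∀ t : ℝ, IntegrableOn (fun s => c s * Real.exp (∫ r in s..t, a r)) (Iic t) :=
    fun t => hIntGen c hc Mc hcabs t
  -- positivity of such integrals
  have hPos : ∀ (φ : ℝ → ℝ), (∀ s, 0 < φ s) →
      (∀ t : ℝ, IntegrableOn (fun s => φ s * Real.exp (∫ r in s..t, a r)) (Iic t)) →
      ∀ t : ℝ, 0 < ∫ s in Iic t, φ s * Real.exp (∫ r in s..t, a r) := by
    intro φ hφpos hint t
    rw [setIntegral_pos_iff_support_of_nonneg_ae ?_ (hint t)]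
    · have hsupp : Function.support (fun s => φ s * Real.exp (∫ r in s..t, a r)) ∩ Iic t
          = Iic t := by
        rw [inter_eq_right]
        intro x _
        exact (mul_pos (hφpos x) (Real.exp_pos _)).ne'
      rw [hsupp, Real.volume_Iic]
      exact ENNReal.zero_lt_top
    · filter_upwards with s
      exact mul_nonneg (hφpos s).le (Real.exp_pos _).le
  have hupos : ∀ t : ℝ, 0 < ∫ s in Iic t, c s * Real.exp (∫ r in s..t, a r) :=
    hPos c (fun s => lt_of_lt_of_le hc₀ (hcinf s)) hIntc
  -- the key exact integral
  have hφ2cont : Continuous (fun s => (c s * h - m s)/h) :=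
    ((hc.mul continuous_const).sub hm).div_const h
  have hφ2abs : ∀ s, |(c s * h - m s)/h| ≤ Ca / h := by
    intro s
    rw [abs_div, abs_of_pos hh0]
    have habs : |c s * h - m s| = |a s| := by rw [ha_def]; exact (abs_neg _).symm
    rw [habs]
    exact (div_le_div_iff_of_pos_right hh0).mpr (hCa s)
  have hkey : ∀ t : ℝ,
      (∫ s in Iic t, (c s * h - m s)/h * Real.exp (∫ r in s..t, a r)) = 1/h := by
    intro t
    have hFd : ∀ s : ℝ, HasDerivAt (fun x => Real.exp (A t - A x) / h)
        ((c s * h - m s)/h * Real.exp (∫ r in s..t, a r)) s := by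
      intro s
      have h1 : HasDerivAt (fun x => A t - A x) (-(a s)) s := (hA s).const_sub (A t)
      have h2 := (h1.exp).div_const h
      refine h2.congr_deriv ?_
      symm
      rw [hEeq s t]
      simp only [ha_def]
      ring
    have hFcont : Continuous (fun x => Real.exp (A t - A x) / h) :=
      (Real.continuous_exp.comp (continuous_const.sub hAcont)).div_const h
    have hTend : Tendsto (fun x => Real.exp (A t - A x) / h) atBot (nhds 0) := by
      apply squeeze_zero' (g := fun x => (K/h) * Real.exp (-α * (t - x)))
      · filter_upwards with x; positivity
      · filter_upwards [Iic_mem_atBot t] with x hx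
        have := hexp x t hx
        rw [← hEeq x t]
        rw [div_le_iff₀ hh0]
        calc Real.exp (∫ r in x..t, a r) ≤ K * Real.exp (-α * (t - x)) := this
        _ = K/h * Real.exp (-α * (t - x)) * h := by field_simp
      · have h1 : Tendsto (fun x : ℝ => -α * (t - x)) atBot atBot := by
          have h2 : Tendsto (fun x : ℝ => α * x) atBot atBot :=
            (tendsto_const_mul_atBot_of_pos hα).mpr tendsto_id
          have h3 := tendsto_atBot_add_const_right atBot (-α * t) h2
          have : (fun x : ℝ => -α * (t - x)) = fun x => α * x + -α * t := by
            funext x; ring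
          rw [this]; exact h3
        have h4 := Real.tendsto_exp_atBot.comp h1
        have h5 := h4.const_mul (K/h)
        simpa using h5
    have := integral_Iic_of_hasDerivAt_of_tendsto (f := fun x => Real.exp (A t - A x) / h)
      (a := t) hFcont.continuousWithinAt (fun x _ => hFd x)
      (hIntGen (fun s => (c s * h - m s)/h) hφ2cont (Ca/h) hφ2abs t) hTend
    rw [this]
    simp
  have hmh_cont : Continuous (fun s => m s / h) := hm.div_const h
  have hmh_abs : ∀ s, |m s / h| ≤ Ca / h := by
    intro s
    rw [abs_div, abs_of_pos hh0]
    refine (div_le_div_iff_of_pos_right hh0).mpr ?_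
    rw [abs_of_pos (hmpos s), hCa_def]
    nlinarith [hMm s, hMc0, hh0]
  have huh : ∀ t : ℝ, 1/h < ∫ s in Iic t, c s * Real.exp (∫ r in s..t, a r) := by
    intro t
    have hsplit : (∫ s in Iic t, c s * Real.exp (∫ r in s..t, a r))
        - (∫ s in Iic t, (c s * h - m s)/h * Real.exp (∫ r in s..t, a r))
        = ∫ s in Iic t, (m s / h) * Real.exp (∫ r in s..t, a r) := by
      rw [← integral_sub (hIntc t) (hIntGen _ hφ2cont (Ca/h) hφ2abs t)]
      apply integral_congr_ae
      filter_upwards with s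
      have : c s - (c s * h - m s)/h = m s / h := by field_simp; ring
      calc c s * Real.exp (∫ r in s..t, a r)
          - (c s * h - m s)/h * Real.exp (∫ r in s..t, a r)
          = (c s - (c s * h - m s)/h) * Real.exp (∫ r in s..t, a r) := by ring
      _ = m s / h * Real.exp (∫ r in s..t, a r) := by rw [this]
    have hpos2 : 0 < ∫ s in Iic t, (m s / h) * Real.exp (∫ r in s..t, a r) :=
      hPos (fun s => m s / h) (fun s => div_pos (hmpos s) hh0)
        (hIntGen _ hmh_cont (Ca/h) hmh_abs) t
    have := hkey t
    linarith
  have hVcont : Continuous (fun s => c s * Real.exp (-A s)) :=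
    hc.mul (Real.continuous_exp.comp hAcont.neg)
  have hVint : ∀ τ : ℝ, IntegrableOn (fun s => c s * Real.exp (-A s)) (Iic τ) := by
    intro τ
    have heq : (fun s => c s * Real.exp (-A s))
        = fun s => Real.exp (-(A τ)) * (c s * Real.exp (∫ r in s..τ, a r)) := by
      funext s
      rw [hEeq s τ]
      have h1 : Real.exp (-(A τ)) * Real.exp (A τ - A s) = Real.exp (-A s) := by
        rw [← Real.exp_add]; ring_nf
      calc c s * Real.exp (-A s) = c s * (Real.exp (-(A τ)) * Real.exp (A τ - A s)) := by
            rw [h1]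
      _ = Real.exp (-(A τ)) * (c s * Real.exp (A τ - A s)) := by ring
    rw [heq]
    exact (hIntc τ).const_mul _
  have hurepr : ∀ τ : ℝ, (∫ s in Iic τ, c s * Real.exp (∫ r in s..τ, a r))
      = Real.exp (A τ) * ∫ s in Iic τ, c s * Real.exp (-A s) := by
    intro τ
    rw [← integral_const_mul]
    apply integral_congr_ae
    filter_upwards with s
    rw [hEeq s τ]
    have h1 : Real.exp (A τ) * Real.exp (-A s) = Real.exp (A τ - A s) := by
      rw [← Real.exp_add]; ring_nf
    calc c s * Real.exp (A τ - A s) = c s * (Real.exp (A τ) * Real.exp (-A s)) := by rw [h1]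
    _ = Real.exp (A τ) * (c s * Real.exp (-A s)) := by ring
  have hV' : ∀ t : ℝ, HasDerivAt (fun τ => ∫ s in Iic τ, c s * Real.exp (-A s))
      (c t * Real.exp (-A t)) t := by
    intro t
    have hVrepr : (fun τ => ∫ s in Iic τ, c s * Real.exp (-A s))
        = fun τ => (∫ s in Iic t, c s * Real.exp (-A s)) + ∫ s in t..τ, c s * Real.exp (-A s) := by
      funext τ
      have := intervalIntegral.integral_Iic_sub_Iic (hVint t) (hVint τ)
      linarith
    rw [hVrepr]
    apply HasDerivAt.const_add
    exact intervalIntegral.integral_hasDerivAt_right (hVcont.intervalIntegrable _ _)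
      (hVcont.stronglyMeasurableAtFilter _ _) hVcont.continuousAt
  have hu' : ∀ t : ℝ, HasDerivAt (fun τ => ∫ s in Iic τ, c s * Real.exp (∫ r in s..τ, a r))
      (a t * (∫ s in Iic t, c s * Real.exp (∫ r in s..t, a r)) + c t) t := by
    intro t
    have h1 : HasDerivAt (fun τ => Real.exp (A τ)) (Real.exp (A t) * a t) t := (hA t).exp
    have h2 := h1.mul (hV' t)
    have h3 : ((fun τ => Real.exp (A τ)) * fun τ => ∫ s in Iic τ, c s * Real.exp (-A s))
        = fun τ => ∫ s in Iic τ, c s * Real.exp (∫ r in s..τ, a r) :=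
      funext fun τ => (hurepr τ).symm
    rw [h3] at h2
    refine h2.congr_deriv ?_
    symm
    rw [hurepr t]
    have he : Real.exp (A t) * Real.exp (-A t) = 1 := by rw [← Real.exp_add]; simp
    calc a t * (Real.exp (A t) * ∫ s in Iic t, c s * Real.exp (-A s)) + c t
        = Real.exp (A t) * a t * (∫ s in Iic t, c s * Real.exp (-A s))
          + c t * (Real.exp (A t) * Real.exp (-A t)) := by rw [he]; ring
    _ = _ := by ring
  have hinvlt : ∀ t : ℝ, (∫ s in Iic t, c s * Real.exp (∫ r in s..t, a r))⁻¹ < h := by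
    intro t
    have h1 := huh t
    have h2 := hupos t
    have hinv : 0 < (∫ s in Iic t, c s * Real.exp (∫ r in s..t, a r))⁻¹ := inv_pos.mpr h2
    have h3 : (∫ s in Iic t, c s * Real.exp (∫ r in s..t, a r))
        * (∫ s in Iic t, c s * Real.exp (∫ r in s..t, a r))⁻¹ = 1 := mul_inv_cancel₀ h2.ne'
    have h5 : (1/h) * (∫ s in Iic t, c s * Real.exp (∫ r in s..t, a r))⁻¹ < 1 := by
      calc (1/h) * (∫ s in Iic t, c s * Real.exp (∫ r in s..t, a r))⁻¹
          < (∫ s in Iic t, c s * Real.exp (∫ r in s..t, a r))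
            * (∫ s in Iic t, c s * Real.exp (∫ r in s..t, a r))⁻¹ :=
        mul_lt_mul_of_pos_right h1 hinv
      _ = 1 := h3
    have h6 := mul_lt_mul_of_pos_right h5 hh0
    have h7 : (1/h) * (∫ s in Iic t, c s * Real.exp (∫ r in s..t, a r))⁻¹ * h
        = (∫ s in Iic t, c s * Real.exp (∫ r in s..t, a r))⁻¹ := by
      field_simp
    rw [h7, one_mul] at h6
    exact h6
  refine ⟨hIntc, ?_, ?_, K, hK1, α, hα, hexp, ?_⟩
  · exact fun t => ⟨inv_pos.mpr (hupos t), hinvlt t⟩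
  · intro t
    have h2 := (hu' t).inv (hupos t).ne'
    refine h2.congr_deriv ?_
    symm
    have hne := (hupos t).ne'
    have hat : a t = m t - c t * h := by simp only [ha_def]; ring
    rw [hat]
    field_simp
    ring
  · intro p hp t₀ hmem t ht
    obtain ⟨hp0, hph⟩ := hmem
    have hpc : Continuous p := continuous_iff_continuousAt.mpr fun x => (hp x).continuousAt
    -- generic scalar linear ODE representation
    have hlin : ∀ (b f : ℝ → ℝ), Continuous b → (∀ x, HasDerivAt f (b x * f x) x) →
        ∀ x, f x = f t₀ * Real.exp (∫ r in t₀..x, b r) := by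
      intro b f hbc hf x
      have hB : ∀ y, HasDerivAt (fun z => ∫ r in t₀..z, b r) (b y) y := fun y =>
        intervalIntegral.integral_hasDerivAt_right (hbc.intervalIntegrable _ _)
          (hbc.stronglyMeasurableAtFilter _ _) hbc.continuousAt
      have hF : ∀ y, HasDerivAt (fun z => f z * Real.exp (-(∫ r in t₀..z, b r))) 0 y := by
        intro y
        have h1 := (hf y).mul (((hB y).neg).exp)
        refine h1.congr_deriv ?_
        symm
        ring
      have hconst := is_const_of_deriv_eq_zero (𝕜 := ℝ)
        (fun z => (hF z).differentiableAt) (fun z => (hF z).deriv) x t₀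
      simp only [intervalIntegral.integral_same, neg_zero, Real.exp_zero, mul_one] at hconst
      calc f x = f x * Real.exp (-(∫ r in t₀..x, b r)) * Real.exp (∫ r in t₀..x, b r) := by
            rw [mul_assoc, ← Real.exp_add]; simp
      _ = f t₀ * Real.exp (∫ r in t₀..x, b r) := by rw [hconst]
    have hgc : Continuous (fun x => c x * (h - p x) - m x) :=
      (hc.mul (continuous_const.sub hpc)).sub hm
    have hp' : ∀ x, HasDerivAt p ((c x * (h - p x) - m x) * p x) x := by
      intro x; have := hp x; convert this using 1; ring
    have hppos : ∀ x, 0 < p x := by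
      intro x
      rw [hlin _ p hgc hp' x]
      exact mul_pos hp0 (Real.exp_pos _)
    -- solutions starting below h stay below h
    have hcpcont : Continuous (fun x => c x * p x) := hc.mul hpc
    have hH : ∀ y, HasDerivAt (fun z => ∫ r in t₀..z, c r * p r) (c y * p y) y := fun y =>
      intervalIntegral.integral_hasDerivAt_right (hcpcont.intervalIntegrable _ _)
        (hcpcont.stronglyMeasurableAtFilter _ _) hcpcont.continuousAt
    have hχ : ∀ y, HasDerivAt (fun z => (h - p z) * Real.exp (∫ r in t₀..z, c r * p r))
        (m y * p y * Real.exp (∫ r in t₀..y, c r * p r)) y := by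
      intro y
      have h1 := ((hp y).const_sub h).mul ((hH y).exp)
      refine h1.congr_deriv ?_
      symm
      ring
    have hmono : StrictMono (fun z => (h - p z) * Real.exp (∫ r in t₀..z, c r * p r)) :=
      strictMono_of_deriv_pos fun y => by
        rw [(hχ y).deriv]
        exact mul_pos (mul_pos (hmpos y) (hppos y)) (Real.exp_pos _)
    have hplth : ∀ x, t₀ ≤ x → p x < h := by
      intro x hx
      rcases eq_or_lt_of_le hx with rfl | hlt
      · exact hph
      · have h1 := hmono hlt
        simp only [intervalIntegral.integral_same, Real.exp_zero, mul_one] at h1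
        have h2 : 0 < (h - p x) * Real.exp (∫ r in t₀..x, c r * p r) :=
          lt_trans (by linarith) h1
        rcases mul_pos_iff.mp h2 with ⟨hq, _⟩ | ⟨_, hq⟩
        · linarith
        · exact absurd hq (not_lt.mpr (Real.exp_pos _).le)
    -- the difference of reciprocals solves the homogeneous equation
    have hw : ∀ x, HasDerivAt
        (fun z => (p z)⁻¹ - ∫ s in Iic z, c s * Real.exp (∫ r in s..z, a r))
        (a x * ((p x)⁻¹ - ∫ s in Iic x, c s * Real.exp (∫ r in s..x, a r))) x := by
      intro x
      have h1 := (hp x).inv (hppos x).ne'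
      have h2 := h1.sub (hu' x)
      refine h2.congr_deriv ?_
      symm
      have hne := (hppos x).ne'
      have hax : a x = m x - c x * h := by simp only [ha_def]; ring
      rw [hax]
      field_simp
      ring
    have hwform := hlin a
      (fun z => (p z)⁻¹ - ∫ s in Iic z, c s * Real.exp (∫ r in s..z, a r)) hacont hw
    have e1 : (p t)⁻¹ - (∫ s in Iic t, c s * Real.exp (∫ r in s..t, a r))
        = ((p t₀)⁻¹ - ∫ s in Iic t₀, c s * Real.exp (∫ r in s..t₀, a r))
          * Real.exp (∫ r in t₀..t, a r) := hwform t
    have hUt := hupos t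
    have hUt0 := hupos t₀
    have hQt : 0 < (∫ s in Iic t, c s * Real.exp (∫ r in s..t, a r))⁻¹ := inv_pos.mpr hUt
    have hQt0 : 0 < (∫ s in Iic t₀, c s * Real.exp (∫ r in s..t₀, a r))⁻¹ := inv_pos.mpr hUt0
    have habs_gen : ∀ P U : ℝ, 0 < P → 0 < U → |P - U⁻¹| = P * U⁻¹ * |P⁻¹ - U| := by
      intro P U hP hU
      have hrw : P - U⁻¹ = -((P * U⁻¹) * (P⁻¹ - U)) := by
        field_simp
        ring
      rw [hrw, abs_neg, abs_mul, abs_of_pos (mul_pos hP (inv_pos.mpr hU))]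
    have habs1 : |p t - (∫ s in Iic t, c s * Real.exp (∫ r in s..t, a r))⁻¹|
        = p t * (∫ s in Iic t, c s * Real.exp (∫ r in s..t, a r))⁻¹
          * |(p t)⁻¹ - ∫ s in Iic t, c s * Real.exp (∫ r in s..t, a r)| :=
      habs_gen _ _ (hppos t) hUt
    have habs0 : |p t₀ - (∫ s in Iic t₀, c s * Real.exp (∫ r in s..t₀, a r))⁻¹|
        = p t₀ * (∫ s in Iic t₀, c s * Real.exp (∫ r in s..t₀, a r))⁻¹
          * |(p t₀)⁻¹ - ∫ s in Iic t₀, c s * Real.exp (∫ r in s..t₀, a r)| :=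
      habs_gen _ _ (hppos t₀) hUt0
    have hexpb := hexp t₀ t ht
    have hptq : p t * (∫ s in Iic t, c s * Real.exp (∫ r in s..t, a r))⁻¹ ≤ 1 := by
      have h1 : p t ≤ 1 := le_of_lt (lt_trans (hplth t ht) hh1)
      have h2 : (∫ s in Iic t, c s * Real.exp (∫ r in s..t, a r))⁻¹ ≤ 1 :=
        le_of_lt (lt_trans (hinvlt t) hh1)
      calc p t * (∫ s in Iic t, c s * Real.exp (∫ r in s..t, a r))⁻¹ ≤ 1 * 1 :=
        mul_le_mul h1 h2 hQt.le zero_le_one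
      _ = 1 := by ring
    calc |p t - (∫ s in Iic t, c s * Real.exp (∫ r in s..t, a r))⁻¹|
        = p t * (∫ s in Iic t, c s * Real.exp (∫ r in s..t, a r))⁻¹
          * (|(p t₀)⁻¹ - ∫ s in Iic t₀, c s * Real.exp (∫ r in s..t₀, a r)|
             * Real.exp (∫ r in t₀..t, a r)) := by
          rw [habs1, e1, abs_mul, abs_of_pos (Real.exp_pos _)]
    _ ≤ 1 * (|(p t₀)⁻¹ - ∫ s in Iic t₀, c s * Real.exp (∫ r in s..t₀, a r)|
             * (K * Real.exp (-α * (t - t₀)))) := by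
          apply mul_le_mul hptq (mul_le_mul_of_nonneg_left hexpb (abs_nonneg _))
            (by positivity) zero_le_one
    _ = (K / (p t₀ * (∫ s in Iic t₀, c s * Real.exp (∫ r in s..t₀, a r))⁻¹))
          * Real.exp (-α * (t - t₀))
          * (p t₀ * (∫ s in Iic t₀, c s * Real.exp (∫ r in s..t₀, a r))⁻¹
             * |(p t₀)⁻¹ - ∫ s in Iic t₀, c s * Real.exp (∫ r in s..t₀, a r)|) := by
          have hne : p t₀ * (∫ s in Iic t₀, c s * Real.exp (∫ r in s..t₀, a r))⁻¹ ≠ 0 :=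
            (mul_pos (hppos t₀) hQt0).ne'
          field_simp
    _ = _ := by rw [← habs0]
end
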